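/- arXiv:1307.3693 — 8 statements merged into one kernel-verified Lean document; each statement's English description precedes it below -/
import Mathlib

section
/- Let n be even but not divisible by 4, and let H₁ be the 3-graph whose vertex set is the disjoint union A ∪̇ B with |A| = ⌈n/4⌉ − 1 and |B| = ⌊3n/4⌋ + 1, and whose edges are exactly the 3-element subsets of A ∪ B that intersect A. Then δ₁(H₁) = C(n−1,2) − C(⌊3n/4⌋,2) and H₁ contains no loose Hamilton cycle. -/
/-- The degree of a vertex in a 3-graph: the number of edges containing it. -/
def hdeg {α : Type*} [DecidableEq α] (H : Finset (Finset α)) (v : α) : ℕ :=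
  (H.filter (fun e => v ∈ e)).card

/-- A 3-graph on vertex set `Fin n` contains a loose Hamilton cycle. -/
def HasLooseHamCycle (n : ℕ) (H : Finset (Finset (Fin n))) : Prop :=
  ∃ f : ZMod n → Fin n, Function.Bijective f ∧
    ∀ i : ℕ, i < n / 2 →
      ({f ((2 * i : ℕ) : ZMod n), f ((2 * i + 1 : ℕ) : ZMod n),
        f ((2 * i + 2 : ℕ) : ZMod n)} : Finset (Fin n)) ∈ H

/-- Counting `k+1`-subsets of `s` containing a fixed `v ∈ s`. -/
lemma count_containing {n : ℕ} (s : Finset (Fin n)) (v : Fin n) (hv : v ∈ s) :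
    ((s.powersetCard 3).filter (fun e => v ∈ e)).card = (s.card - 1).choose 2 := by
  classical
  have key : ((s.powersetCard 3).filter (fun e => v ∈ e)).card
      = ((s.erase v).powersetCard 2).card := by
    refine Finset.card_bij' (fun e _ => e.erase v) (fun t _ => insert v t) ?_ ?_ ?_ ?_
    · intro e he
      simp only [Finset.mem_filter, Finset.mem_powersetCard] at he
      obtain ⟨⟨hsub, hc⟩, hve⟩ := he
      rw [Finset.mem_powersetCard]
      constructor
      · intro x hx
        rw [Finset.mem_erase] at hx ⊢
        exact ⟨hx.1, hsub hx.2⟩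
      · rw [Finset.card_erase_of_mem hve, hc]
    · intro t ht
      rw [Finset.mem_powersetCard] at ht
      obtain ⟨hsub, hc⟩ := ht
      have hvt : v ∉ t := fun h => (Finset.mem_erase.mp (hsub h)).1 rfl
      simp only [Finset.mem_filter, Finset.mem_powersetCard]
      refine ⟨⟨?_, ?_⟩, Finset.mem_insert_self _ _⟩
      · intro x hx
        rcases Finset.mem_insert.mp hx with rfl | hx
        · exact hv
        · exact (Finset.mem_erase.mp (hsub hx)).2
      · rw [Finset.card_insert_of_notMem hvt, hc]
    · intro e he
      simp only [Finset.mem_filter] at he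
      exact Finset.insert_erase he.2
    · intro t ht
      rw [Finset.mem_powersetCard] at ht
      have hvt : v ∉ t := fun h => (Finset.mem_erase.mp (ht.1 h)).1 rfl
      exact Finset.erase_insert hvt
  rw [key, Finset.card_powersetCard, Finset.card_erase_of_mem hv]

lemma key_pair (n i i' r r' : ℕ) (hn : Even n) (hii' : i < i') (hi' : i' < n / 2)
    (hr : r ≤ 2) (hr' : r' ≤ 2)
    (h : ((2 * i + r : ℕ) : ZMod n) = ((2 * i' + r' : ℕ) : ZMod n)) :
    (i' = i + 1 ∧ r = 2 ∧ r' = 0) ∨ (i = 0 ∧ r = 0 ∧ 2 * i' + r' = n) := by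
  have hn' := hn
  obtain ⟨c, hc⟩ := hn'
  have hmod : (2 * i + r) % n = (2 * i' + r') % n :=
    (ZMod.natCast_eq_natCast_iff _ _ _).mp h
  have h1 : 2 * i + r < n := by omega
  have h2 : 2 * i' + r' ≤ n := by omega
  rw [Nat.mod_eq_of_lt h1] at hmod
  rcases eq_or_lt_of_le h2 with h2' | h2'
  · rw [h2', Nat.mod_self] at hmod
    omega
  · rw [Nat.mod_eq_of_lt h2'] at hmod
    omega

lemma no_three (n : ℕ) (hn : Even n) (i₁ i₂ i₃ r₁ r₂ r₃ : ℕ) (w : ZMod n)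
    (h12 : i₁ < i₂) (h23 : i₂ < i₃) (h3 : i₃ < n / 2)
    (hr₁ : r₁ ≤ 2) (hr₂ : r₂ ≤ 2) (hr₃ : r₃ ≤ 2)
    (e₁ : ((2 * i₁ + r₁ : ℕ) : ZMod n) = w)
    (e₂ : ((2 * i₂ + r₂ : ℕ) : ZMod n) = w)
    (e₃ : ((2 * i₃ + r₃ : ℕ) : ZMod n) = w) : False := by
  have hn' := hn
  obtain ⟨c, hc⟩ := hn'
  rcases key_pair n i₁ i₂ r₁ r₂ hn h12 (by omega) hr₁ hr₂ (e₁.trans e₂.symm) with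
    ⟨ha, hb, hcc⟩ | ⟨ha, hb, hcc⟩ <;>
  rcases key_pair n i₂ i₃ r₂ r₃ hn h23 h3 hr₂ hr₃ (e₂.trans e₃.symm) with
    ⟨ha', hb', hc'⟩ | ⟨ha', hb', hc'⟩ <;> omega

/-- The extremal example `H₁` for `n` even, not divisible by 4: vertex set `A ∪̇ B` with
`|A| = ⌈n/4⌉ - 1` and `|B| = ⌊3n/4⌋ + 1`, edges exactly the triples meeting `A`.  Its minimum
vertex degree equals `C(n-1,2) - C(⌊3n/4⌋,2)` and it has no loose Hamilton cycle. -/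
theorem stmt_1 (n : ℕ) (hn2 : Even n) (hn4 : ¬ 4 ∣ n)
    (A B : Finset (Fin n)) (hdisj : Disjoint A B) (hcover : A ∪ B = Finset.univ)
    (hA : A.card = (n + 3) / 4 - 1) (hB : B.card = 3 * n / 4 + 1)
    (H : Finset (Finset (Fin n)))
    (hH : ∀ e : Finset (Fin n), e ∈ H ↔ e.card = 3 ∧ (e ∩ A).Nonempty) :
    (∀ v : Fin n, (n - 1).choose 2 - (3 * n / 4).choose 2 ≤ hdeg H v) ∧
    (∃ v : Fin n, hdeg H v = (n - 1).choose 2 - (3 * n / 4).choose 2) ∧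
    ¬ HasLooseHamCycle n H := by
  classical
  have hn0 : n ≠ 0 := fun h => hn4 (h ▸ dvd_zero 4)
  -- the filtered form of the degree
  have hfil : ∀ v : Fin n, H.filter (fun e => v ∈ e)
      = ((Finset.univ.powersetCard 3).filter (fun e => v ∈ e)).filter
          (fun e => (e ∩ A).Nonempty) := by
    intro v
    ext e
    simp only [Finset.mem_filter, Finset.mem_powersetCard, hH e, Finset.subset_univ,
      true_and]
    tauto
  have hSv : ∀ v : Fin n,
      ((Finset.univ.powersetCard 3).filter (fun e => v ∈ e)).card = (n - 1).choose 2 := by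
    intro v
    rw [count_containing Finset.univ v (Finset.mem_univ v), Finset.card_univ,
      Fintype.card_fin]
  have hdegA : ∀ v ∈ A, hdeg H v = (n - 1).choose 2 := by
    intro v hv
    have hneg : ((Finset.univ.powersetCard 3).filter (fun e => v ∈ e)).filter
        (fun e => ¬ (e ∩ A).Nonempty) = ∅ := by
      rw [Finset.filter_eq_empty_iff]
      intro e he
      rw [Finset.mem_filter] at he
      exact fun h => h ⟨v, Finset.mem_inter.mpr ⟨he.2, hv⟩⟩
    have hsplit := Finset.card_filter_add_card_filter_not
      (s := (Finset.univ.powersetCard 3).filter (fun e => v ∈ e))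
      (p := fun e => (e ∩ A).Nonempty)
    rw [hneg] at hsplit
    simp only [Finset.card_empty, add_zero] at hsplit
    rw [hdeg, hfil v, hsplit, hSv v]
  have hdegB : ∀ v ∈ B, hdeg H v = (n - 1).choose 2 - (3 * n / 4).choose 2 := by
    intro v hv
    have hneg : ((Finset.univ.powersetCard 3).filter (fun e => v ∈ e)).filter
        (fun e => ¬ (e ∩ A).Nonempty) = (B.powersetCard 3).filter (fun e => v ∈ e) := by
      ext e
      simp only [Finset.mem_filter, Finset.mem_powersetCard, Finset.subset_univ, true_and,
        Finset.not_nonempty_iff_eq_empty]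
      constructor
      · rintro ⟨⟨hc, hve⟩, hempty⟩
        refine ⟨⟨?_, hc⟩, hve⟩
        intro x hx
        have hxu : x ∈ A ∪ B := hcover ▸ Finset.mem_univ x
        rcases Finset.mem_union.mp hxu with hxA | hxB
        · exact absurd (Finset.mem_inter.mpr ⟨hx, hxA⟩) (by rw [hempty]; simp)
        · exact hxB
      · rintro ⟨⟨hsub, hc⟩, hve⟩
        refine ⟨⟨hc, hve⟩, ?_⟩
        rw [← Finset.disjoint_iff_inter_eq_empty]
        exact hdisj.symm.mono_left hsub
    have hnegcard : ((B.powersetCard 3).filter (fun e => v ∈ e)).card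
        = (3 * n / 4).choose 2 := by
      rw [count_containing B v hv, hB]
      norm_num
    have hsplit := Finset.card_filter_add_card_filter_not
      (s := (Finset.univ.powersetCard 3).filter (fun e => v ∈ e))
      (p := fun e => (e ∩ A).Nonempty)
    rw [hneg, hnegcard, hSv v] at hsplit
    rw [hdeg, hfil v]
    omega
  refine ⟨?_, ?_, ?_⟩
  · intro v
    have hvu : v ∈ A ∪ B := hcover ▸ Finset.mem_univ v
    rcases Finset.mem_union.mp hvu with hvA | hvB
    · rw [hdegA v hvA]; exact Nat.sub_le _ _
    · rw [hdegB v hvB]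
  · have hBne : B.Nonempty := Finset.card_pos.mp (by omega)
    obtain ⟨v, hv⟩ := hBne
    exact ⟨v, hdegB v hv⟩
  · rintro ⟨f, ⟨finj, fsurj⟩, hedges⟩
    set m := n / 2 with hm
    have hsel : ∀ i : ℕ, ∃ a : Fin n, i < m →
        (∃ r, r ≤ 2 ∧ f ((2 * i + r : ℕ) : ZMod n) = a) ∧ a ∈ A := by
      intro i
      by_cases hi : i < m
      · have he := hedges i hi
        obtain ⟨a, ha⟩ := ((hH _).mp he).2
        rw [Finset.mem_inter] at ha
        refine ⟨a, fun _ => ⟨?_, ha.2⟩⟩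
        have hmem := ha.1
        simp only [Finset.mem_insert, Finset.mem_singleton] at hmem
        rcases hmem with h | h | h
        · exact ⟨0, by norm_num, by simpa using h.symm⟩
        · exact ⟨1, by norm_num, h.symm⟩
        · exact ⟨2, by norm_num, h.symm⟩
      · exact ⟨f 0, fun h => absurd h hi⟩
    choose g hg using hsel
    have himg : (Finset.range m).image g ⊆ A := by
      intro a ha
      simp only [Finset.mem_image, Finset.mem_range] at ha
      obtain ⟨i, hi, rfl⟩ := ha
      exact (hg i hi).2
    have hcard : (Finset.range m).card ≤ 2 * ((Finset.range m).image g).card := by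
      apply Finset.card_le_mul_card_image
      intro a _
      by_contra hcon
      push_neg at hcon
      rw [Finset.two_lt_card_iff] at hcon
      obtain ⟨i, j, k, hi, hj, hk, hij, hik, hjk⟩ := hcon
      simp only [Finset.mem_filter, Finset.mem_range] at hi hj hk
      obtain ⟨ri, hri, hfi⟩ := (hg i hi.1).1
      obtain ⟨rj, hrj, hfj⟩ := (hg j hj.1).1
      obtain ⟨rk, hrk, hfk⟩ := (hg k hk.1).1
      set w : ZMod n := ((2 * i + ri : ℕ) : ZMod n) with hw
      have hwi : ((2 * i + ri : ℕ) : ZMod n) = w := rfl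
      have hwj : ((2 * j + rj : ℕ) : ZMod n) = w :=
        finj (by rw [hfi, hfj, hi.2, hj.2])
      have hwk : ((2 * k + rk : ℕ) : ZMod n) = w :=
        finj (by rw [hfi, hfk, hi.2, hk.2])
      rcases lt_trichotomy i j with h1 | h1 | h1
      · rcases lt_trichotomy j k with h2 | h2 | h2
        · exact no_three n hn2 i j k ri rj rk w h1 h2 hk.1 hri hrj hrk hwi hwj hwk
        · exact hjk h2
        · rcases lt_trichotomy i k with h3 | h3 | h3
          · exact no_three n hn2 i k j ri rk rj w h3 h2 hj.1 hri hrk hrj hwi hwk hwj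
          · exact hik h3
          · exact no_three n hn2 k i j rk ri rj w h3 h1 hj.1 hrk hri hrj hwk hwi hwj
      · exact hij h1
      · rcases lt_trichotomy i k with h2 | h2 | h2
        · exact no_three n hn2 j i k rj ri rk w h1 h2 hk.1 hrj hri hrk hwj hwi hwk
        · exact hik h2
        · rcases lt_trichotomy j k with h3 | h3 | h3
          · exact no_three n hn2 j k i rj rk ri w h3 h2 hi.1 hrj hrk hri hwj hwk hwi
          · exact hjk h3
          · exact no_three n hn2 k j i rk rj ri w h3 h1 hi.1 hrk hrj hri hwk hwj hwi
    rw [Finset.card_range] at hcard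
    have h2 := Finset.card_le_card himg
    obtain ⟨c, hc⟩ := hn2
    omega
end

section
/- For any 0 < γ₂ < 1/4 there exists an integer n₀ such that for every 3-graph H on n > n₀ vertices with δ₁(H) ≥ (1/4 + γ₂)·C(n,2), there is a set R ⊆ V(H) of size at most γ₂·n with the following property: for every k ≤ γ₂³·n/12 and every k mutually disjoint pairs {a₁,b₁}, …, {a_k,b_k} of vertices of H, there are 3k distinct vertices u_i, v_i, w_i (i = 1,…,k) in R such that {a_i, u_i, v_i} ∈ E(H) and {v_i, w_i, b_i} ∈ E(H) for all i = 1, …, k. -/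
/-!
Call `v` a heavy partner of `x` if the pair neighbourhood `{u | {x, u, v} ∈ H}` has at least
`γn/3` elements. If `A` is the set of heavy partners of `x`, then `x` lies in at most
`C(|A|, 2) + n · γn/3` edges, so the degree condition forces `|A| ≥ (1/2 + γ/6) n`; hence any two
vertices share at least `γn/3` heavy partners.

Choosing one uniformly random vertex in each residue class modulo `⌊γn⌋` gives a set `R` of size
at most `γn`. A Chernoff bound (the moment generating function at `1/2`) and a union bound over
the `O(n²)` relevant sets show that some choice meets each of them in at least `γ³n/4` vertices.
The paths `aᵢ uᵢ vᵢ wᵢ bᵢ` are then built greedily inside `R`: first a common heavy partner `vᵢ`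
of `aᵢ` and `bᵢ`, then `uᵢ` and `wᵢ` in the pair neighbourhoods of `(aᵢ, vᵢ)` and `(bᵢ, vᵢ)`,
each time avoiding the fewer than `3k ≤ γ³n/4` vertices already used.
-/

open Finset Real

lemma eq_insert_insert_singleton_of_card_eq_three {α : Type*} [DecidableEq α] {e : Finset α}
    {x v : α} (he : #e = 3) (hx : x ∈ e) (hv : v ∈ e) (hxv : x ≠ v) : ∃ u, e = {x, u, v} := by
  have hv' : v ∈ e.erase x := mem_erase.2 ⟨hxv.symm, hv⟩
  obtain ⟨u, hu⟩ : ∃ u, (e.erase x).erase v = {u} := by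
    rw [← card_eq_one, card_erase_of_mem hv', card_erase_of_mem hx, he]
  refine ⟨u, ?_⟩
  rw [← insert_erase hx, ← insert_erase hv', hu, pair_comm]

section Hypergraph

variable {α : Type*} [Fintype α] [DecidableEq α] {H : Finset (Finset α)}

def pairNbhd (H : Finset (Finset α)) (x v : α) : Finset α :=
  {u | ({x, u, v} : Finset α) ∈ H}

@[simp]
lemma mem_pairNbhd {x v u : α} : u ∈ pairNbhd H x v ↔ ({x, u, v} : Finset α) ∈ H := by
  simp [pairNbhd]

noncomputable def heavyPartners (H : Finset (Finset α)) (t : ℝ) (x : α) : Finset α :=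
  {v | t ≤ #(pairNbhd H x v)}

@[simp]
lemma mem_heavyPartners {t : ℝ} {x v : α} :
    v ∈ heavyPartners H t x ↔ t ≤ #(pairNbhd H x v) := by
  simp [heavyPartners]

lemma card_filter_mem_mem_le_card_pairNbhd (hH : ∀ e ∈ H, #e = 3) {x v : α} (hxv : x ≠ v) :
    #{e ∈ H | x ∈ e ∧ v ∈ e} ≤ #(pairNbhd H x v) := by
  refine (card_le_card fun e he => ?_).trans
    (card_image_le (f := fun u => ({x, u, v} : Finset α)))
  obtain ⟨heH, hx, hv⟩ := by simpa using he
  obtain ⟨u, rfl⟩ := eq_insert_insert_singleton_of_card_eq_three (hH e heH) hx hv hxv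
  exact mem_image.2 ⟨u, mem_pairNbhd.2 heH, rfl⟩

/-- An edge at `x` either lies in `insert x A`, or meets `Aᶜ` in a vertex `v ≠ x`. -/
lemma hdeg_le_choose_add_sum (hH : ∀ e ∈ H, #e = 3) (x : α) (A : Finset α) :
    hdeg H x ≤ (#A).choose 2 + ∑ v ∈ Aᶜ, #(pairNbhd H x v) := by
  have hin : #{e ∈ H.filter (x ∈ ·) | e.erase x ⊆ A} ≤ (#A).choose 2 := by
    rw [← card_powersetCard]
    refine card_le_card_of_injOn (fun e => e.erase x) (fun e he => ?_) fun e he e' he' hee => ?_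
    · simp only [coe_filter, Set.mem_ofPred_eq, mem_filter] at he
      rw [mem_coe, mem_powersetCard, card_erase_of_mem he.1.2, hH e he.1.1]
      exact ⟨he.2, rfl⟩
    · simp only [coe_filter, Set.mem_ofPred_eq, mem_filter] at he he'
      rw [← insert_erase he.1.2, ← insert_erase he'.1.2]
      exact congrArg (insert x) hee
  have hout : #{e ∈ H.filter (x ∈ ·) | ¬ e.erase x ⊆ A} ≤ ∑ v ∈ Aᶜ, #(pairNbhd H x v) := by
    calc _ ≤ #((Aᶜ.erase x).biUnion fun v => {e ∈ H | x ∈ e ∧ v ∈ e}) := by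
          refine card_le_card fun e he => ?_
          simp only [mem_filter, not_subset] at he
          obtain ⟨⟨heH, hx⟩, v, hve, hvA⟩ := he
          exact mem_biUnion.2 ⟨v, mem_erase.2 ⟨ne_of_mem_erase hve, mem_compl.2 hvA⟩,
            mem_filter.2 ⟨heH, hx, mem_of_mem_erase hve⟩⟩
      _ ≤ ∑ v ∈ Aᶜ.erase x, #{e ∈ H | x ∈ e ∧ v ∈ e} := card_biUnion_le
      _ ≤ ∑ v ∈ Aᶜ.erase x, #(pairNbhd H x v) :=
          sum_le_sum fun v hv =>
            card_filter_mem_mem_le_card_pairNbhd hH (ne_of_mem_erase hv).symm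
      _ ≤ ∑ v ∈ Aᶜ, #(pairNbhd H x v) := sum_le_sum_of_subset (erase_subset _ _)
  rw [hdeg, ← card_filter_add_card_filter_not (p := fun e => e.erase x ⊆ A)]
  exact add_le_add hin hout

lemma le_card_heavyPartners (hH : ∀ e ∈ H, #e = 3) {γ : ℝ} (hγ : 0 < γ) (hγ' : γ ≤ 1 / 4)
    (hn : 4 ≤ γ * Fintype.card α) {x : α}
    (hx : (1 / 4 + γ) * ((Fintype.card α).choose 2 : ℝ) ≤ hdeg H x) :
    (1 / 2 + γ / 6) * Fintype.card α ≤ #(heavyPartners H (γ * Fintype.card α / 3) x) := by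
  rw [Nat.cast_choose_two] at hx
  set n : ℝ := (Fintype.card α : ℝ)
  set A := heavyPartners H (γ * n / 3) x
  have hlight : ∑ v ∈ Aᶜ, (#(pairNbhd H x v) : ℝ) ≤ n * (γ * n / 3) := by
    calc _ ≤ ∑ _v ∈ Aᶜ, γ * n / 3 :=
          sum_le_sum fun v hv => (not_le.1 (by simpa [A] using hv)).le
      _ ≤ n * (γ * n / 3) := by
          rw [sum_const, nsmul_eq_mul]
          gcongr
          exact Nat.cast_le.2 (card_le_univ Aᶜ)
  have hdeg_le : (hdeg H x : ℝ) ≤ (#A : ℝ) * (#A - 1) / 2 + n * (γ * n / 3) := by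
    have := hdeg_le_choose_add_sum hH x A
    rw [← Nat.cast_choose_two]
    exact_mod_cast (Nat.cast_le.2 this).trans (by push_cast; gcongr)
  by_contra! hlt
  have hn8 : 8 ≤ n := by nlinarith
  have hsq : (#A : ℝ) * (#A - 1) < (1 / 2 + γ / 6) * n * ((1 / 2 + γ / 6) * n - 1) := by
    nlinarith [(Nat.cast_nonneg _ : (0 : ℝ) ≤ #A)]
  nlinarith [mul_le_mul_of_nonneg_left hγ' (by positivity : 0 ≤ γ * n * n)]

lemma le_card_inter_heavyPartners (hH : ∀ e ∈ H, #e = 3) {γ : ℝ} (hγ : 0 < γ) (hγ' : γ ≤ 1 / 4)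
    (hn : 4 ≤ γ * Fintype.card α)
    (hδ : ∀ x, (1 / 4 + γ) * ((Fintype.card α).choose 2 : ℝ) ≤ hdeg H x) (a b : α) :
    γ * Fintype.card α / 3 ≤ #(heavyPartners H (γ * Fintype.card α / 3) a ∩
      heavyPartners H (γ * Fintype.card α / 3) b) := by
  have ha := le_card_heavyPartners hH hγ hγ' hn (hδ a)
  have hb := le_card_heavyPartners hH hγ hγ' hn (hδ b)
  set A := heavyPartners H (γ * Fintype.card α / 3) a
  set B := heavyPartners H (γ * Fintype.card α / 3) b
  have hunion : (#(A ∪ B) : ℝ) + #(A ∩ B) = #A + #B := by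
    exact_mod_cast card_union_add_card_inter A B
  have hle : (#(A ∪ B) : ℝ) ≤ Fintype.card α := by exact_mod_cast card_le_univ _
  linarith

end Hypergraph

lemma card_filter_lt_le_two_pow_mul_sum {β : Type*} (Ω : Finset β) (X : β → ℕ) (s : ℕ) :
    (#{f ∈ Ω | X f < s} : ℝ) ≤ 2 ^ s * ∑ f ∈ Ω, (1 / 2 : ℝ) ^ X f := by
  rw [mul_sum]
  calc (#{f ∈ Ω | X f < s} : ℝ) = ∑ f ∈ Ω with X f < s, 1 := by simp
    _ ≤ ∑ f ∈ Ω with X f < s, 2 ^ s * (1 / 2 : ℝ) ^ X f := by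
        refine sum_le_sum fun f hf => ?_
        rw [one_div, inv_pow, ← div_eq_mul_inv, one_le_div (by positivity)]
        exact pow_le_pow_right₀ one_le_two (mem_filter.1 hf).2.le
    _ ≤ ∑ f ∈ Ω, 2 ^ s * (1 / 2 : ℝ) ^ X f :=
        sum_le_sum_of_subset_of_nonneg (filter_subset _ _) fun _ _ _ => by positivity

lemma sub_div_two_le_mul_exp {q c Q : ℝ} (hq : 0 ≤ q) (hqQ : q ≤ Q) (hc : 0 ≤ c) :
    q - c / 2 ≤ q * exp (-c / (2 * Q)) := by
  have hqc : q * (c / (2 * Q)) ≤ c / 2 := by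
    rw [mul_div_assoc', mul_comm q c, mul_div_mul_comm]
    have : q / Q ≤ 1 := div_le_one_of_le₀ hqQ (hq.trans hqQ)
    nlinarith [div_nonneg hc (zero_le_two (α := ℝ))]
  calc q - c / 2 ≤ q * (-c / (2 * Q) + 1) := by rw [neg_div]; nlinarith
    _ ≤ q * exp (-c / (2 * Q)) := mul_le_mul_of_nonneg_left (add_one_le_exp _) hq

section Sampling

variable {ι α : Type*} [Fintype ι] [DecidableEq ι] [DecidableEq α]

lemma sum_piFinset_half_pow_card_filter_mem (B : ι → Finset α) (T : Finset α) :
    ∑ f ∈ Fintype.piFinset B, (1 / 2 : ℝ) ^ #{i | f i ∈ T} =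
      ∏ i, ((#(B i) : ℝ) - #(B i ∩ T) / 2) := by
  have hfactor : ∀ i,
      ∑ x ∈ B i, (if x ∈ T then 1 / 2 else 1 : ℝ) = #(B i) - #(B i ∩ T) / 2 := by
    intro i
    have hsplit := card_filter_add_card_filter_not (s := B i) (p := (· ∈ T))
    rw [filter_mem_eq_inter] at hsplit
    rw [sum_ite, sum_const, sum_const, filter_mem_eq_inter, nsmul_eq_mul, nsmul_eq_mul,
      ← hsplit]
    push_cast
    ring
  rw [← prod_congr rfl fun i _ => hfactor i, prod_univ_sum]
  refine sum_congr rfl fun f _ => ?_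
  rw [prod_ite, prod_const, prod_const_one, mul_one]

lemma card_filter_piFinset_card_filter_mem_lt_le (B : ι → Finset α) {Q : ℝ}
    (hBQ : ∀ i, (#(B i) : ℝ) ≤ Q) (T : Finset α) (s : ℕ) :
    (#{f ∈ Fintype.piFinset B | #{i | f i ∈ T} < s} : ℝ) ≤
      #(Fintype.piFinset B) * 2 ^ s * exp (-(∑ i, (#(B i ∩ T) : ℝ)) / (2 * Q)) := by
  calc _ ≤ 2 ^ s * ∑ f ∈ Fintype.piFinset B, (1 / 2 : ℝ) ^ #{i | f i ∈ T} :=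
        card_filter_lt_le_two_pow_mul_sum _ _ s
    _ = 2 ^ s * ∏ i, ((#(B i) : ℝ) - #(B i ∩ T) / 2) := by
        rw [sum_piFinset_half_pow_card_filter_mem]
    _ ≤ 2 ^ s * ∏ i, ((#(B i) : ℝ) * exp (-(#(B i ∩ T) : ℝ) / (2 * Q))) := by
        refine mul_le_mul_of_nonneg_left
          (prod_le_prod (fun i _ => ?_) fun i _ => ?_) (by positivity)
        · have : #(B i ∩ T) ≤ #(B i) := card_le_card inter_subset_left
          have : (#(B i ∩ T) : ℝ) ≤ #(B i) := by exact_mod_cast this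
          linarith
        · exact sub_div_two_le_mul_exp (Nat.cast_nonneg _) (hBQ i) (Nat.cast_nonneg _)
    _ = _ := by
        rw [prod_mul_distrib, ← exp_sum, Fintype.card_piFinset, ← sum_div, sum_neg_distrib]
        push_cast
        ring

lemma exists_mem_piFinset_forall_le_card_filter_mem (B : ι → Finset α)
    (hB : ∀ i, (B i).Nonempty) {Q : ℝ} (hBQ : ∀ i, (#(B i) : ℝ) ≤ Q) (𝒮 : Finset (Finset α)) {s : ℕ}
    (h𝒮 : ∀ T ∈ 𝒮, #𝒮 * 2 ^ s * exp (-(∑ i, (#(B i ∩ T) : ℝ)) / (2 * Q)) < 1) :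
    ∃ f ∈ Fintype.piFinset B, ∀ T ∈ 𝒮, s ≤ #{i | f i ∈ T} := by
  set Ω := Fintype.piFinset B
  have hΩ : (0 : ℝ) < #Ω := by
    exact_mod_cast card_pos.2 (Fintype.piFinset_nonempty.2 hB)
  obtain rfl | hne := 𝒮.eq_empty_or_nonempty
  · obtain ⟨f, hf⟩ := Fintype.piFinset_nonempty.2 hB
    exact ⟨f, hf, by simp⟩
  have hbad : ∑ T ∈ 𝒮, (#{f ∈ Ω | #{i | f i ∈ T} < s} : ℝ) < #Ω := by
    have h𝒮pos : (0 : ℝ) < #𝒮 := by exact_mod_cast hne.card_pos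
    calc _ < ∑ _T ∈ 𝒮, (#Ω : ℝ) / #𝒮 := by
          refine sum_lt_sum_of_nonempty hne fun T hT => ?_
          refine (card_filter_piFinset_card_filter_mem_lt_le B hBQ T s).trans_lt ?_
          rw [lt_div_iff₀ h𝒮pos]
          nlinarith [h𝒮 T hT]
      _ = #Ω := by rw [sum_const, nsmul_eq_mul]; field_simp
  by_contra! hcover
  have : Ω ⊆ 𝒮.biUnion fun T => {f ∈ Ω | #{i | f i ∈ T} < s} := fun f hf => by
    obtain ⟨T, hT, hlt⟩ := hcover f hf
    exact mem_biUnion.2 ⟨T, hT, mem_filter.2 ⟨hf, hlt⟩⟩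
  have := (card_le_card this).trans card_biUnion_le
  have : (#Ω : ℝ) ≤ ∑ T ∈ 𝒮, (#{f ∈ Ω | #{i | f i ∈ T} < s} : ℝ) := by exact_mod_cast this
  linarith

/-- Pick one random vertex in each fibre of `p`: a set of at least `t` vertices is hit fewer
than `s` times with probability at most `2 ^ s * exp (-t / (2 * Q))`. -/
lemma exists_card_le_forall_le_card_inter_of_fibres [Fintype α] (p : α → ι)
    (hp : Function.Surjective p) {Q : ℝ} (hQ : 0 < Q) (hpQ : ∀ i, (#{a | p a = i} : ℝ) ≤ Q)
    (𝒮 : Finset (Finset α)) {t : ℝ} (ht : ∀ T ∈ 𝒮, t ≤ #T) {s : ℕ}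
    (h : #𝒮 * 2 ^ s * exp (-t / (2 * Q)) < 1) :
    ∃ R : Finset α, #R ≤ Fintype.card ι ∧ ∀ T ∈ 𝒮, s ≤ #(R ∩ T) := by
  set B : ι → Finset α := fun i => {a | p a = i}
  have hfibres : ∀ T : Finset α, ∑ i, (#(B i ∩ T) : ℝ) = #T := by
    intro T
    rw [card_eq_sum_card_fiberwise (f := p) (t := univ) fun _ _ => mem_univ _]
    push_cast
    refine sum_congr rfl fun i _ => ?_
    congr 2
    ext a
    simp [B, and_comm]
  obtain ⟨f, hf, hfT⟩ := exists_mem_piFinset_forall_le_card_filter_mem B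
    (fun i => (hp i).imp fun a ha => by simp [B, ha]) hpQ 𝒮 fun T hT =>
      h.trans_le' (by
        rw [hfibres]
        gcongr
        exact ht T hT)
  have hpf : ∀ i, p (f i) = i := fun i => by simpa [B] using Fintype.mem_piFinset.1 hf i
  have hfinj : Function.Injective f := Function.LeftInverse.injective hpf
  refine ⟨univ.image f, card_image_le.trans_eq card_univ, fun T hT => (hfT T hT).trans ?_⟩
  rw [← card_image_of_injective _ hfinj]
  exact card_le_card fun a ha => by
    obtain ⟨i, hi, rfl⟩ := mem_image.1 ha
    exact mem_inter.2 ⟨mem_image_of_mem f (mem_univ i), (mem_filter.1 hi).2⟩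

end Sampling

lemma Fin.exists_card_le_forall_le_card_inter {n m : ℕ} (hm : 0 < m) (hmn : m ≤ n)
    (𝒮 : Finset (Finset (Fin n))) {t : ℝ} (ht : ∀ T ∈ 𝒮, t ≤ #T) {s : ℕ}
    (h : #𝒮 * 2 ^ s * exp (-t / (2 * (n / m + 1 : ℕ))) < 1) :
    ∃ R : Finset (Fin n), #R ≤ m ∧ ∀ T ∈ 𝒮, s ≤ #(R ∩ T) := by
  set p : Fin n → Fin m := fun i => ⟨i % m, Nat.mod_lt _ hm⟩
  have hp : Function.Surjective p := fun b =>
    ⟨⟨b, b.2.trans_le hmn⟩, Fin.ext (Nat.mod_eq_of_lt b.2)⟩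
  have hpQ : ∀ b, #{i | p i = b} ≤ n / m + 1 := by
    intro b
    rw [← card_range (n / m + 1)]
    refine card_le_card_of_injOn (fun i => (i : ℕ) / m) (fun i _ => ?_) fun i hi j hj hij => ?_
    · exact mem_range.2 (Nat.lt_succ_of_le (Nat.div_le_div_right i.2.le))
    · simp only [coe_filter, Set.mem_ofPred_eq, mem_univ, true_and] at hi hj
      have hmod : (i : ℕ) % m = (j : ℕ) % m := congrArg Fin.val (hi.trans hj.symm)
      exact Fin.ext (by rw [← Nat.div_add_mod i m, ← Nat.div_add_mod j m, hmod]; simp_all)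
  simpa using exists_card_le_forall_le_card_inter_of_fibres p hp (by positivity)
    (fun b => by exact_mod_cast hpQ b) 𝒮 ht h

lemma cast_div_floor_mul_add_one_le {γ : ℝ} (hγ : 0 < γ) (hγ' : γ ≤ 1 / 4) {n : ℕ}
    (hn : 4 ≤ γ * n) : ((n / ⌊γ * n⌋₊ + 1 : ℕ) : ℝ) ≤ 2 / γ := by
  have hm : γ * n - 1 < ⌊γ * n⌋₊ := Nat.sub_one_lt_floor _
  have hpos : 0 < γ * n - 1 := by linarith
  calc ((n / ⌊γ * n⌋₊ + 1 : ℕ) : ℝ) ≤ n / (γ * n - 1) + 1 := by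
        push_cast
        gcongr
        exact Nat.cast_div_le.trans (div_le_div_of_nonneg_left (Nat.cast_nonneg _) hpos hm.le)
    _ ≤ 2 / γ := by
        rw [div_add_one hpos.ne', div_le_div_iff₀ hpos hγ]
        nlinarith

lemma two_mul_sq_lt_exp {γ n : ℝ} (hγ : 0 < γ) (hn : 2 ^ 21 < γ ^ 6 * n) :
    2 * n ^ 2 < exp (γ ^ 2 * n / 48) := by
  have hn0 : 0 < n := pos_of_mul_pos_right (a := γ ^ 6) (by linarith) (by positivity)
  have hcube := pow_div_factorial_le_exp (x := γ ^ 2 * n / 48) (by positivity) 3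
  have h3 : (Nat.factorial 3 : ℝ) = 6 := by norm_num [Nat.factorial]
  rw [h3] at hcube
  have := mul_lt_mul_of_pos_left hn (pow_pos hn0 2)
  nlinarith

lemma two_mul_sq_mul_two_pow_mul_exp_lt_one {γ : ℝ} (hγ : 0 < γ) (hγ' : γ ≤ 1 / 4) {n : ℕ}
    (hn : 2 ^ 21 < γ ^ 6 * n) :
    2 * (n : ℝ) ^ 2 * 2 ^ ⌊γ ^ 3 * n / 4⌋₊ *
      exp (-(γ * n / 3) / (2 * (n / ⌊γ * n⌋₊ + 1 : ℕ))) < 1 := by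
  have hγ6 : γ ^ 6 * n ≤ γ * n := by
    gcongr
    exact pow_le_of_le_one hγ.le (by linarith) (by norm_num)
  have hQ := cast_div_floor_mul_add_one_le hγ hγ' (n := n) (by linarith)
  have h2s : (2 : ℝ) ^ ⌊γ ^ 3 * n / 4⌋₊ ≤ exp (γ ^ 2 * n / 16) := by
    calc (2 : ℝ) ^ ⌊γ ^ 3 * n / 4⌋₊ ≤ exp 1 ^ ⌊γ ^ 3 * n / 4⌋₊ := by
          gcongr
          linarith [add_one_le_exp (1 : ℝ)]
      _ = exp ⌊γ ^ 3 * n / 4⌋₊ := by rw [← exp_nat_mul, mul_one]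
      _ ≤ exp (γ ^ 2 * n / 16) := by
          gcongr
          refine (Nat.floor_le (by positivity)).trans ?_
          have : γ ^ 3 * n ≤ γ ^ 2 * n / 4 := by
            rw [pow_succ]
            nlinarith [mul_nonneg (sq_nonneg γ) (Nat.cast_nonneg (α := ℝ) n)]
          linarith
  have hexp : exp (-(γ * n / 3) / (2 * (n / ⌊γ * n⌋₊ + 1 : ℕ))) ≤ exp (-(γ ^ 2 * n / 12)) := by
    gcongr
    rw [neg_div, neg_le_neg_iff, le_div_iff₀ (by positivity)]
    calc γ ^ 2 * n / 12 * (2 * ((n / ⌊γ * n⌋₊ + 1 : ℕ) : ℝ))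
        ≤ γ ^ 2 * n / 12 * (2 * (2 / γ)) := by gcongr
      _ = γ * n / 3 := by field_simp; ring
  calc _ ≤ 2 * (n : ℝ) ^ 2 * exp (γ ^ 2 * n / 16) * exp (-(γ ^ 2 * n / 12)) := by gcongr
    _ = 2 * (n : ℝ) ^ 2 / exp (γ ^ 2 * n / 48) := by
        rw [mul_assoc, ← exp_add, div_eq_mul_inv _ (exp _), ← exp_neg]
        congr 2
        ring
    _ < 1 := by
        rw [div_lt_one (exp_pos _)]
        exact two_mul_sq_lt_exp hγ hn

lemma exists_reservoir {γ : ℝ} (hγ : 0 < γ) (hγ' : γ ≤ 1 / 4) {n : ℕ} (hn : 2 ^ 21 < γ ^ 6 * n)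
    {H : Finset (Finset (Fin n))} (hH : ∀ e ∈ H, #e = 3)
    (hδ : ∀ x, (1 / 4 + γ) * (n.choose 2 : ℝ) ≤ hdeg H x) :
    ∃ R : Finset (Fin n), (#R : ℝ) ≤ γ * n ∧
      (∀ a b, ⌊γ ^ 3 * n / 4⌋₊ ≤
        #(R ∩ (heavyPartners H (γ * n / 3) a ∩ heavyPartners H (γ * n / 3) b))) ∧
      ∀ x, ∀ v ∈ heavyPartners H (γ * n / 3) x, ⌊γ ^ 3 * n / 4⌋₊ ≤ #(R ∩ pairNbhd H x v) := by
  have hγn : 2 ^ 21 ≤ γ * n :=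
    hn.le.trans (by gcongr; exact pow_le_of_le_one hγ.le (by linarith) (by norm_num))
  set A := heavyPartners H (γ * n / 3)
  set 𝒮 := (univ.image fun p : Fin n × Fin n => A p.1 ∩ A p.2) ∪
    ({p : Fin n × Fin n | p.2 ∈ A p.1} : Finset _).image fun p => pairNbhd H p.1 p.2
  have h𝒮 : (#𝒮 : ℝ) ≤ 2 * n ^ 2 := by
    have : #𝒮 ≤ n * n + n * n := (card_union_le _ _).trans <| add_le_add
      (card_image_le.trans (by simp)) (card_image_le.trans ((card_filter_le _ _).trans (by simp)))
    have : (#𝒮 : ℝ) ≤ n * n + n * n := by exact_mod_cast this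
    linarith
  have ht : ∀ T ∈ 𝒮, γ * n / 3 ≤ #T := by
    intro T hT
    rcases mem_union.1 hT with hT | hT <;> obtain ⟨⟨x, v⟩, hxv, rfl⟩ := mem_image.1 hT
    · simpa using le_card_inter_heavyPartners hH hγ hγ' (by rw [Fintype.card_fin]; linarith)
        (by simpa using hδ) x v
    · simpa [A] using hxv
  have hm : 0 < ⌊γ * n⌋₊ := Nat.floor_pos.2 (by linarith)
  have hmn : ⌊γ * n⌋₊ ≤ n :=
    Nat.floor_le_of_le (by nlinarith [(Nat.cast_nonneg n : (0 : ℝ) ≤ n)])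
  obtain ⟨R, hR, hR𝒮⟩ := Fin.exists_card_le_forall_le_card_inter hm hmn 𝒮 ht <|
    lt_of_le_of_lt (by gcongr) (two_mul_sq_mul_two_pow_mul_exp_lt_one hγ hγ' hn)
  refine ⟨R, (Nat.cast_le.2 hR).trans (Nat.floor_le (by positivity)), fun a b => ?_,
    fun x v hv => ?_⟩
  · exact hR𝒮 _ (mem_union_left _ (mem_image.2 ⟨(a, b), mem_univ _, rfl⟩))
  · exact hR𝒮 _ (mem_union_right _ (mem_image.2 ⟨(x, v), by simpa using hv, rfl⟩))

lemma Fin.injective_uncurry_cons {α : Type*} {k m : ℕ} {t : Fin m → α}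
    {g : Fin k → Fin m → α} (ht : Function.Injective t)
    (hg : Function.Injective (Function.uncurry g))
    (hdisj : ∀ j i j', t j ≠ g i j') :
    Function.Injective (Function.uncurry (Fin.cons t g : Fin (k + 1) → Fin m → α)) := by
  rintro ⟨i, j⟩ ⟨i', j'⟩ h
  induction i using Fin.cases <;> induction i' using Fin.cases <;>
    simp only [Function.uncurry_apply_pair, Fin.cons_zero, Fin.cons_succ] at h
  · rw [ht h]
  · exact absurd h (hdisj _ _ _)
  · exact absurd h.symm (hdisj _ _ _)
  · simpa using @hg (_, _) (_, _) h

section Greedy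

variable {α : Type*} [Fintype α] [DecidableEq α] {H : Finset (Finset α)} {R : Finset α}
  {A : α → Finset α} {s : ℕ}

lemma exists_path_avoiding (hA : ∀ a b, s ≤ #(R ∩ (A a ∩ A b)))
    (hN : ∀ x, ∀ v ∈ A x, s ≤ #(R ∩ pairNbhd H x v)) {U : Finset α} (hU : #U + 3 ≤ s)
    (a b : α) :
    ∃ t : Fin 3 → α, Function.Injective t ∧ (∀ j, t j ∈ R ∧ t j ∉ U) ∧
      ({a, t 0, t 1} : Finset α) ∈ H ∧ ({t 1, t 2, b} : Finset α) ∈ H := by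
  obtain ⟨v, hv, hvU⟩ := exists_mem_notMem_of_card_lt_card (s := U) (t := R ∩ (A a ∩ A b))
    (by linarith [hA a b])
  simp only [mem_inter] at hv
  obtain ⟨u, hu, huU⟩ := exists_mem_notMem_of_card_lt_card (s := insert v U)
    (t := R ∩ pairNbhd H a v) (by linarith [card_insert_le v U, hN a v hv.2.1])
  obtain ⟨w, hw, hwU⟩ := exists_mem_notMem_of_card_lt_card (s := insert u (insert v U))
    (t := R ∩ pairNbhd H b v)
    (by linarith [card_insert_le u (insert v U), card_insert_le v U, hN b v hv.2.2])
  simp only [mem_inter, mem_pairNbhd, mem_insert, not_or] at hu hw huU hwU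
  refine ⟨![u, v, w], ?_, ?_, hu.2, ?_⟩
  · intro i j
    fin_cases i <;> fin_cases j <;> simp_all [eq_comm]
  · intro j
    fin_cases j <;> simp_all
  · convert hw.2 using 1
    ext
    simp only [mem_insert, mem_singleton]
    tauto

lemma exists_paths_avoiding (hA : ∀ a b, s ≤ #(R ∩ (A a ∩ A b)))
    (hN : ∀ x, ∀ v ∈ A x, s ≤ #(R ∩ pairNbhd H x v)) (k : ℕ) (a b : Fin k → α) {U : Finset α}
    (hU : #U + 3 * k ≤ s) :
    ∃ g : Fin k → Fin 3 → α, Function.Injective (Function.uncurry g) ∧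
      (∀ i j, g i j ∈ R ∧ g i j ∉ U) ∧
      ∀ i, ({a i, g i 0, g i 1} : Finset α) ∈ H ∧ ({g i 1, g i 2, b i} : Finset α) ∈ H := by
  induction k generalizing U with
  | zero => exact ⟨finZeroElim, fun p => p.1.elim0, finZeroElim, finZeroElim⟩
  | succ k ih =>
    obtain ⟨t, ht, htR, hta, htb⟩ :=
      exists_path_avoiding hA hN (U := U) (by omega) (a 0) (b 0)
    have hU' : #(U ∪ univ.image t) + 3 * k ≤ s := by
      have := card_union_le U (univ.image t)
      have := card_image_le (s := univ) (f := t)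
      simp only [card_univ, Fintype.card_fin] at this
      omega
    obtain ⟨g, hg, hgR, hgab⟩ := ih (Fin.tail a) (Fin.tail b) hU'
    simp only [mem_union, not_or, mem_image, mem_univ, true_and] at hgR
    refine ⟨Fin.cons t g, Fin.injective_uncurry_cons ht hg fun j i j' h => ?_,
      fun i => Fin.cases htR (fun i j => ⟨(hgR i j).1, (hgR i j).2.1⟩) i,
      fun i => Fin.cases ⟨hta, htb⟩ hgab i⟩
    exact (hgR i j').2.2 ⟨j, h⟩

end Greedy

/-- Reservoir Lemma: under minimum vertex degree `(1/4 + γ₂) C(n,2)` there is a small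
reservoir set `R` through which any `k ≤ γ₂³ n / 12` disjoint pairs of vertices can be
connected by loose paths of length two using `3k` distinct vertices of `R`. -/
theorem stmt_7 (γ₂ : ℝ) (h₁ : 0 < γ₂) (h₂ : γ₂ < 1 / 4) :
    ∃ n₀ : ℕ, ∀ n : ℕ, n > n₀ →
      ∀ H : Finset (Finset (Fin n)), (∀ e ∈ H, e.card = 3) →
      (∀ x : Fin n, (1 / 4 + γ₂) * (n.choose 2 : ℝ) ≤ (hdeg H x : ℝ)) →
      ∃ R : Finset (Fin n), (R.card : ℝ) ≤ γ₂ * n ∧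
        ∀ k : ℕ, (k : ℝ) ≤ γ₂ ^ 3 * n / 12 →
        ∀ a b : Fin k → Fin n,
          Function.Injective (fun p : Fin k × Bool => if p.2 then a p.1 else b p.1) →
          ∃ u v w : Fin k → Fin n,
            (∀ i, u i ∈ R ∧ v i ∈ R ∧ w i ∈ R) ∧
            Function.Injective (fun p : Fin k × Fin 3 =>
              if p.2 = 0 then u p.1 else if p.2 = 1 then v p.1 else w p.1) ∧
            ∀ i : Fin k, ({a i, u i, v i} : Finset (Fin n)) ∈ H ∧
              ({v i, w i, b i} : Finset (Fin n)) ∈ H := by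
  refine ⟨⌈2 ^ 21 / γ₂ ^ 6⌉₊, fun n hn H hH hδ => ?_⟩
  have hn' : 2 ^ 21 < γ₂ ^ 6 * n := by
    rw [← div_lt_iff₀' (by positivity)]
    exact Nat.lt_of_ceil_lt hn
  obtain ⟨R, hR, hRA, hRN⟩ := exists_reservoir h₁ h₂.le hn' hH hδ
  refine ⟨R, hR, fun k hk a b _ => ?_⟩
  have h3k : #(∅ : Finset (Fin n)) + 3 * k ≤ ⌊γ₂ ^ 3 * n / 4⌋₊ := by
    rw [card_empty, zero_add]
    exact Nat.le_floor (by push_cast; linarith)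
  obtain ⟨g, hg, hgR, hgH⟩ := exists_paths_avoiding hRA hRN k a b h3k
  refine ⟨fun i => g i 0, fun i => g i 1, fun i => g i 2,
    fun i => ⟨(hgR i 0).1, (hgR i 1).1, (hgR i 2).1⟩, ?_, hgH⟩
  convert hg using 1
  funext ⟨i, j⟩
  fin_cases j <;> rfl
end

section
/- Fix any ε > 0, any d > 2ε, and an integer m ≥ d/(ε(d − 2ε)). Suppose H is a 3-graph with V(H) = V₁ ∪ V₂ ∪ V₃ where (V₁, V₂, V₃) is an (ε,d)-regular triple with |V₁| = |V₃| = m and |V₂| = 2m. Then H contains a loose path P omitting at most 8εm/d + 3 vertices of H. -/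
/-
Greedy construction. By regularity, fewer than `εm` vertices of a part have link density below
`d - ε` into a pair of `ε`-large subsets of the other two parts. Build `x₀ b₀ x₁ b₁ …` with the
`xᵢ` alternating between `V₁` and `V₃` and the `bᵢ` in `V₂`, keeping the link of the endpoint
dense in the unused parts of `V₂` and of the next part. The atypical vertices of the next part
carry fewer than `εm |U₂|` of these link edges, so one of them leads to a typical vertex, the new
endpoint. This goes on while `L = ⌈(εm + 1)/(d - ε)⌉` vertices of `V₁` and of `V₃` are unused,
which yields `2(m - L) + 1` edges and leaves `4L - 3 ≤ 8εm/d + 3` vertices uncovered.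
-/

/-- The number of edges of `H` with exactly one vertex in each of `A`, `B`, `C`
(for disjoint `A`, `B`, `C`). -/
def e3 {α : Type*} [DecidableEq α] (H : Finset (Finset α)) (A B C : Finset α) : ℕ :=
  (H.filter (fun e => ∃ a ∈ A, ∃ b ∈ B, ∃ c ∈ C, e = {a, b, c})).card

/-- The density of `H` with respect to the triple `(A, B, C)`. -/
noncomputable def dens {α : Type*} [DecidableEq α] (H : Finset (Finset α))
    (A B C : Finset α) : ℝ :=
  (e3 H A B C : ℝ) / ((A.card : ℝ) * (B.card : ℝ) * (C.card : ℝ))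

/-- The triple `(V₁, V₂, V₃)` of mutually disjoint vertex sets is `ε`-regular in `H`. -/
def EpsRegular {α : Type*} [DecidableEq α] (ε : ℝ) (H : Finset (Finset α))
    (V₁ V₂ V₃ : Finset α) : Prop :=
  ∀ A₁ ⊆ V₁, ∀ A₂ ⊆ V₂, ∀ A₃ ⊆ V₃,
    ε * (V₁.card : ℝ) ≤ (A₁.card : ℝ) → ε * (V₂.card : ℝ) ≤ (A₂.card : ℝ) →
    ε * (V₃.card : ℝ) ≤ (A₃.card : ℝ) →
    |dens H A₁ A₂ A₃ - dens H V₁ V₂ V₃| ≤ ε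

/-- The triple `(V₁, V₂, V₃)` is `(ε, d)`-regular in `H`. -/
def EpsDRegular {α : Type*} [DecidableEq α] (ε d : ℝ) (H : Finset (Finset α))
    (V₁ V₂ V₃ : Finset α) : Prop :=
  EpsRegular ε H V₁ V₂ V₃ ∧ d ≤ dens H V₁ V₂ V₃

/-- `v 0, v 1, …, v (2k)` is a loose path in the 3-graph `H`. -/
def IsLoosePath {α : Type*} [DecidableEq α] (H : Finset (Finset α)) (k : ℕ)
    (v : ℕ → α) : Prop :=
  Set.InjOn v (Set.Iio (2 * k + 1)) ∧
  ∀ i : ℕ, i < k → ({v (2 * i), v (2 * i + 1), v (2 * i + 2)} : Finset α) ∈ H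

/-- The vertex set of the loose path `v 0, …, v (2k)`. -/
def pathVerts {α : Type*} [DecidableEq α] (k : ℕ) (v : ℕ → α) : Finset α :=
  (Finset.range (2 * k + 1)).image v

section Development

open Finset hiding dens

variable {α : Type*}

def appendEdge (v : ℕ → α) (t : ℕ) (b y : α) : ℕ → α :=
  Function.update (Function.update v (2 * t + 1) b) (2 * t + 2) y

lemma appendEdge_of_lt {v : ℕ → α} {t j : ℕ} (b y : α) (hj : j < 2 * t + 1) :
    appendEdge v t b y j = v j := by
  rw [appendEdge, Function.update_of_ne (by omega), Function.update_of_ne (by omega)]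

@[simp]
lemma appendEdge_two_mul_add_one (v : ℕ → α) (t : ℕ) (b y : α) :
    appendEdge v t b y (2 * t + 1) = b := by
  simp [appendEdge]

@[simp]
lemma appendEdge_two_mul_add_two (v : ℕ → α) (t : ℕ) (b y : α) :
    appendEdge v t b y (2 * t + 2) = y := by
  simp [appendEdge]

variable [DecidableEq α] {H : Finset (Finset α)} {ε d : ℝ} {m : ℕ}

lemma card_pathVerts_eq_iff {k : ℕ} {v : ℕ → α} :
    #(pathVerts k v) = 2 * k + 1 ↔ Set.InjOn v (Set.Iio (2 * k + 1)) := by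
  rw [pathVerts, ← coe_range, ← card_image_iff, card_range]

lemma pathVerts_appendEdge (v : ℕ → α) (t : ℕ) (b y : α) :
    pathVerts (t + 1) (appendEdge v t b y) = insert y (insert b (pathVerts t v)) := by
  have hold : (range (2 * t + 1)).image (appendEdge v t b y) = pathVerts t v :=
    image_congr fun j hj => appendEdge_of_lt b y (mem_range.1 hj)
  rw [pathVerts, show 2 * (t + 1) + 1 = 2 * t + 2 + 1 by ring, range_add_one, image_insert,
    range_add_one, image_insert, hold, appendEdge_two_mul_add_one, appendEdge_two_mul_add_two]

lemma sdiff_pathVerts_appendEdge (S : Finset α) (v : ℕ → α) (t : ℕ) (b y : α) :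
    S \ pathVerts (t + 1) (appendEdge v t b y) = ((S \ pathVerts t v).erase b).erase y := by
  rw [pathVerts_appendEdge, sdiff_insert, sdiff_insert]

lemma IsLoosePath.appendEdge {t : ℕ} {v : ℕ → α} (hv : IsLoosePath H t v) {b y : α}
    (hb : b ∉ pathVerts t v) (hy : y ∉ pathVerts t v) (hby : b ≠ y)
    (hedge : ({v (2 * t), b, y} : Finset α) ∈ H) :
    IsLoosePath H (t + 1) (appendEdge v t b y) := by
  refine ⟨card_pathVerts_eq_iff.1 ?_, fun i hi => ?_⟩
  · rw [pathVerts_appendEdge, card_insert_of_notMem (by simp [hby.symm, hy]),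
      card_insert_of_notMem hb, card_pathVerts_eq_iff.2 hv.1]
    ring
  · rcases Nat.lt_succ_iff_lt_or_eq.1 hi with hi | rfl
    · rw [appendEdge_of_lt b y (by omega), appendEdge_of_lt b y (by omega),
        appendEdge_of_lt b y (by omega)]
      exact hv.2 i hi
    · rwa [appendEdge_of_lt b y (by omega), appendEdge_two_mul_add_one, appendEdge_two_mul_add_two]

section EdgeCount

variable (H)

lemma e3_right_comm (A B C : Finset α) : e3 H A B C = e3 H A C B := by
  unfold e3
  congr 1
  ext e
  simp only [mem_filter]
  constructor
  · rintro ⟨heH, a, ha, b, hb, c, hc, rfl⟩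
    exact ⟨heH, a, ha, c, hc, b, hb, by rw [pair_comm]⟩
  · rintro ⟨heH, a, ha, c, hc, b, hb, rfl⟩
    exact ⟨heH, a, ha, b, hb, c, hc, by rw [pair_comm]⟩

lemma e3_reverse (A B C : Finset α) : e3 H A B C = e3 H C B A := by
  unfold e3
  congr 1
  ext e
  simp only [mem_filter]
  constructor
  · rintro ⟨heH, a, ha, b, hb, c, hc, rfl⟩
    exact ⟨heH, c, hc, b, hb, a, ha, by ext; simp; tauto⟩
  · rintro ⟨heH, c, hc, b, hb, a, ha, rfl⟩
    exact ⟨heH, a, ha, b, hb, c, hc, by ext; simp; tauto⟩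

lemma e3_le_card_mul (A B C : Finset α) : e3 H A B C ≤ #A * #B * #C := by
  calc e3 H A B C ≤ #((A ×ˢ B ×ˢ C).image fun p => ({p.1, p.2.1, p.2.2} : Finset α)) := by
        refine card_le_card fun e he => ?_
        obtain ⟨-, a, ha, b, hb, c, hc, rfl⟩ := mem_filter.1 he
        exact mem_image.2 ⟨(a, b, c), by simp [ha, hb, hc], rfl⟩
    _ ≤ #(A ×ˢ B ×ˢ C) := card_image_le
    _ = #A * #B * #C := by simp [card_product, mul_assoc]

lemma e3_le_add_of_subset_union (A B : Finset α) {C C₁ C₂ : Finset α} (h : C ⊆ C₁ ∪ C₂) :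
    e3 H A B C ≤ e3 H A B C₁ + e3 H A B C₂ := by
  refine (card_le_card fun e he => ?_).trans (card_union_le _ _)
  obtain ⟨heH, a, ha, b, hb, c, hc, rfl⟩ := mem_filter.1 he
  rcases mem_union.1 (h hc) with hc | hc
  · exact mem_union.2 (Or.inl (mem_filter.2 ⟨heH, a, ha, b, hb, c, hc, rfl⟩))
  · exact mem_union.2 (Or.inr (mem_filter.2 ⟨heH, a, ha, b, hb, c, hc, rfl⟩))

lemma e3_le_e3_sdiff_add (A B C S : Finset α) :
    e3 H A B C ≤ e3 H A B (C \ S) + #A * #B * #S :=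
  (e3_le_add_of_subset_union H A B fun c hc => by
    by_cases hcS : c ∈ S <;> simp [hc, hcS]).trans
    (Nat.add_le_add_left (e3_le_card_mul H A B S) _)

lemma e3_le_e3_erase_add (A B C : Finset α) (b : α) :
    e3 H A B C ≤ e3 H A (B.erase b) C + #A * #C := by
  have h := e3_le_e3_sdiff_add H A C B {b}
  rw [e3_right_comm H A B, e3_right_comm H A (B.erase b), ← sdiff_singleton_eq_erase]
  simpa using h

lemma e3_eq_sum_singleton (A B C : Finset α) (hAB : Disjoint A B) (hAC : Disjoint A C) :
    e3 H A B C = ∑ a ∈ A, e3 H {a} B C := by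
  unfold e3
  rw [← card_biUnion]
  · congr 1
    ext e
    simp only [mem_biUnion, mem_filter, mem_singleton]
    constructor
    · rintro ⟨heH, a, ha, b, hb, c, hc, rfl⟩
      exact ⟨a, ha, heH, a, rfl, b, hb, c, hc, rfl⟩
    · rintro ⟨a, ha, heH, a', rfl, b, hb, c, hc, rfl⟩
      exact ⟨heH, a', ha, b, hb, c, hc, rfl⟩
  · intro _ _ _ ha' hne
    simp only [Function.onFun, disjoint_left, mem_filter, mem_singleton]
    rintro e ⟨-, a, h, b, hb, c, hc, rfl⟩ ⟨-, a', h', b', -, c', -, he⟩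
    subst h h'
    have ha'e : a' ∈ ({a, b, c} : Finset α) := by rw [he]; simp
    simp only [mem_insert, mem_singleton] at ha'e
    rcases ha'e with rfl | rfl | rfl
    · exact hne rfl
    · exact disjoint_left.1 hAB ha' hb
    · exact disjoint_left.1 hAC ha' hc

lemma exists_mem_of_e3_pos {A B C : Finset α} (h : 0 < e3 H A B C) :
    ∃ a ∈ A, ∃ b ∈ B, ∃ c ∈ C, ({a, b, c} : Finset α) ∈ H := by
  obtain ⟨e, he⟩ := card_pos.1 h
  obtain ⟨heH, a, ha, b, hb, c, hc, rfl⟩ := mem_filter.1 he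
  exact ⟨a, ha, b, hb, c, hc, heH⟩

lemma dens_le_one (A B C : Finset α) : dens H A B C ≤ 1 :=
  div_le_one_of_le₀ (by exact_mod_cast e3_le_card_mul H A B C) (by positivity)

lemma dens_reverse (A B C : Finset α) : dens H A B C = dens H C B A := by
  rw [dens, dens, e3_reverse]
  ring

end EdgeCount

lemma EpsDRegular.reverse {V₁ V₂ V₃ : Finset α} (h : EpsDRegular ε d H V₁ V₂ V₃) :
    EpsDRegular ε d H V₃ V₂ V₁ := by
  refine ⟨fun A₃ h₃ A₂ h₂ A₁ h₁ c₃ c₂ c₁ => ?_, by rw [dens_reverse]; exact h.2⟩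
  rw [dens_reverse, dens_reverse H V₃]
  exact h.1 A₁ h₁ A₂ h₂ A₃ h₃ c₁ c₂ c₃

variable (H) in
noncomputable def lowLinkVerts (δ : ℝ) (X U W : Finset α) : Finset α :=
  X.filter fun x => (e3 H {x} U W : ℝ) < δ * #U * #W

variable {X Y Z : Finset α}

lemma card_lowLinkVerts_lt (hreg : EpsRegular ε H X Y Z) (hd : d ≤ dens H X Y Z)
    (hXY : Disjoint X Y) (hXZ : Disjoint X Z) (hε : 0 < ε) (hX : X.Nonempty)
    {U W : Finset α} (hUY : U ⊆ Y) (hWZ : W ⊆ Z) (hU : ε * #Y ≤ #U) (hW : ε * #Z ≤ #W) :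
    (#(lowLinkVerts H (d - ε) X U W) : ℝ) < ε * #X := by
  set B := lowLinkVerts H (d - ε) X U W
  by_contra! hB
  have hBX : B ⊆ X := filter_subset _ _
  have hBne : B.Nonempty := card_pos.1 (by exact_mod_cast (by positivity : 0 < ε * #X).trans_le hB)
  have hsum : (e3 H B U W : ℝ) < (d - ε) * (#B * #U * #W) := by
    rw [e3_eq_sum_singleton H B U W (hXY.mono hBX hUY) (hXZ.mono hBX hWZ)]
    push_cast
    calc ∑ x ∈ B, (e3 H {x} U W : ℝ) < ∑ _x ∈ B, (d - ε) * #U * #W :=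
          sum_lt_sum_of_nonempty hBne fun x hx => (mem_filter.1 hx).2
      _ = (d - ε) * (#B * #U * #W) := by rw [sum_const, nsmul_eq_mul]; ring
  have hpos : (0 : ℝ) < #B * #U * #W := by
    refine lt_of_le_of_ne (by positivity) fun h0 => ?_
    rw [← h0, mul_zero] at hsum
    exact (Nat.cast_nonneg _).not_gt hsum
  have hlow : dens H B U W < d - ε := (div_lt_iff₀ hpos).2 hsum
  have := hreg B hBX U hUY W hWZ hB hU hW
  linarith [(abs_le.1 this).1]

lemma exists_edge_to_denseLink (hreg : EpsRegular ε H Z Y X) (hd : d ≤ dens H Z Y X)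
    (hZY : Disjoint Z Y) (hZX : Disjoint Z X) (hε : 0 < ε)
    {U W W' : Finset α} (hUY : U ⊆ Y) (hWZ : W ⊆ Z) (hW'X : W' ⊆ X)
    (hU : ε * #Y ≤ #U) (hW' : ε * #X ≤ #W') (hW : ε * #Z + 1 ≤ (d - ε) * #W) (hWU : #W ≤ #U)
    {x : α} (hx : ((d - ε) * (#U + 1) - 1) * #W ≤ (e3 H {x} U W : ℝ)) :
    ∃ b ∈ U, ∃ y ∈ W, ({x, b, y} : Finset α) ∈ H ∧ (d - ε) * #U * #W' ≤ (e3 H {y} U W' : ℝ) := by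
  set B := lowLinkVerts H (d - ε) Z U W'
  have hεZ : 0 ≤ ε * #Z := by positivity
  have hWpos : 0 < #W := Nat.pos_of_ne_zero fun h0 => by
    rw [h0, Nat.cast_zero, mul_zero] at hW
    linarith
  have hB : (#B : ℝ) < ε * #Z :=
    card_lowLinkVerts_lt hreg hd hZY hZX hε ((card_pos.1 hWpos).mono hWZ) hUY hW'X hU hW'
  have hsplit : (e3 H {x} U W : ℝ) ≤ e3 H {x} U (W \ B) + #U * #B := by
    have := e3_le_e3_sdiff_add H {x} U W B
    rw [card_singleton, one_mul] at this
    exact_mod_cast this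
  have hWU' : (#W : ℝ) ≤ #U := by exact_mod_cast hWU
  have hUB : (#U : ℝ) * #B ≤ #U * (ε * #Z) := by gcongr
  have hpos : 0 < e3 H {x} U (W \ B) := by
    have : (ε * #Z + 1) * (#U + 1) ≤ (d - ε) * #W * (#U + 1) := by gcongr
    exact_mod_cast (by nlinarith : (0 : ℝ) < e3 H {x} U (W \ B))
  obtain ⟨_, hx', b, hb, y, hy, hedge⟩ := exists_mem_of_e3_pos H hpos
  obtain rfl := mem_singleton.1 hx'
  obtain ⟨hyW, hyB⟩ := mem_sdiff.1 hy
  exact ⟨b, hb, y, hyW, hedge, by simpa [B, lowLinkVerts, hWZ hyW] using hyB⟩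

lemma le_e3_erase_of_le {δ : ℝ} {U W : Finset α} {b y : α} (hb : b ∈ U)
    (h : δ * #U * #W ≤ (e3 H {y} U W : ℝ)) :
    (δ * (#(U.erase b) + 1) - 1) * #W ≤ (e3 H {y} (U.erase b) W : ℝ) := by
  have hsplit : (e3 H {y} U W : ℝ) ≤ e3 H {y} (U.erase b) W + #W := by
    have := e3_le_e3_erase_add H {y} U W b
    rw [card_singleton, one_mul] at this
    exact_mod_cast this
  have hcard : (#(U.erase b) : ℝ) + 1 = #U := by exact_mod_cast card_erase_add_one hb
  rw [hcard]
  linarith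

/-- Invariant of the greedy construction. `X` is the part containing the last vertex `v (2t)` and
`Z` the part that the next edge enters; only the sizes of their unused parts are recorded. The
`- 1` in `le_link` pays for the vertex of `V₂` used up by the next edge. -/
structure IsExtendablePath (H : Finset (Finset α)) (δ : ℝ) (V₂ X Z : Finset α) (t : ℕ)
    (v : ℕ → α) : Prop where
  isLoosePath : IsLoosePath H t v
  card_le : #(X \ pathVerts t v) ≤ #(Z \ pathVerts t v)
  card_le_add_one : #(Z \ pathVerts t v) ≤ #(X \ pathVerts t v) + 1
  card_mid_eq : #(V₂ \ pathVerts t v) = #(X \ pathVerts t v) + #(Z \ pathVerts t v) + 1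
  card_mid_add : #(V₂ \ pathVerts t v) + t = #V₂
  le_link : (δ * (#(V₂ \ pathVerts t v) + 1) - 1) * #(Z \ pathVerts t v) ≤
    (e3 H {v (2 * t)} (V₂ \ pathVerts t v) (Z \ pathVerts t v) : ℝ)

lemma isExtendablePath_const {δ : ℝ} {V₂ X Z : Finset α} {x : α} (hxX : x ∈ X) (hxV₂ : x ∉ V₂)
    (hxZ : x ∉ Z) (hZ : #Z = #X) (hV₂ : #V₂ = #X + #Z) (hδ : δ ≤ 1)
    (hx : δ * #V₂ * #Z ≤ (e3 H {x} V₂ Z : ℝ)) :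
    IsExtendablePath H δ V₂ X Z 0 fun _ => x := by
  have hP : pathVerts 0 (fun _ => x) = {x} := by simp [pathVerts]
  have hX := card_erase_add_one hxX
  refine ⟨⟨card_pathVerts_eq_iff.1 (by simp [hP]), by simp⟩, ?_, ?_, ?_, ?_, ?_⟩ <;>
    simp only [hP, sdiff_singleton_eq_erase, erase_eq_of_notMem hxV₂, erase_eq_of_notMem hxZ]
  all_goals try omega
  have hZ0 : (0 : ℝ) ≤ #Z := by positivity
  nlinarith

lemma IsExtendablePath.extend {L t : ℕ} {V₂ X Z : Finset α} {v : ℕ → α}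
    (hv : IsExtendablePath H (d - ε) V₂ X Z t v) (hreg : EpsDRegular ε d H Z V₂ X)
    (hXV₂ : Disjoint X V₂) (hZV₂ : Disjoint Z V₂) (hXZ : Disjoint X Z)
    (hX : #X = m) (hV₂ : #V₂ = 2 * m) (hZ : #Z = m) (hε : 0 < ε)
    (hL : ε * m + 1 ≤ (d - ε) * L) (ht : t + 2 * L ≤ 2 * m) :
    ∃ v', IsExtendablePath H (d - ε) V₂ Z X (t + 1) v' := by
  obtain ⟨hpath, hle, hle_add_one, hcards, hmid_add, hlink⟩ := hv
  set P := pathVerts t v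
  have hLZ : L ≤ #(Z \ P) := by omega
  have hLX : L ≤ #(X \ P) + 1 := by omega
  have hδ : 0 ≤ d - ε :=
    (pos_of_mul_pos_left ((by positivity : (0 : ℝ) < ε * m + 1).trans_le hL) L.cast_nonneg).le
  have hLε : ε * m + 1 ≤ L := hL.trans <| mul_le_of_le_one_left L.cast_nonneg <| by
    linarith [hreg.2, dens_le_one H Z V₂ X]
  have hLZ' : (L : ℝ) ≤ #(Z \ P) := by exact_mod_cast hLZ
  have hLX' : (L : ℝ) ≤ #(X \ P) + 1 := by exact_mod_cast hLX
  have hmid : (#(V₂ \ P) : ℝ) = #(X \ P) + #(Z \ P) + 1 := by exact_mod_cast hcards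
  obtain ⟨b, hb, y, hy, hedge, hy_link⟩ := exists_edge_to_denseLink hreg.1 hreg.2 hZV₂ hXZ.symm
    hε sdiff_subset sdiff_subset sdiff_subset (by rw [hV₂]; push_cast; linarith)
    (by rw [hX]; linarith) (by rw [hZ]; nlinarith) (by omega) hlink
  have hbV₂ : b ∈ V₂ := (mem_sdiff.1 hb).1
  have hyZ : y ∈ Z := (mem_sdiff.1 hy).1
  have hV₂' : V₂ \ pathVerts (t + 1) (appendEdge v t b y) = (V₂ \ P).erase b := by
    rw [sdiff_pathVerts_appendEdge, erase_eq_of_notMem fun h =>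
      disjoint_left.1 hZV₂ hyZ (mem_sdiff.1 (mem_of_mem_erase h)).1]
  have hZ' : Z \ pathVerts (t + 1) (appendEdge v t b y) = (Z \ P).erase y := by
    rw [sdiff_pathVerts_appendEdge, erase_eq_of_notMem fun h =>
      disjoint_left.1 hZV₂ (mem_sdiff.1 h).1 hbV₂]
  have hX' : X \ pathVerts (t + 1) (appendEdge v t b y) = X \ P := by
    rw [sdiff_pathVerts_appendEdge, erase_eq_of_notMem fun h =>
      disjoint_left.1 hXV₂ (mem_sdiff.1 h).1 hbV₂, erase_eq_of_notMem fun h =>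
      disjoint_left.1 hXZ (mem_sdiff.1 h).1 hyZ]
  have hb1 := card_erase_add_one hb
  have hy1 := card_erase_add_one hy
  refine ⟨appendEdge v t b y, ⟨hpath.appendEdge (mem_sdiff.1 hb).2 (mem_sdiff.1 hy).2
    (fun h => disjoint_left.1 hZV₂ hyZ (h ▸ hbV₂)) hedge, ?_, ?_, ?_, ?_, ?_⟩⟩ <;>
    simp only [hV₂', hZ', hX'] <;> try omega
  rw [show 2 * (t + 1) = 2 * t + 2 by ring, appendEdge_two_mul_add_two]
  exact le_e3_erase_of_le hb hy_link

variable {V₁ V₂ V₃ : Finset α}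

lemma exists_isExtendablePath_zero (hreg : EpsDRegular ε d H V₁ V₂ V₃)
    (h12 : Disjoint V₁ V₂) (h13 : Disjoint V₁ V₃)
    (hc1 : #V₁ = m) (hc2 : #V₂ = 2 * m) (hc3 : #V₃ = m) (hε : 0 < ε) (hεm : ε * m < m) :
    ∃ v, IsExtendablePath H (d - ε) V₂ V₁ V₃ 0 v := by
  have hm : (0 : ℝ) < m := by nlinarith
  have hε1 : ε < 1 := lt_of_mul_lt_mul_right (by simpa using hεm) hm.le
  have hδ : d - ε ≤ 1 := by linarith [hreg.2, dens_le_one H V₁ V₂ V₃]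
  have hlow := card_lowLinkVerts_lt hreg.1 hreg.2 h12 h13 hε
    (card_pos.1 (by rw [hc1]; exact_mod_cast hm)) subset_rfl subset_rfl
    (by nlinarith [(#V₂).cast_nonneg (α := ℝ)]) (by nlinarith [(#V₃).cast_nonneg (α := ℝ)])
  obtain ⟨x, hx, hx_low⟩ := exists_mem_notMem_of_card_lt_card <|
    (Nat.cast_lt (α := ℝ)).1 (hlow.trans (by rw [hc1]; exact hεm))
  simp only [lowLinkVerts, mem_filter, hx, true_and, not_lt] at hx_low
  exact ⟨_, isExtendablePath_const hx (disjoint_left.1 h12 hx) (disjoint_left.1 h13 hx)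
    (by omega) (by omega) hδ hx_low⟩

theorem exists_isLoosePath_of_epsDRegular {L : ℕ} (hreg : EpsDRegular ε d H V₁ V₂ V₃)
    (h12 : Disjoint V₁ V₂) (h13 : Disjoint V₁ V₃) (h23 : Disjoint V₂ V₃)
    (hc1 : #V₁ = m) (hc2 : #V₂ = 2 * m) (hc3 : #V₃ = m) (hε : 0 < ε)
    (hLm : L ≤ m) (hL : ε * m + 1 ≤ (d - ε) * L) :
    ∃ v, IsLoosePath H (2 * (m - L) + 1) v := by
  have hδ : d - ε ≤ 1 := by linarith [hreg.2, dens_le_one H V₁ V₂ V₃]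
  have hLε : ε * m + 1 ≤ L := hL.trans (mul_le_of_le_one_left L.cast_nonneg hδ)
  have key : ∀ t ≤ 2 * (m - L) + 1, ∃ v, IsExtendablePath H (d - ε) V₂ V₁ V₃ t v ∨
      IsExtendablePath H (d - ε) V₂ V₃ V₁ t v := by
    intro t ht
    induction t with
    | zero =>
      have : (L : ℝ) ≤ m := by exact_mod_cast hLm
      exact (exists_isExtendablePath_zero hreg h12 h13 hc1 hc2 hc3 hε (by linarith)).imp
        fun _ => Or.inl
    | succ t ih =>
      obtain ⟨v, hv | hv⟩ := ih (by omega)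
      · exact (hv.extend hreg.reverse h12 h23.symm h13 hc1 hc2 hc3 hε hL (by omega)).imp
          fun _ => Or.inr
      · exact (hv.extend hreg h23.symm h12 h13.symm hc3 hc2 hc1 hε hL (by omega)).imp
          fun _ => Or.inl
  obtain ⟨v, hv | hv⟩ := key _ le_rfl
  exacts [⟨v, hv.isLoosePath⟩, ⟨v, hv.isLoosePath⟩]

end Development

lemma exists_stopping_threshold {ε d : ℝ} {m : ℕ} (hε : 0 < ε) (hd : 2 * ε < d)
    (hm : d ≤ ε * m * (d - 2 * ε)) :
    ∃ L : ℕ, L ≤ m ∧ ε * m + 1 ≤ (d - ε) * L ∧ 4 * (L : ℝ) ≤ 8 * ε * m / d + 4 := by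
  have hde : 0 < d - ε := by linarith
  have hd0 : 0 < d := by linarith
  set x := (ε * m + 1) / (d - ε)
  have hx : x ≤ m := by
    rw [div_le_iff₀ hde]
    nlinarith
  have hx4 : 4 * x ≤ 8 * ε * m / d := by
    rw [mul_div_assoc', div_le_div_iff₀ hde hd0]
    nlinarith
  refine ⟨⌈x⌉₊, Nat.ceil_le.2 hx, ?_, ?_⟩
  · exact ((div_le_iff₀ hde).1 (Nat.le_ceil x)).trans_eq (mul_comm _ _)
  · linarith [Nat.ceil_lt_add_one (by positivity : 0 ≤ x)]

theorem stmt_10_general (ε d : ℝ) (hε : 0 < ε) (hd : 2 * ε < d) (m : ℕ)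
    (hm : d / (ε * (d - 2 * ε)) ≤ (m : ℝ))
    (H : Finset (Finset (Fin (4 * m))))
    (V₁ V₂ V₃ : Finset (Fin (4 * m)))
    (h12 : Disjoint V₁ V₂) (h13 : Disjoint V₁ V₃) (h23 : Disjoint V₂ V₃)
    (hc1 : V₁.card = m) (hc2 : V₂.card = 2 * m) (hc3 : V₃.card = m)
    (hreg : EpsDRegular ε d H V₁ V₂ V₃) :
    ∃ (k : ℕ) (v : ℕ → Fin (4 * m)), IsLoosePath H k v ∧
      ((Finset.univ \ pathVerts k v).card : ℝ) ≤ 8 * ε * (m : ℝ) / d + 3 := by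
  have hm' : d ≤ ε * m * (d - 2 * ε) := by
    rw [div_le_iff₀ (by nlinarith)] at hm
    linarith
  obtain ⟨L, hLm, hL, hL4⟩ := exists_stopping_threshold hε hd hm'
  obtain ⟨v, hv⟩ := exists_isLoosePath_of_epsDRegular hreg h12 h13 h23 hc1 hc2 hc3 hε hLm hL
  refine ⟨_, v, hv, ?_⟩
  set P := pathVerts (2 * (m - L) + 1) v
  have hcard := Finset.card_sdiff_add_card_eq_card (Finset.subset_univ P)
  rw [Finset.card_univ, Fintype.card_fin, card_pathVerts_eq_iff.2 hv.1] at hcard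
  have : ((Finset.univ \ P).card : ℝ) + 3 = 4 * L := by
    exact_mod_cast (by omega : (Finset.univ \ P).card + 3 = 4 * L)
  linarith

/-- An `(ε,d)`-regular triple with parts of sizes `m, 2m, m` contains a loose path
omitting at most `8εm/d + 3` vertices. -/
theorem stmt_10 (ε d : ℝ) (hε : 0 < ε) (hd : 2 * ε < d) (m : ℕ)
    (hm : d / (ε * (d - 2 * ε)) ≤ (m : ℝ))
    (H : Finset (Finset (Fin (4 * m)))) (hH : ∀ e ∈ H, e.card = 3)
    (V₁ V₂ V₃ : Finset (Fin (4 * m)))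
    (h12 : Disjoint V₁ V₂) (h13 : Disjoint V₁ V₃) (h23 : Disjoint V₂ V₃)
    (hcover : V₁ ∪ V₂ ∪ V₃ = Finset.univ)
    (hc1 : V₁.card = m) (hc2 : V₂.card = 2 * m) (hc3 : V₃.card = m)
    (hreg : EpsDRegular ε d H V₁ V₂ V₃) :
    ∃ (k : ℕ) (v : ℕ → Fin (4 * m)), IsLoosePath H k v ∧
      ((Finset.univ \ pathVerts k v).card : ℝ) ≤ 8 * ε * (m : ℝ) / d + 3 :=
  stmt_10_general ε d hε hd m hm H V₁ V₂ V₃ h12 h13 h23 hc1 hc2 hc3 hreg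
end

section
/- Let ρ > 0 be sufficiently small and let n be sufficiently large. Suppose H is a 3-graph on n vertices with V(H) = X ∪̇ Z such that |Z| = 3(|X| − 1). Assume that for every vertex v ∈ X the number of pairs {z, z'} of distinct vertices of Z with {v, z, z'} ∉ E(H) is at most ρ·C(|Z|,2), and for every vertex v ∈ Z the number of pairs (x, z) with x ∈ X, z ∈ Z \ {v} and {v, x, z} ∉ E(H) is at most ρ·|X|·|Z|. Then for any two vertices x₀, x₁ ∈ X there is a loose Hamilton path in H from x₀ to x₁, i.e., a spanning loose path of H whose ends are x₀ and x₁. -/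
/-!
Write `|X| = N + 1`, so `|Z| = 3N`, and enumerate `X` as `u 0, …, u N` from `x₀` to `x₁`. The
path is made of `N` segments `u j, A j, C j, D j, u (j + 1)` with edges `{u j, A j, C j}` and
`{u (j + 1), C j, D j}`; since it has exactly `|X ∪ Z|` positions, it suffices that every vertex
occurs, and injectivity follows by counting.

By the condition on `X`, for each `x` few `b ∈ Z` have a large missing link `{w | xbw ∉ H}`, so
we can greedily pick distinct middle vertices `C j = b j` whose links with `u j` and `u (j + 1)`
are almost all of `Z`. This leaves `2N` slots (the `A j` and `D j`), and by Markov's inequality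
only about `N / 4` vertices miss at least `N / 4` slots. By the condition on `Z`, each of these
bad vertices `z` can be absorbed into its own segment `j` as `A j = z`, with a fresh partner as
`C j` and with `D j = b j`. The remaining vertices fill the remaining slots by Hall's theorem: a
set of slots with a smaller neighbourhood is missed entirely by some good vertex, so it has
fewer than `N / 4` slots, while each single slot sees almost all vertices.
-/

open Finset

section Combinatorics

variable {ι α : Type*} [DecidableEq α]

theorem exists_injOn_mem_of_hall [Nonempty α] {s : Finset ι} {A : ι → Finset α}
    (hall : ∀ t ⊆ s, #t ≤ #(t.biUnion A)) :
    ∃ f : ι → α, Set.InjOn f s ∧ ∀ i ∈ s, f i ∈ A i := by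
  classical
  obtain ⟨g, hg, hgA⟩ := (all_card_le_biUnion_card_iff_exists_injective fun i : s => A i).1
    fun t => by
      have hts : t.map (Function.Embedding.subtype _) ⊆ s := by
        intro x hx
        obtain ⟨y, -, rfl⟩ := mem_map.1 hx
        exact y.2
      simpa [map_eq_image, image_biUnion, card_image_of_injective _ Subtype.val_injective]
        using hall _ hts
  refine ⟨fun i => if h : i ∈ s then g ⟨i, h⟩ else Classical.arbitrary α, ?_,
    fun i hi => ?_⟩
  · intro i hi j hj hij
    simp only [dif_pos (mem_coe.1 hi), dif_pos (mem_coe.1 hj)] at hij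
    exact congrArg Subtype.val (hg hij)
  · simpa [dif_pos hi] using hgA ⟨i, hi⟩

theorem exists_injOn_mem_of_card_le [Nonempty α] {s : Finset ι} {A : ι → Finset α}
    (hA : ∀ i ∈ s, #s ≤ #(A i)) :
    ∃ f : ι → α, Set.InjOn f s ∧ ∀ i ∈ s, f i ∈ A i := by
  refine exists_injOn_mem_of_hall fun t ht => ?_
  obtain rfl | ⟨i, hi⟩ := t.eq_empty_or_nonempty
  · simp
  · exact (card_le_card ht).trans <| (hA i (ht hi)).trans <|
      card_le_card <| subset_biUnion_of_mem A hi

theorem card_filter_mul_le_sum (s : Finset ι) (w : ι → ℕ) (θ : ℕ) :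
    #(s.filter fun i => θ ≤ w i) * θ ≤ ∑ i ∈ s, w i :=
  calc #(s.filter fun i => θ ≤ w i) * θ ≤ ∑ i ∈ s.filter fun i => θ ≤ w i, w i := by
        simpa using card_nsmul_le_sum _ w θ fun i hi => (mem_filter.1 hi).2
    _ ≤ ∑ i ∈ s, w i := sum_le_sum_of_subset (filter_subset _ _)

theorem card_filter_div_two_notMem {N : ℕ} {s : Finset ℕ} (hs : s ⊆ range N) :
    #((range (2 * N)).filter fun r => r / 2 ∉ s) = 2 * (N - #s) := by
  rw [card_nbij' (fun r => (r / 2, r % 2)) (fun p => 2 * p.1 + p.2)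
    (t := (range N \ s) ×ˢ range 2)]
  · rw [card_product, card_sdiff_of_subset hs, card_range, card_range, mul_comm]
  · intro r hr
    simp only [coe_filter, mem_range, Set.mem_ofPred_eq, coe_product, coe_sdiff, coe_range,
      Set.mem_prod, Set.mem_sdiff, Set.mem_Iio, mem_coe] at hr ⊢
    exact ⟨⟨by omega, hr.2⟩, Nat.mod_lt _ two_pos⟩
  · intro p hp
    simp only [coe_filter, mem_range, Set.mem_ofPred_eq, coe_product, coe_sdiff, coe_range,
      Set.mem_prod, Set.mem_sdiff, Set.mem_Iio, mem_coe] at hp ⊢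
    exact ⟨by omega, by rw [show (2 * p.1 + p.2) / 2 = p.1 by omega]; exact hp.1.2⟩
  · intro r _
    simp only
    omega
  · intro p hp
    simp only [coe_product, coe_range, Set.mem_prod, Set.mem_Iio] at hp
    simp only [Prod.ext_iff]
    omega

theorem exists_image_range_eq_of_ne {s : Finset α} {a b : α} (ha : a ∈ s) (hb : b ∈ s)
    (hab : a ≠ b) :
    ∃ u : ℕ → α, (range #s).image u = s ∧ u 0 = a ∧ u (#s - 1) = b := by
  set L := a :: ((s.erase a).erase b).toList ++ [b]
  have hL : L.length = #s := by
    have h2 : 2 ≤ #s := by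
      simpa [card_pair hab] using card_le_card (insert_subset ha (singleton_subset_iff.2 hb))
    simp [L, card_erase_of_mem (mem_erase.2 ⟨hab.symm, hb⟩), card_erase_of_mem ha]
    omega
  have hmem : ∀ y, y ∈ L ↔ y ∈ s := by
    intro y
    simp only [L, List.cons_append, List.mem_cons, List.mem_append, mem_toList, mem_erase,
      List.not_mem_nil, or_false]
    constructor
    · rintro (rfl | ⟨-, -, hy⟩ | rfl) <;> assumption
    · tauto
  refine ⟨fun i => L.getD i a, ?_, rfl, ?_⟩
  · ext y
    rw [← hmem, List.mem_iff_getElem, mem_image, ← hL]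
    simp only [mem_range]
    constructor
    · rintro ⟨i, hi, rfl⟩
      exact ⟨i, hi, (List.getD_eq_getElem _ _ hi).symm⟩
    · rintro ⟨i, hi, rfl⟩
      exact ⟨i, hi, List.getD_eq_getElem _ _ hi⟩
  · rw [← hL]
    simp [L]

end Combinatorics

section SegmentPath

variable {α : Type*}

def segmentPath (u A C D : ℕ → α) (r : ℕ) : α :=
  match r % 4 with
  | 0 => u (r / 4)
  | 1 => A (r / 4)
  | 2 => C (r / 4)
  | _ => D (r / 4)

variable (u A C D : ℕ → α) (j : ℕ)

theorem segmentPath_four_mul : segmentPath u A C D (4 * j) = u j := by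
  simp [segmentPath]

theorem segmentPath_four_mul_add_one : segmentPath u A C D (4 * j + 1) = A j := by
  simp [segmentPath, Nat.add_mod, Nat.add_div]

theorem segmentPath_four_mul_add_two : segmentPath u A C D (4 * j + 2) = C j := by
  simp [segmentPath, Nat.add_mod, Nat.add_div]

theorem segmentPath_four_mul_add_three : segmentPath u A C D (4 * j + 3) = D j := by
  simp [segmentPath, Nat.add_mod, Nat.add_div]

end SegmentPath

section LoosePath

variable {α : Type*} [DecidableEq α] {H : Finset (Finset α)}

theorem exists_loosePath_of_segments {V : Finset α} {N : ℕ} (hV : #V = 4 * N + 1)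
    {u A C D : ℕ → α}
    (hAC : ∀ j < N, {u j, A j, C j} ∈ H) (hCD : ∀ j < N, {u (j + 1), C j, D j} ∈ H)
    (hcover : ∀ y ∈ V, (∃ j ≤ N, u j = y) ∨ ∃ j < N, A j = y ∨ C j = y ∨ D j = y) :
    ∃ (k : ℕ) (v : ℕ → α), IsLoosePath H k v ∧ pathVerts k v = V ∧
      v 0 = u 0 ∧ v (2 * k) = u N := by
  have hsub : V ⊆ pathVerts (2 * N) (segmentPath u A C D) := by
    intro y hy
    simp only [pathVerts, mem_image, mem_range]
    rcases hcover y hy with ⟨j, hj, rfl⟩ | ⟨j, hj, rfl | rfl | rfl⟩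
    · exact ⟨4 * j, by omega, segmentPath_four_mul ..⟩
    · exact ⟨4 * j + 1, by omega, segmentPath_four_mul_add_one ..⟩
    · exact ⟨4 * j + 2, by omega, segmentPath_four_mul_add_two ..⟩
    · exact ⟨4 * j + 3, by omega, segmentPath_four_mul_add_three ..⟩
  have hP : pathVerts (2 * N) (segmentPath u A C D) = V := by
    refine (eq_of_subset_of_card_le hsub ?_).symm
    rw [hV, pathVerts]
    exact card_image_le.trans (by simp; omega)
  refine ⟨2 * N, segmentPath u A C D, ⟨?_, fun i hi => ?_⟩, hP,
    segmentPath_four_mul u A C D 0, ?_⟩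
  · have hcard := hP ▸ hV
    rw [pathVerts, show 4 * N + 1 = #(range (2 * (2 * N) + 1)) by simp; ring] at hcard
    simpa using card_image_iff.1 hcard
  · obtain ⟨j, rfl | rfl⟩ := Nat.even_or_odd' i
    · rw [show 2 * (2 * j) = 4 * j by ring, segmentPath_four_mul, segmentPath_four_mul_add_one,
        segmentPath_four_mul_add_two]
      exact hAC j (by omega)
    · rw [show 2 * (2 * j + 1) = 4 * j + 2 by ring, show 4 * j + 2 + 1 = 4 * j + 3 by ring,
        show 4 * j + 2 + 2 = 4 * (j + 1) by ring, segmentPath_four_mul_add_two,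
        segmentPath_four_mul_add_three, segmentPath_four_mul]
      have hrot : ({C j, D j, u (j + 1)} : Finset α) = {u (j + 1), C j, D j} := by
        ext
        simp only [mem_insert, mem_singleton]
        tauto
      exact hrot ▸ hCD j (by omega)
  · rw [show 2 * (2 * N) = 4 * N by ring]
    exact segmentPath_four_mul ..

end LoosePath

section Links

variable {α : Type*} [DecidableEq α] (H : Finset (Finset α)) (X Z : Finset α)

def missingLink (x z : α) : Finset α := (Z.erase z).filter fun w => {x, z, w} ∉ H

def badMiddles (x : α) : Finset α := Z.filter fun b => #Z ≤ 100 * #(missingLink H Z x b)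

def badHosts (z : α) : Finset α := X.filter fun x => #Z ≤ 4 * #(missingLink H Z x z)

variable {H X Z}

theorem mem_of_notMem_missingLink {x z w : α} (hw : w ∈ Z) (hwz : w ≠ z)
    (h : w ∉ missingLink H Z x z) : {x, z, w} ∈ H := by
  by_contra hn
  exact h (mem_filter.2 ⟨mem_erase.2 ⟨hwz, hw⟩, hn⟩)

theorem card_filter_notMem_le_card_missingLink (x z : α) :
    #(Z.filter fun w => {x, z, w} ∉ H) ≤ #(missingLink H Z x z) + 1 := by
  refine (card_le_card fun w hw => ?_).trans (card_insert_le z _)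
  rw [mem_filter] at hw
  rw [mem_insert, missingLink, mem_filter, mem_erase]
  tauto

theorem sum_card_missingLink_le (x : α) :
    ∑ z ∈ Z, #(missingLink H Z x z) ≤
      2 * #((Z.powersetCard 2).filter fun p => insert x p ∉ H) := by
  set P := (Z.powersetCard 2).filter fun p => insert x p ∉ H
  have hlink : ∀ z ∈ Z, #(missingLink H Z x z) ≤ #(P.filter (z ∈ ·)) := by
    intro z hz
    refine card_le_card_of_injOn (fun w => {z, w}) (fun w hw => ?_) fun w hw w' hw' h => ?_
    · simp only [missingLink, coe_filter, mem_erase, Set.mem_ofPred_eq] at hw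
      simp only [P, mem_coe, mem_filter, mem_powersetCard, mem_insert_self, and_true]
      exact ⟨⟨insert_subset hz (singleton_subset_iff.2 hw.1.2), card_pair (Ne.symm hw.1.1)⟩,
        hw.2⟩
    · have : w ∈ ({z, w'} : Finset α) := by
        rw [← show ({z, w} : Finset α) = {z, w'} from h]
        simp
      simp only [mem_insert, mem_singleton] at this
      exact this.resolve_left (mem_erase.1 (mem_filter.1 hw).1).1
  calc ∑ z ∈ Z, #(missingLink H Z x z)
      ≤ ∑ z ∈ Z, #(P.filter (z ∈ ·)) := sum_le_sum hlink
    _ = ∑ p ∈ P, #(Z.filter (· ∈ p)) := sum_card_bipartiteAbove_eq_sum_card_bipartiteBelow _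
    _ = ∑ _p ∈ P, 2 := sum_congr rfl fun p hp => by
      obtain ⟨hpZ, hp2⟩ := mem_powersetCard.1 (mem_filter.1 hp).1
      rw [filter_mem_eq_inter, inter_eq_right.2 hpZ, hp2]
    _ = 2 * #P := by rw [sum_const, smul_eq_mul, mul_comm]

theorem sum_card_missingLink_eq (z : α) :
    ∑ x ∈ X, #(missingLink H Z x z) =
      #((X ×ˢ Z.erase z).filter fun q => {z, q.1, q.2} ∉ H) := by
  simp only [card_filter, sum_product, missingLink, insert_comm z]

theorem card_badMiddles_le {x : α}
    (hx : 10000 * #((Z.powersetCard 2).filter fun p => insert x p ∉ H) ≤ (#Z).choose 2) :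
    100 * #(badMiddles H Z x) ≤ #Z := by
  obtain hZ | hZ := (#Z).eq_zero_or_pos
  · simp [card_eq_zero.1 hZ, badMiddles]
  have hchoose : 2 * (#Z).choose 2 ≤ #Z * #Z := by
    rw [Nat.choose_two_right]
    exact (Nat.mul_div_le _ 2).trans (Nat.mul_le_mul_left _ (Nat.sub_le _ 1))
  have hmarkov : #(badMiddles H Z x) * #Z ≤ 100 * ∑ b ∈ Z, #(missingLink H Z x b) := by
    rw [mul_sum]
    exact card_filter_mul_le_sum Z _ #Z
  have hsum := sum_card_missingLink_le (H := H) (Z := Z) x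
  refine Nat.le_of_mul_le_mul_right ?_ hZ
  nlinarith

theorem card_badHosts_le {z : α} (hZ : 0 < #Z)
    (hz : 10000 * #((X ×ˢ Z.erase z).filter fun q => {z, q.1, q.2} ∉ H) ≤ #X * #Z) :
    2500 * #(badHosts H X Z z) ≤ #X := by
  have hmarkov : #(badHosts H X Z z) * #Z ≤ 4 * ∑ x ∈ X, #(missingLink H Z x z) := by
    rw [mul_sum]
    exact card_filter_mul_le_sum X _ #Z
  rw [sum_card_missingLink_eq] at hmarkov
  refine Nat.le_of_mul_le_mul_right ?_ hZ
  nlinarith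

end Links

section Slots

/-! Slot `r < 2 * N` is the position `A (r / 2)` for even `r` and `D (r / 2)` for odd `r`; its
vertex of `X` is `u ((r + 1) / 2)` and its middle vertex is `b (r / 2)`. -/

variable {α : Type*} [DecidableEq α] {H : Finset (Finset α)} {X Z : Finset α} {N : ℕ}
  {u b : ℕ → α}

variable (H N u b) in
def missedSlots (z : α) : Finset ℕ :=
  (range (2 * N)).filter fun r => {u ((r + 1) / 2), b (r / 2), z} ∉ H

theorem exists_middles [Nonempty α] (hZ : #Z = 3 * N)
    (hbad : ∀ j ≤ N, 100 * #(badMiddles H Z (u j)) ≤ #Z) :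
    ∃ b : ℕ → α, Set.InjOn b (range N) ∧ (∀ j < N, b j ∈ Z) ∧
      ∀ r < 2 * N, 100 * #(missingLink H Z (u ((r + 1) / 2)) (b (r / 2))) < #Z := by
  obtain ⟨b, hinj, hb⟩ := exists_injOn_mem_of_card_le
    (s := range N) (A := fun j => Z \ (badMiddles H Z (u j) ∪ badMiddles H Z (u (j + 1))))
    fun j hj => by
      have h₁ := hbad j (by simp at hj; omega)
      have h₂ := hbad (j + 1) (by simp at hj; omega)
      have := le_card_sdiff (badMiddles H Z (u j) ∪ badMiddles H Z (u (j + 1))) Z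
      have := card_union_le (badMiddles H Z (u j)) (badMiddles H Z (u (j + 1)))
      simp only [card_range]
      omega
  have hbZ : ∀ j < N, b j ∈ Z := fun j hj => (mem_sdiff.1 (hb j (mem_range.2 hj))).1
  refine ⟨b, hinj, hbZ, fun r hr => ?_⟩
  have hgood := (mem_sdiff.1 (hb (r / 2) (mem_range.2 (by omega)))).2
  have hnot : b (r / 2) ∉ badMiddles H Z (u ((r + 1) / 2)) := by
    rcases (by omega : (r + 1) / 2 = r / 2 ∨ (r + 1) / 2 = r / 2 + 1) with h | h <;>
      rw [h] <;> simp_all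
  simp only [badMiddles, mem_filter, not_and, not_le] at hnot
  exact hnot (hbZ _ (by omega))

theorem card_filter_missedSlots_le (hZ : #Z = 3 * N)
    (hb : ∀ r < 2 * N, 100 * #(missingLink H Z (u ((r + 1) / 2)) (b (r / 2))) < #Z) :
    100 * #(Z.filter fun z => N ≤ 4 * #(missedSlots H N u b z)) ≤ 24 * N + 792 := by
  have hsum : 100 * ∑ z ∈ Z, #(missedSlots H N u b z) ≤ 2 * N * (3 * N + 99) := by
    have hswap : ∑ z ∈ Z, #(missedSlots H N u b z) =
        ∑ r ∈ range (2 * N), #(Z.filter fun z => {u ((r + 1) / 2), b (r / 2), z} ∉ H) := by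
      simp only [missedSlots, card_filter]
      exact sum_comm
    rw [hswap, mul_sum]
    calc ∑ r ∈ range (2 * N), 100 * #(Z.filter fun z => {u ((r + 1) / 2), b (r / 2), z} ∉ H)
        ≤ ∑ _r ∈ range (2 * N), (3 * N + 99) := sum_le_sum fun r hr => by
          have := card_filter_notMem_le_card_missingLink (H := H) (Z := Z)
            (u ((r + 1) / 2)) (b (r / 2))
          have := hb r (mem_range.1 hr)
          omega
      _ = 2 * N * (3 * N + 99) := by simp
  have hmarkov := card_filter_mul_le_sum Z (fun z => 4 * #(missedSlots H N u b z)) N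
  rw [← mul_sum] at hmarkov
  obtain hN | hN := N.eq_zero_or_pos
  · simp_all
  refine Nat.le_of_mul_le_mul_right ?_ hN
  nlinarith

theorem exists_slot_matching [Nonempty α] {S : Finset ℕ} {W : Finset α}
    (hS : S ⊆ range (2 * N)) (hW : W ⊆ Z) (hcard : #S = #W)
    (hb : ∀ r < 2 * N, 100 * #(missingLink H Z (u ((r + 1) / 2)) (b (r / 2))) < #Z)
    (hgood : ∀ z ∈ W, 4 * #(missedSlots H N u b z) < N)
    (hlarge : 100 * N + 4 * #Z + 400 ≤ 400 * #W) :
    ∃ f : ℕ → α, S.image f = W ∧ ∀ r ∈ S, {u ((r + 1) / 2), b (r / 2), f r} ∈ H := by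
  set nbrs : ℕ → Finset α := fun r => W.filter fun z => {u ((r + 1) / 2), b (r / 2), z} ∈ H
  obtain ⟨f, hinj, hf⟩ := exists_injOn_mem_of_hall (s := S) (A := nbrs) fun sf hsf => by
    by_contra! hlt
    obtain ⟨r₀, hr₀⟩ : sf.Nonempty := card_pos.1 (by omega)
    have hsub : sf.biUnion nbrs ⊆ W := biUnion_subset.2 fun _ _ => filter_subset _ _
    obtain ⟨z, hz⟩ : (W \ sf.biUnion nbrs).Nonempty := by
      rw [← card_pos, card_sdiff_of_subset hsub]
      have := card_le_card hsf
      omega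
    obtain ⟨hzW, hz⟩ := mem_sdiff.1 hz
    have hmissed : sf ⊆ missedSlots H N u b z := fun r hr => mem_filter.2
      ⟨hS (hsf hr), fun hadj => hz (mem_biUnion.2 ⟨r, hr, mem_filter.2 ⟨hzW, hadj⟩⟩)⟩
    have hdeg :
        #W ≤ #(nbrs r₀) + #(missingLink H Z (u ((r₀ + 1) / 2)) (b (r₀ / 2))) + 1 := by
      simp only [nbrs]
      have := card_filter_add_card_filter_not (s := W)
        (p := fun z => {u ((r₀ + 1) / 2), b (r₀ / 2), z} ∈ H)
      have := (card_le_card (filter_subset_filter _ hW)).trans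
        (card_filter_notMem_le_card_missingLink (H := H) (u ((r₀ + 1) / 2)) (b (r₀ / 2)))
      omega
    have := card_le_card (subset_biUnion_of_mem nbrs hr₀)
    have := card_le_card hmissed
    have := hgood z hzW
    have := hb r₀ (mem_range.1 (hS (hsf hr₀)))
    omega
  have himage : S.image f ⊆ W := image_subset_iff.2 fun r hr => (mem_filter.1 (hf r hr)).1
  exact ⟨f, eq_of_subset_of_card_le himage (by rw [card_image_of_injOn hinj, hcard]),
    fun r hr => (mem_filter.1 (hf r hr)).2⟩

end Slots

section Absorption

variable {α : Type*} [DecidableEq α] {H : Finset (Finset α)} {Z : Finset α}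

theorem exists_hosts {β : Type*} {T : Finset β} {N : ℕ} {u : ℕ → α}
    (hu : Set.InjOn u (range N)) (bad : β → Finset α) (hT : ∀ z ∈ T, #T + #(bad z) ≤ N) :
    ∃ host : β → ℕ, Set.InjOn host T ∧
      ∀ z ∈ T, host z < N ∧ u (host z) ∉ bad z := by
  obtain ⟨host, hinj, hhost⟩ := exists_injOn_mem_of_card_le
    (s := T) (A := fun z => (range N).filter fun j => u j ∉ bad z) fun z hz => by
      have hbad : #((range N).filter fun j => u j ∈ bad z) ≤ #(bad z) :=
        card_le_card_of_injOn u (fun j hj => (mem_filter.1 hj).2)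
          (hu.mono (coe_subset.2 (filter_subset _ _)))
      have := card_filter_add_card_filter_not (s := range N) (p := fun j => u j ∈ bad z)
      have := hT z hz
      simp only [card_range] at *
      omega
  exact ⟨host, hinj, fun z hz => by simpa using hhost z hz⟩

theorem exists_partners [Nonempty α] {T W : Finset α} (hW : W ⊆ Z) (x y c : α → α)
    (hTW : ∀ z ∈ T, z ∉ W ∧ c z ∉ W)
    (hcard : ∀ z ∈ T,
      #T + #(missingLink H Z (x z) z) + #(missingLink H Z (y z) (c z)) ≤ #W) :
    ∃ w : α → α, Set.InjOn w T ∧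
      ∀ z ∈ T, w z ∈ W ∧ {x z, z, w z} ∈ H ∧ {y z, c z, w z} ∈ H := by
  have hpool : ∀ z ∈ T,
      #T ≤ #((W \ missingLink H Z (x z) z) \ missingLink H Z (y z) (c z)) := fun z hz => by
    have := le_card_sdiff (missingLink H Z (x z) z) W
    have := le_card_sdiff (missingLink H Z (y z) (c z)) (W \ missingLink H Z (x z) z)
    have := hcard z hz
    omega
  obtain ⟨w, hinj, hw⟩ := exists_injOn_mem_of_card_le hpool
  refine ⟨w, hinj, fun z hz => ?_⟩
  obtain ⟨⟨hwW, hw₁⟩, hw₂⟩ := mem_sdiff.1 (hw z hz) |>.imp_left mem_sdiff.1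
  have hne : ∀ v, v ∉ W → w z ≠ v := fun v hv h => hv (h ▸ hwW)
  exact ⟨hwW, mem_of_notMem_missingLink (hW hwW) (hne _ (hTW z hz).1) hw₁,
    mem_of_notMem_missingLink (hW hwW) (hne _ (hTW z hz).2) hw₂⟩

theorem exists_segments [Nonempty α] {T : Finset α} {S : Finset ℕ} {N : ℕ} {u b : ℕ → α}
    {host : α → ℕ} {w : α → α} {f : ℕ → α}
    (hhost : Set.InjOn host T) (hhostN : ∀ z ∈ T, host z < N)
    (hw : ∀ z ∈ T, {u (host z), z, w z} ∈ H ∧ {u (host z + 1), b (host z), w z} ∈ H)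
    (hS : S = (range (2 * N)).filter fun r => r / 2 ∉ T.image host)
    (hf : ∀ r ∈ S, {u ((r + 1) / 2), b (r / 2), f r} ∈ H)
    (hcover : ∀ z ∈ Z,
      (∃ j < N, b j = z) ∨ z ∈ T ∨ z ∈ T.image w ∨ z ∈ S.image f) :
    ∃ A C D : ℕ → α, (∀ j < N, {u j, A j, C j} ∈ H) ∧
      (∀ j < N, {u (j + 1), C j, D j} ∈ H) ∧
      ∀ z ∈ Z, ∃ j < N, A j = z ∨ C j = z ∨ D j = z := by
  set guest := Function.invFunOn host T
  have hguest : ∀ j ∈ T.image host, guest j ∈ T ∧ host (guest j) = j := by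
    intro j hj
    obtain ⟨z, hz, rfl⟩ := mem_image.1 hj
    exact ⟨Function.invFunOn_mem ⟨z, hz, rfl⟩, Function.invFunOn_eq ⟨z, hz, rfl⟩⟩
  have hguest_host : ∀ z ∈ T, guest (host z) = z := fun z hz => hhost.leftInvOn_invFunOn hz
  have hslot : ∀ r < 2 * N, r / 2 ∉ T.image host → {u ((r + 1) / 2), b (r / 2), f r} ∈ H :=
    fun r hr hr' => hf r (hS ▸ mem_filter.2 ⟨mem_range.2 hr, hr'⟩)
  refine ⟨fun j => if j ∈ T.image host then guest j else f (2 * j),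
    fun j => if j ∈ T.image host then w (guest j) else b j,
    fun j => if j ∈ T.image host then b j else f (2 * j + 1), fun j hj => ?_, fun j hj => ?_,
    fun z hz => ?_⟩
  · by_cases hj' : j ∈ T.image host
    · obtain ⟨hgT, hgj⟩ := hguest j hj'
      simpa only [if_pos hj', hgj] using (hw _ hgT).1
    · simp only [if_neg hj']
      have := hslot (2 * j) (by omega) (by simpa using hj')
      simpa [show (2 * j + 1) / 2 = j by omega, pair_comm] using this
  · by_cases hj' : j ∈ T.image host
    · obtain ⟨hgT, hgj⟩ := hguest j hj'
      simpa only [if_pos hj', hgj, pair_comm] using (hw _ hgT).2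
    · simp only [if_neg hj']
      have := hslot (2 * j + 1) (by omega)
        (by simpa [show (2 * j + 1) / 2 = j by omega] using hj')
      simpa [show (2 * j + 1 + 1) / 2 = j + 1 by omega, show (2 * j + 1) / 2 = j by omega]
        using this
  · rcases hcover z hz with ⟨j, hj, rfl⟩ | hzT | hzw | hzf
    · refine ⟨j, hj, ?_⟩
      by_cases hj' : j ∈ T.image host <;> simp [hj']
    · refine ⟨host z, hhostN z hzT, Or.inl ?_⟩
      simp [mem_image_of_mem host hzT, hguest_host z hzT]
    · obtain ⟨z', hz', rfl⟩ := mem_image.1 hzw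
      refine ⟨host z', hhostN z' hz', Or.inr (Or.inl ?_)⟩
      simp [mem_image_of_mem host hz', hguest_host z' hz']
    · obtain ⟨r, hr, rfl⟩ := mem_image.1 hzf
      obtain ⟨hr, hr'⟩ := mem_filter.1 (hS ▸ hr)
      refine ⟨r / 2, by simp at hr; omega, ?_⟩
      obtain ⟨j, rfl | rfl⟩ := Nat.even_or_odd' r
      · left
        simp_all
      · right; right
        simp_all [show (2 * j + 1) / 2 = j by omega]

end Absorption

section Construction

variable {α : Type*} [DecidableEq α] {H : Finset (Finset α)} {X Z : Finset α} {N : ℕ}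
  {u b : ℕ → α}

theorem exists_absorbers [Nonempty α] {B T : Finset α} (hN : 100 ≤ N) (hX : #X = N + 1)
    (hZ : #Z = 3 * N) (huX : ∀ j ≤ N, u j ∈ X) (huinj : Set.InjOn u (range N))
    (hb : ∀ r < 2 * N, 100 * #(missingLink H Z (u ((r + 1) / 2)) (b (r / 2))) < #Z)
    (hBZ : B ⊆ Z) (hB : #B = N) (hbB : ∀ j < N, b j ∈ B)
    (hZdeg : ∀ z ∈ Z,
      10000 * #((X ×ˢ Z.erase z).filter fun q => {z, q.1, q.2} ∉ H) ≤ #X * #Z)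
    (hTZB : T ⊆ Z \ B) (hT : 100 * #T ≤ 24 * N + 792) :
    ∃ (host : α → ℕ) (w : α → α), Set.InjOn host T ∧ (∀ z ∈ T, host z < N) ∧
      Set.InjOn w T ∧ ∀ z ∈ T, w z ∈ (Z \ B) \ T ∧
        {u (host z), z, w z} ∈ H ∧ {u (host z + 1), b (host z), w z} ∈ H := by
  obtain ⟨host, hhost, hhostN⟩ := exists_hosts huinj (badHosts H X Z) fun z hz => by
    have := card_badHosts_le (by omega) (hZdeg z (mem_sdiff.1 (hTZB hz)).1)
    omega
  have hW : #((Z \ B) \ T) = 2 * N - #T := by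
    rw [card_sdiff_of_subset hTZB, card_sdiff_of_subset hBZ, hZ, hB]
    omega
  obtain ⟨w, hwinj, hw⟩ := exists_partners (H := H) (Z := Z) (sdiff_subset.trans sdiff_subset)
    (fun z => u (host z)) (fun z => u (host z + 1)) (fun z => b (host z))
    (fun z hz => ⟨fun h => (mem_sdiff.1 h).2 hz,
      fun h => (mem_sdiff.1 (mem_sdiff.1 h).1).2 (hbB _ (hhostN z hz).1)⟩)
    fun z hz => by
      have hlt := (hhostN z hz).1
      have hgood := (hhostN z hz).2
      simp only [badHosts, mem_filter, not_and, not_le] at hgood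
      have h₁ := hgood (huX _ (by omega))
      have h₂ := hb (2 * host z + 1) (by omega)
      rw [show (2 * host z + 1 + 1) / 2 = host z + 1 by omega,
        show (2 * host z + 1) / 2 = host z by omega] at h₂
      omega
  exact ⟨host, w, hhost, fun z hz => (hhostN z hz).1, hwinj, hw⟩

theorem exists_segments_of_middles [Nonempty α] (hN : 100 ≤ N) (hX : #X = N + 1)
    (hZ : #Z = 3 * N) (huX : ∀ j ≤ N, u j ∈ X) (huinj : Set.InjOn u (range N))
    (hbinj : Set.InjOn b (range N)) (hbZ : ∀ j < N, b j ∈ Z)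
    (hb : ∀ r < 2 * N, 100 * #(missingLink H Z (u ((r + 1) / 2)) (b (r / 2))) < #Z)
    (hZdeg : ∀ z ∈ Z,
      10000 * #((X ×ˢ Z.erase z).filter fun q => {z, q.1, q.2} ∉ H) ≤ #X * #Z) :
    ∃ A C D : ℕ → α, (∀ j < N, {u j, A j, C j} ∈ H) ∧
      (∀ j < N, {u (j + 1), C j, D j} ∈ H) ∧
      ∀ z ∈ Z, ∃ j < N, A j = z ∨ C j = z ∨ D j = z := by
  set B := (range N).image b
  have hBZ : B ⊆ Z := image_subset_iff.2 fun j hj => hbZ j (mem_range.1 hj)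
  have hB : #B = N := by rw [card_image_of_injOn hbinj, card_range]
  set T := (Z \ B).filter fun z => N ≤ 4 * #(missedSlots H N u b z)
  have hTZB : T ⊆ Z \ B := filter_subset _ _
  have hT : 100 * #T ≤ 24 * N + 792 :=
    (Nat.mul_le_mul_left _ (card_le_card (filter_subset_filter _ sdiff_subset))).trans
      (card_filter_missedSlots_le hZ hb)
  obtain ⟨host, w, hhost, hhostN, hwinj, hw⟩ := exists_absorbers hN hX hZ huX huinj hb hBZ hB
    (fun j hj => mem_image_of_mem b (mem_range.2 hj)) hZdeg hTZB hT
  set S := (range (2 * N)).filter fun r => r / 2 ∉ T.image host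
  have hS : #S = 2 * (N - #T) := by
    rw [card_filter_div_two_notMem (image_subset_iff.2 fun z hz => mem_range.2 (hhostN z hz)),
      card_image_of_injOn hhost]
  have hwT : T.image w ⊆ (Z \ B) \ T := image_subset_iff.2 fun z hz => (hw z hz).1
  have hW : #(((Z \ B) \ T) \ T.image w) = 2 * N - 2 * #T := by
    rw [card_sdiff_of_subset hwT, card_image_of_injOn hwinj, card_sdiff_of_subset hTZB,
      card_sdiff_of_subset hBZ, hB, hZ]
    omega
  obtain ⟨f, hfW, hf⟩ := exists_slot_matching (S := S) (W := ((Z \ B) \ T) \ T.image w)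
    (filter_subset _ _) (sdiff_subset.trans (sdiff_subset.trans sdiff_subset)) (by omega) hb
    (fun z hz => by
      obtain ⟨hzZB, hzT⟩ := mem_sdiff.1 (mem_sdiff.1 hz).1
      simpa [T, hzZB] using hzT)
    (by omega)
  refine exists_segments hhost hhostN (fun z hz => (hw z hz).2) rfl hf fun z hz => ?_
  by_cases hzB : z ∈ B
  · obtain ⟨j, hj, rfl⟩ := mem_image.1 hzB
    exact Or.inl ⟨j, mem_range.1 hj, rfl⟩
  by_cases hzT : z ∈ T
  · exact Or.inr (Or.inl hzT)
  by_cases hzw : z ∈ T.image w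
  · exact Or.inr (Or.inr (Or.inl hzw))
  exact Or.inr (Or.inr (Or.inr
    (hfW ▸ mem_sdiff.2 ⟨mem_sdiff.2 ⟨mem_sdiff.2 ⟨hz, hzB⟩, hzT⟩, hzw⟩)))

theorem exists_loosePath_of_dense (hd : Disjoint X Z) (hN : 100 ≤ N)
    (hX : #X = N + 1) (hZ : #Z = 3 * N)
    (hXdeg : ∀ x ∈ X,
      10000 * #((Z.powersetCard 2).filter fun p => insert x p ∉ H) ≤ (#Z).choose 2)
    (hZdeg : ∀ z ∈ Z,
      10000 * #((X ×ˢ Z.erase z).filter fun q => {z, q.1, q.2} ∉ H) ≤ #X * #Z)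
    {x₀ x₁ : α} (hx₀ : x₀ ∈ X) (hx₁ : x₁ ∈ X) (hne : x₀ ≠ x₁) :
    ∃ (k : ℕ) (v : ℕ → α), IsLoosePath H k v ∧ pathVerts k v = X ∪ Z ∧
      v 0 = x₀ ∧ v (2 * k) = x₁ := by
  have : Nonempty α := ⟨x₀⟩
  obtain ⟨u, hu, hu₀, hu₁⟩ := exists_image_range_eq_of_ne hx₀ hx₁ hne
  rw [hX] at hu hu₁
  have huX : ∀ j ≤ N, u j ∈ X := fun j hj =>
    hu ▸ mem_image_of_mem u (mem_range.2 (by omega))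
  have huinj : Set.InjOn u (range N) :=
    (card_image_iff.1 (by rw [hu, hX, card_range])).mono
      (coe_subset.2 (range_subset_range.2 (by omega)))
  obtain ⟨b, hbinj, hbZ, hb⟩ :=
    exists_middles hZ fun j hj => card_badMiddles_le (hXdeg _ (huX j hj))
  obtain ⟨A, C, D, hAC, hCD, hcover⟩ :=
    exists_segments_of_middles hN hX hZ huX huinj hbinj hbZ hb hZdeg
  obtain ⟨k, v, hv, hvV, hv₀, hv₁⟩ := exists_loosePath_of_segments
    (by rw [card_union_of_disjoint hd, hX, hZ]; ring) hAC hCD fun y hy => by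
      rcases mem_union.1 hy with hyX | hyZ
      · obtain ⟨j, hj, rfl⟩ := mem_image.1 (hu ▸ hyX)
        exact Or.inl ⟨j, by simp at hj; omega, rfl⟩
      · exact Or.inr (hcover y hyZ)
  exact ⟨k, v, hv, hvV, hv₀.trans hu₀, hv₁.trans (by simpa using hu₁)⟩

end Construction

theorem ten_thousand_mul_le_of_le_mul {ρ : ℝ} (hρ : ρ ≤ 1 / 10000) {c M : ℕ}
    (h : (c : ℝ) ≤ ρ * M) : 10000 * c ≤ M := by
  have : (10000 * c : ℝ) ≤ M := by nlinarith [(Nat.cast_nonneg M : (0 : ℝ) ≤ M)]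
  exact_mod_cast this

/-- For sufficiently small `ρ > 0` and sufficiently large `n`: if `V(H) = X ∪̇ Z` with
`|Z| = 3(|X| - 1)`, every `v ∈ X` misses at most `ρ C(|Z|,2)` pairs of `Z`, and every
`v ∈ Z` misses at most `ρ|X||Z|` pairs `(x, z) ∈ X × (Z \ {v})`, then for any two vertices
`x₀ ≠ x₁` of `X` there is a spanning loose path of `H` from `x₀` to `x₁`. -/
theorem stmt_14 :
    ∃ ρ₀ : ℝ, 0 < ρ₀ ∧ ∀ ρ : ℝ, 0 < ρ → ρ ≤ ρ₀ →
    ∃ n₀ : ℕ, ∀ n : ℕ, n > n₀ →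
    ∀ H : Finset (Finset (Fin n)), (∀ e ∈ H, e.card = 3) →
    ∀ X Z : Finset (Fin n), Disjoint X Z → X ∪ Z = Finset.univ →
    Z.card + 3 = 3 * X.card →
    (∀ v ∈ X, (((Z.powersetCard 2).filter (fun p => insert v p ∉ H)).card : ℝ)
        ≤ ρ * (Z.card.choose 2 : ℝ)) →
    (∀ v ∈ Z, (((X ×ˢ (Z.erase v)).filter
        (fun q => ({v, q.1, q.2} : Finset (Fin n)) ∉ H)).card : ℝ)
        ≤ ρ * (X.card : ℝ) * (Z.card : ℝ)) →
    ∀ x₀ x₁ : Fin n, x₀ ∈ X → x₁ ∈ X → x₀ ≠ x₁ →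
    ∃ (k : ℕ) (v : ℕ → Fin n), IsLoosePath H k v ∧ pathVerts k v = Finset.univ ∧
      v 0 = x₀ ∧ v (2 * k) = x₁ := by
  refine ⟨1 / 10000, by norm_num, fun ρ _ hρ => ⟨400, fun n hn H _ X Z hd hXZ hcard hXρ hZρ
    x₀ x₁ hx₀ hx₁ hne => ?_⟩⟩
  have hsize : #X + #Z = n := by
    rw [← card_union_of_disjoint hd, hXZ, card_univ, Fintype.card_fin]
  obtain ⟨k, v, hv, hvV, hv₀, hv₁⟩ := exists_loosePath_of_dense hd (N := #X - 1) (by omega)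
    (by omega) (by omega) (fun x hx => ten_thousand_mul_le_of_le_mul hρ (hXρ x hx))
    (fun z hz => ten_thousand_mul_le_of_le_mul hρ (by simpa [mul_assoc] using hZρ z hz))
    hx₀ hx₁ hne
  exact ⟨k, v, hv, hXZ ▸ hvV, hv₀, hv₁⟩
end

section
/- Let H be a 3-graph and let 𝒴 = {𝒴₁, …, 𝒴_m} be a 𝒴-tiling in H of maximum size (i.e., H contains no 𝒴-tiling with more than m copies). Let V' be the union of the vertex sets of 𝒴₁, …, 𝒴_m and U = V(H) \ V'. Then the number of edges of H with exactly one vertex in V' (and two vertices in U) is at most m·C(|U|,2) + 12·m·|U|. -/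
/-- `f` enumerates a `𝒴`-tiling of `H` with `m` members: the `4m` vertices
`f i j` (`i : Fin m`, `j : Fin 4`) are distinct and for each `i` the quadruple
`f i 0, f i 1, f i 2, f i 3` spans a copy of `𝒴` (edges `{f i 0, f i 1, f i 2}` and
`{f i 1, f i 2, f i 3}`). -/
def IsYTiling {α : Type*} [DecidableEq α] (H : Finset (Finset α)) (m : ℕ)
    (f : Fin m → Fin 4 → α) : Prop :=
  Function.Injective (fun p : Fin m × Fin 4 => f p.1 p.2) ∧
  ∀ i : Fin m, ({f i 0, f i 1, f i 2} : Finset α) ∈ H ∧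
    ({f i 1, f i 2, f i 3} : Finset α) ∈ H

/-- The set of vertices covered by the `𝒴`-tiling `f`. -/
def tilingVerts {α : Type*} [Fintype α] [DecidableEq α] (m : ℕ)
    (f : Fin m → Fin 4 → α) : Finset α :=
  Finset.univ.image (fun p : Fin m × Fin 4 => f p.1 p.2)

/-!
An edge with exactly one vertex `v` in `V'` is determined by the pair it spans in `U`, a pair
of the link of `v`. Call two link pairs of `v` sharing a vertex a cherry at `v`. If no vertex of
a copy `𝒴ᵢ` has a cherry in `U`, each of its four links is a matching on `U`. If some vertex `x`
of `𝒴ᵢ` has a cherry on `{a, b, c} ⊆ U`, then no other vertex `y` of `𝒴ᵢ` has a cherry in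
`U \ {a, b, c}`: the two cherries would be two disjoint copies of `𝒴` replacing `𝒴ᵢ`, against
maximality. So the link of `y` has at most `3|U|` pairs meeting `{a, b, c}` and at most `|U|/2`
others, while the link of `x` has at most `C(|U|, 2)` pairs.
-/

open Finset Function

section Uncurry
variable {ι κ β : Type*}

theorem injective_uncurry_iff {g : ι → κ → β} :
    Injective (uncurry g) ↔ (∀ i, Injective (g i)) ∧
      Pairwise fun i k => Disjoint (Set.range (g i)) (Set.range (g k)) := by
  constructor
  · intro h
    refine ⟨fun i l l' e => congrArg Prod.snd (h (a₁ := (i, l)) (a₂ := (i, l')) e), ?_⟩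
    intro i k hik
    refine Set.disjoint_left.2 ?_
    rintro _ ⟨l, rfl⟩ ⟨l', e⟩
    exact hik (congrArg Prod.fst (h (a₁ := (k, l')) (a₂ := (i, l)) e)).symm
  · rintro ⟨hinj, hdisj⟩ ⟨i, l⟩ ⟨k, l'⟩ (e : g i l = g k l')
    obtain rfl | hik := eq_or_ne i k
    · rw [hinj i e]
    · exact (Set.disjoint_left.1 (hdisj hik) ⟨l, rfl⟩ ⟨l', e.symm⟩).elim

end Uncurry

theorem Finset.exists_eq_pair_of_card_eq_two {α : Type*} [DecidableEq α] {p : Finset α}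
    (hp : #p = 2) {t : α} (ht : t ∈ p) : ∃ y ∈ p, y ≠ t ∧ p = {t, y} := by
  obtain ⟨y, hy⟩ := card_eq_one.1 (show #(p.erase t) = 1 by rw [card_erase_of_mem ht, hp])
  have hyp : y ∈ p.erase t := by simp [hy]
  exact ⟨y, mem_of_mem_erase hyp, ne_of_mem_erase hyp, by rw [← hy, insert_erase ht]⟩

section Hypergraph
variable {α : Type*} [DecidableEq α]

def IsYCopy (H : Finset (Finset α)) (q : Fin 4 → α) : Prop :=
  Injective q ∧ ({q 0, q 1, q 2} : Finset α) ∈ H ∧ ({q 1, q 2, q 3} : Finset α) ∈ H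

theorem isYTiling_iff {H : Finset (Finset α)} {m : ℕ} {f : Fin m → Fin 4 → α} :
    IsYTiling H m f ↔ (∀ i, IsYCopy H (f i)) ∧
      Pairwise fun i k => Disjoint (Set.range (f i)) (Set.range (f k)) := by
  rw [IsYTiling, show (fun p : Fin m × Fin 4 => f p.1 p.2) = uncurry f from rfl,
    injective_uncurry_iff]
  exact ⟨fun ⟨⟨hinj, hdisj⟩, he⟩ => ⟨fun i => ⟨hinj i, he i⟩, hdisj⟩,
    fun ⟨hY, hdisj⟩ => ⟨⟨fun i => (hY i).1, hdisj⟩, fun i => (hY i).2⟩⟩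

def link (H : Finset (Finset α)) (x : α) (S : Finset α) : Finset (Finset α) :=
  (S.powersetCard 2).filter fun p => insert x p ∈ H

/-- A cherry at `x` in `S`, i.e. edges `{x, a, b}` and `{x, b, c}` with distinct `a, b, c ∈ S`,
is exactly a copy of `𝒴` with `x` as its vertex `1` and its other vertices in `S`. -/
def HasCherry (H : Finset (Finset α)) (x : α) (S : Finset α) : Prop :=
  ∃ q : Fin 4 → α, IsYCopy H q ∧ q 1 = x ∧ ∀ l ≠ 1, q l ∈ S

section Link
variable {H : Finset (Finset α)} {x : α} {S : Finset α}

theorem mem_link {p : Finset α} : p ∈ link H x S ↔ (p ⊆ S ∧ #p = 2) ∧ insert x p ∈ H := by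
  rw [link, mem_filter, mem_powersetCard]

theorem card_link_le_choose : #(link H x S) ≤ (#S).choose 2 :=
  (card_filter_le _ _).trans (card_powersetCard 2 S).le

theorem hasCherry_of_mem_link (hx : x ∉ S) {t y z : α} (hyz : y ≠ z)
    (hy : {t, y} ∈ link H x S) (hz : {t, z} ∈ link H x S) : HasCherry H x S := by
  obtain ⟨⟨hyS, hy2⟩, hyH⟩ := mem_link.1 hy
  obtain ⟨⟨hzS, hz2⟩, hzH⟩ := mem_link.1 hz
  simp only [insert_subset_iff, singleton_subset_iff] at hyS hzS
  have hty : t ≠ y := fun h => by simp [h] at hy2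
  have htz : t ≠ z := fun h => by simp [h] at hz2
  have hxt : x ≠ t := fun h => hx (h ▸ hyS.1)
  have hxy : x ≠ y := fun h => hx (h ▸ hyS.2)
  have hxz : x ≠ z := fun h => hx (h ▸ hzS.2)
  refine ⟨![y, x, t, z], ⟨?_, ?_, ?_⟩, rfl, ?_⟩
  · intro a b hab
    fin_cases a <;> fin_cases b <;> simp_all [eq_comm]
  · simpa [show ({y, x, t} : Finset α) = {x, t, y} by rw [insert_comm, pair_comm]] using hyH
  · simpa using hzH
  · intro l hl
    fin_cases l <;> simp_all

theorem pairwiseDisjoint_link (hx : x ∉ S) (h : ¬HasCherry H x S) :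
    (link H x S : Set (Finset α)).PairwiseDisjoint id := by
  intro p hp p' hp' hpp'
  refine disjoint_left.2 fun t htp htp' => h ?_
  obtain ⟨y, -, -, rfl⟩ := exists_eq_pair_of_card_eq_two (mem_link.1 hp).1.2 htp
  obtain ⟨z, -, -, rfl⟩ := exists_eq_pair_of_card_eq_two (mem_link.1 hp').1.2 htp'
  exact hasCherry_of_mem_link hx (fun hyz => hpp' (by rw [hyz])) hp hp'

theorem card_link_mul_two_le (hx : x ∉ S) (h : ¬HasCherry H x S) : #(link H x S) * 2 ≤ #S :=
  calc #(link H x S) * 2 = ∑ p ∈ link H x S, #p := by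
        rw [sum_congr rfl fun p hp => (mem_link.1 hp).1.2, sum_const, smul_eq_mul]
    _ = #((link H x S).biUnion id) := (card_biUnion (pairwiseDisjoint_link hx h)).symm
    _ ≤ #S := card_le_card <| biUnion_subset.2 fun p hp => (mem_link.1 hp).1.1

theorem card_filter_link_not_disjoint_le (T : Finset α) :
    #((link H x S).filter fun p => ¬Disjoint p T) ≤ #T * #S := by
  calc #((link H x S).filter fun p => ¬Disjoint p T)
      ≤ #((T ×ˢ S).image fun ty => ({ty.1, ty.2} : Finset α)) := by
        refine card_le_card fun p hp => ?_
        obtain ⟨hpL, hpT⟩ := mem_filter.1 hp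
        obtain ⟨t, htp, htT⟩ := not_disjoint_iff.1 hpT
        obtain ⟨y, hyp, -, rfl⟩ := exists_eq_pair_of_card_eq_two (mem_link.1 hpL).1.2 htp
        exact mem_image.2 ⟨(t, y), mem_product.2 ⟨htT, (mem_link.1 hpL).1.1 hyp⟩, rfl⟩
    _ ≤ #T * #S := card_image_le.trans (card_product T S).le

theorem card_link_le_of_not_hasCherry_sdiff (hx : x ∉ S) {T : Finset α} (hT : #T ≤ 3)
    (h : ¬HasCherry H x (S \ T)) : #(link H x S) ≤ 4 * #S := by
  have hdisj : (link H x S).filter (fun p => Disjoint p T) ⊆ link H x (S \ T) := by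
    intro p hp
    obtain ⟨⟨⟨hpS, hp2⟩, hpH⟩, hpT⟩ := mem_filter.1 hp |>.imp_left mem_link.1
    exact mem_link.2 ⟨⟨subset_sdiff.2 ⟨hpS, hpT⟩, hp2⟩, hpH⟩
  have h₁ := card_link_mul_two_le (fun hx' => hx (mem_sdiff.1 hx').1) h
  have h₂ := card_filter_link_not_disjoint_le (H := H) (x := x) (S := S) T
  have h₃ : #(S \ T) ≤ #S := card_le_card sdiff_subset
  have h₄ : #T * #S ≤ 3 * #S := Nat.mul_le_mul_right _ hT
  have := card_le_card hdisj
  rw [← card_filter_add_card_filter_not (s := link H x S) (fun p => Disjoint p T)]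
  omega

end Link

theorem card_filter_card_inter_eq_one_le [Fintype α] {H : Finset (Finset α)}
    (hH : ∀ e ∈ H, #e = 3) (V : Finset α) :
    #(H.filter fun e => #(e ∩ V) = 1) ≤ ∑ v ∈ V, #(link H v Vᶜ) := by
  calc #(H.filter fun e => #(e ∩ V) = 1)
      ≤ #(V.biUnion fun v => (link H v Vᶜ).image (insert v)) := by
        refine card_le_card fun e he => ?_
        obtain ⟨heH, he1⟩ := mem_filter.1 he
        obtain ⟨v, hv⟩ := card_eq_one.1 he1
        obtain ⟨hve, hvV⟩ := mem_inter.1 (hv ▸ mem_singleton_self v)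
        have herase : e.erase v ⊆ Vᶜ := fun w hw => mem_compl.2 fun hwV => by
          have hw' : w ∈ e ∩ V := mem_inter.2 ⟨mem_of_mem_erase hw, hwV⟩
          exact ne_of_mem_erase hw (by rwa [hv, mem_singleton] at hw')
        refine mem_biUnion.2 ⟨v, hvV, mem_image.2 ⟨e.erase v, mem_link.2 ⟨⟨herase, ?_⟩, ?_⟩,
          insert_erase hve⟩⟩
        · rw [card_erase_of_mem hve, hH e heH]
        · rwa [insert_erase hve]
    _ ≤ ∑ v ∈ V, #((link H v Vᶜ).image (insert v)) := card_biUnion_le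
    _ ≤ ∑ v ∈ V, #(link H v Vᶜ) := sum_le_sum fun v _ => card_image_le

theorem mem_tilingVerts [Fintype α] {m : ℕ} {f : Fin m → Fin 4 → α} (i : Fin m) (j : Fin 4) :
    f i j ∈ tilingVerts m f :=
  mem_image.2 ⟨(i, j), mem_univ _, rfl⟩

namespace IsYTiling
variable [Fintype α] {H : Finset (Finset α)} {m : ℕ} {f : Fin m → Fin 4 → α}

theorem sum_tilingVerts {β : Type*} [AddCommMonoid β] (hf : IsYTiling H m f) (g : α → β) :
    ∑ v ∈ tilingVerts m f, g v = ∑ i, ∑ j, g (f i j) := by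
  rw [tilingVerts, sum_image fun p _ p' _ h => hf.1 h, ← Fintype.sum_prod_type']

theorem disjoint_range_of_mem_tilingVerts (hf : IsYTiling H m f) {i k : Fin m} (hki : k ≠ i)
    {q : Fin 4 → α} (hqV : ∀ l, q l ∈ tilingVerts m f → q l ∈ Set.range (f i)) :
    Disjoint (Set.range q) (Set.range (f k)) := by
  refine Set.disjoint_left.2 ?_
  rintro _ ⟨l, rfl⟩ ⟨l', hl'⟩
  exact Set.disjoint_left.1 ((isYTiling_iff.1 hf).2 hki) ⟨l', hl'⟩
    (hqV l (hl' ▸ mem_tilingVerts k l'))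

theorem exchange (hf : IsYTiling H m f) (i : Fin m) {q q' : Fin 4 → α}
    (hq : IsYCopy H q) (hq' : IsYCopy H q') (hqq' : Disjoint (Set.range q) (Set.range q'))
    (hqV : ∀ l, q l ∈ tilingVerts m f → q l ∈ Set.range (f i))
    (hq'V : ∀ l, q' l ∈ tilingVerts m f → q' l ∈ Set.range (f i)) :
    IsYTiling H (m + 1) (Fin.cons q' (update f i q)) := by
  obtain ⟨hY, hdisj⟩ := isYTiling_iff.1 hf
  have hY' : ∀ k, IsYCopy H (update f i q k) := fun k => by
    obtain rfl | hki := eq_or_ne k i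
    · rwa [update_self]
    · rw [update_of_ne hki]; exact hY k
  have hq'disj : ∀ k, Disjoint (Set.range q') (Set.range (update f i q k)) := fun k => by
    obtain rfl | hki := eq_or_ne k i
    · rw [update_self]; exact hqq'.symm
    · rw [update_of_ne hki]; exact hf.disjoint_range_of_mem_tilingVerts hki hq'V
  have hdisj' : Pairwise fun k k' =>
      Disjoint (Set.range (update f i q k)) (Set.range (update f i q k')) := by
    intro k k' hkk'
    obtain rfl | hki := eq_or_ne k i
    · rw [update_self, update_of_ne hkk'.symm]
      exact hf.disjoint_range_of_mem_tilingVerts hkk'.symm hqV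
    obtain rfl | hk'i := eq_or_ne k' i
    · rw [update_self, update_of_ne hkk']
      exact (hf.disjoint_range_of_mem_tilingVerts hkk' hqV).symm
    · rw [update_of_ne hki, update_of_ne hk'i]; exact hdisj hkk'
  refine isYTiling_iff.2 ⟨Fin.cases hq' fun k => hY' k, pairwise_fin_succ_iff.2 ?_⟩
  exact ⟨fun k => (hq'disj k).symm, hq'disj, fun k k' hkk' => hdisj' hkk'⟩

theorem not_hasCherry_sdiff (hf : IsYTiling H m f)
    (hmax : ∀ (m' : ℕ) (f' : Fin m' → Fin 4 → α), IsYTiling H m' f' → m' ≤ m)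
    {i : Fin m} {j j' : Fin 4} (hjj' : j ≠ j') {q : Fin 4 → α} (hq : IsYCopy H q)
    (hq1 : q 1 = f i j) (hqU : ∀ l ≠ 1, q l ∈ (tilingVerts m f)ᶜ) :
    ¬HasCherry H (f i j') ((tilingVerts m f)ᶜ \ {q 0, q 2, q 3}) := by
  rintro ⟨q', hq', hq'1, hq'U⟩
  have hne : f i j ≠ f i j' := fun h =>
    hjj' (congrArg Prod.snd (hf.1 (a₁ := (i, j)) (a₂ := (i, j')) h))
  have hV' : ∀ l ≠ 1, q' l ∉ tilingVerts m f := fun l hl =>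
    mem_compl.1 (mem_sdiff.1 (hq'U l hl)).1
  have hdisj : Disjoint (Set.range q) (Set.range q') := by
    refine Set.disjoint_left.2 ?_
    rintro _ ⟨l, rfl⟩ ⟨l', hl'⟩
    obtain rfl | hl := eq_or_ne l 1 <;> obtain rfl | hl'1 := eq_or_ne l' 1
    · exact hne (by rw [← hq1, ← hl', hq'1])
    · exact hV' l' hl'1 (hl' ▸ hq1 ▸ mem_tilingVerts i j)
    · exact mem_compl.1 (hqU l hl) (hl' ▸ hq'1 ▸ mem_tilingVerts i j')
    · refine (mem_sdiff.1 (hq'U l' hl'1)).2 (hl' ▸ ?_)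
      fin_cases l <;> simp_all
  have hrange : ∀ {r : Fin 4 → α} {j : Fin 4}, r 1 = f i j → (∀ l ≠ 1, r l ∉ tilingVerts m f) →
      ∀ l, r l ∈ tilingVerts m f → r l ∈ Set.range (f i) := fun hr1 hrV l hl => by
    obtain rfl | h := eq_or_ne l 1
    · exact ⟨_, hr1.symm⟩
    · exact absurd hl (hrV l h)
  have := hmax _ _ <| hf.exchange i hq hq' hdisj
    (hrange hq1 fun l hl => mem_compl.1 (hqU l hl)) (hrange hq'1 hV')
  omega

theorem exists_forall_ne_card_link_le (hf : IsYTiling H m f)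
    (hmax : ∀ (m' : ℕ) (f' : Fin m' → Fin 4 → α), IsYTiling H m' f' → m' ≤ m) (i : Fin m) :
    ∃ j₀, ∀ j ≠ j₀, #(link H (f i j) (tilingVerts m f)ᶜ) ≤ 4 * #(tilingVerts m f)ᶜ := by
  have hx : ∀ j, f i j ∉ (tilingVerts m f)ᶜ := fun j =>
    notMem_compl.2 (mem_tilingVerts i j)
  by_cases hcherry : ∃ j₀, HasCherry H (f i j₀) (tilingVerts m f)ᶜ
  · obtain ⟨j₀, q, hq, hq1, hqU⟩ := hcherry
    exact ⟨j₀, fun j hj => card_link_le_of_not_hasCherry_sdiff (hx j) card_le_three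
      (hf.not_hasCherry_sdiff hmax hj.symm hq hq1 hqU)⟩
  · push Not at hcherry
    refine ⟨0, fun j _ => ?_⟩
    have := card_link_mul_two_le (hx j) (hcherry j)
    omega

theorem sum_card_link_le (hf : IsYTiling H m f)
    (hmax : ∀ (m' : ℕ) (f' : Fin m' → Fin 4 → α), IsYTiling H m' f' → m' ≤ m) (i : Fin m) :
    ∑ j, #(link H (f i j) (tilingVerts m f)ᶜ) ≤
      (#(tilingVerts m f)ᶜ).choose 2 + 12 * #(tilingVerts m f)ᶜ := by
  obtain ⟨j₀, hj₀⟩ := hf.exists_forall_ne_card_link_le hmax i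
  calc ∑ j, #(link H (f i j) (tilingVerts m f)ᶜ)
      = #(link H (f i j₀) (tilingVerts m f)ᶜ) +
          ∑ j ∈ univ.erase j₀, #(link H (f i j) (tilingVerts m f)ᶜ) :=
        (add_sum_erase _ _ (mem_univ j₀)).symm
    _ ≤ (#(tilingVerts m f)ᶜ).choose 2 + #(univ.erase j₀) • (4 * #(tilingVerts m f)ᶜ) :=
        add_le_add card_link_le_choose
          (sum_le_card_nsmul _ _ _ fun j hj => hj₀ j (ne_of_mem_erase hj))
    _ = (#(tilingVerts m f)ᶜ).choose 2 + 12 * #(tilingVerts m f)ᶜ := by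
        rw [card_erase_of_mem (mem_univ _), card_univ, Fintype.card_fin, smul_eq_mul]; ring

end IsYTiling

end Hypergraph

/-- For a maximum `𝒴`-tiling with `m` members covering `V'`, with `U` the uncovered
vertices, the number of edges with exactly one vertex in `V'` is at most
`m C(|U|,2) + 12 m |U|`. -/
theorem stmt_15 {α : Type*} [Fintype α] [DecidableEq α]
    (H : Finset (Finset α)) (hH : ∀ e ∈ H, e.card = 3)
    (m : ℕ) (f : Fin m → Fin 4 → α) (hf : IsYTiling H m f)
    (hmax : ∀ (m' : ℕ) (f' : Fin m' → Fin 4 → α), IsYTiling H m' f' → m' ≤ m) :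
    (H.filter (fun e => (e ∩ tilingVerts m f).card = 1)).card ≤
      m * ((Finset.univ \ tilingVerts m f).card.choose 2) +
        12 * m * (Finset.univ \ tilingVerts m f).card := by
  rw [← compl_eq_univ_sdiff]
  calc #(H.filter fun e => #(e ∩ tilingVerts m f) = 1)
      ≤ ∑ v ∈ tilingVerts m f, #(link H v (tilingVerts m f)ᶜ) :=
        card_filter_card_inter_eq_one_le hH _
    _ = ∑ i, ∑ j, #(link H (f i j) (tilingVerts m f)ᶜ) := hf.sum_tilingVerts _
    _ ≤ ∑ _i : Fin m, ((#(tilingVerts m f)ᶜ).choose 2 + 12 * #(tilingVerts m f)ᶜ) :=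
        sum_le_sum fun i _ => hf.sum_card_link_le hmax i
    _ = m * (#(tilingVerts m f)ᶜ).choose 2 + 12 * m * #(tilingVerts m f)ᶜ := by
        rw [sum_const, card_univ, Fintype.card_fin, smul_eq_mul]; ring
end

section
/- Let H be a 3-graph and let 𝒴 = {𝒴₁, …, 𝒴_m} be a 𝒴-tiling in H of maximum size, with V_i = V(𝒴_i) for i = 1, …, m, and let U be the set of vertices of H not covered by the tiling. Then there do not exist indices i ≠ j in {1,…,m} and six distinct vertices u₁, …, u₆ ∈ U such that: (a) all six vertices have the same link graph on (V_i, V_j), i.e., for every a ∈ V_i and b ∈ V_j, either {u_k, a, b} ∈ E(H) for all k = 1,…,6 or {u_k, a, b} ∉ E(H) for all k = 1,…,6; and (b) this common bipartite link graph between V_i and V_j contains a matching of size three. -/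
/-- For a maximum `𝒴`-tiling `{V_1, …, V_m}` (where `V_i = {f i 0, …, f i 3}`) with
uncovered vertex set `U`, there are no `i ≠ j` and six distinct vertices `u 0, …, u 5 ∈ U`
all having the same link graph on `(V_i, V_j)`, this common link graph containing a
matching of size three. -/
theorem stmt_16 {α : Type*} [Fintype α] [DecidableEq α]
    (H : Finset (Finset α)) (hH : ∀ e ∈ H, e.card = 3)
    (m : ℕ) (f : Fin m → Fin 4 → α) (hf : IsYTiling H m f)
    (hmax : ∀ (m' : ℕ) (f' : Fin m' → Fin 4 → α), IsYTiling H m' f' → m' ≤ m) :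
    ¬ ∃ i j : Fin m, i ≠ j ∧ ∃ u : Fin 6 → α,
      Function.Injective u ∧
      -- the six vertices are uncovered by the tiling
      (∀ (l : Fin 6) (p : Fin m × Fin 4), u l ≠ f p.1 p.2) ∧
      -- they share the same link graph on (V_i, V_j)
      (∀ (l l' : Fin 6) (s t : Fin 4),
        (({u l, f i s, f j t} : Finset α) ∈ H ↔ ({u l', f i s, f j t} : Finset α) ∈ H)) ∧
      -- the common link graph contains a matching of size three
      (∃ a b : Fin 3 → Fin 4, Function.Injective a ∧ Function.Injective b ∧
        ∀ r : Fin 3, ({u 0, f i (a r), f j (b r)} : Finset α) ∈ H) := by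
  rintro ⟨i, j, hij, u, huinj, hu, hlink, a, b, ha, hb, hmatch⟩
  have hm : 2 ≤ m := by
    by_contra h
    push_neg at h
    interval_cases m
    · exact i.elim0
    · exact hij (Subsingleton.elim i j)
  obtain ⟨hfinj, hfedge⟩ := hf
  -- remaining tile indices
  have hjmem : j ∈ Finset.univ.erase i := Finset.mem_erase.2 ⟨Ne.symm hij, Finset.mem_univ j⟩
  have hscard : ((Finset.univ.erase i).erase j).card = m - 2 := by
    rw [Finset.card_erase_of_mem hjmem, Finset.card_erase_of_mem (Finset.mem_univ i)]
    simp; omega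
  set e : Fin (m - 2) ↪o Fin m := Finset.orderEmbOfFin _ hscard with he
  have hei : ∀ t, e t ≠ i := by
    intro t
    have := Finset.orderEmbOfFin_mem _ hscard t
    rw [Finset.mem_erase, Finset.mem_erase] at this
    exact this.2.1
  have hej : ∀ t, e t ≠ j := by
    intro t
    have := Finset.orderEmbOfFin_mem _ hscard t
    rw [Finset.mem_erase] at this
    exact this.1
  -- the three new tiles
  set T : Fin 3 → Fin 4 → α := fun r =>
    ![u ⟨2 * r.val, by have := r.isLt; omega⟩, f i (a r), f j (b r),
      u ⟨2 * r.val + 1, by have := r.isLt; omega⟩] with hT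
  -- new edges
  have hedge : ∀ (l : Fin 6) (r : Fin 3), ({u l, f i (a r), f j (b r)} : Finset α) ∈ H :=
    fun l r => (hlink 0 l (a r) (b r)).1 (hmatch r)
  have hperm : ∀ x y z : α, ({x, y, z} : Finset α) = {z, x, y} := by
    intro x y z; ext w; simp only [Finset.mem_insert, Finset.mem_singleton]; tauto
  -- derived distinctness facts
  have hfi_ne_fj : ∀ s t : Fin 4, f i s ≠ f j t := by
    intro s t h
    have := hfinj (a₁ := (i, s)) (a₂ := (j, t)) h
    exact hij (congrArg Prod.fst this)
  -- the enlarged tiling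
  set F : Fin (m - 2) ⊕ Fin 3 → Fin 4 → α := Sum.elim (fun t => f (e t)) T with hF
  have key : ∀ (x y : Fin (m - 2) ⊕ Fin 3) (s t : Fin 4), F x s = F y t → x = y ∧ s = t := by
    have old_ne_new : ∀ (t : Fin (m - 2)) (s : Fin 4) (r : Fin 3) (t' : Fin 4),
        f (e t) s ≠ T r t' := by
      intro t s r t' h
      fin_cases t'
      · exact hu _ (e t, s) (show u _ = f (e t) s from h.symm)
      · have := hfinj (a₁ := (e t, s)) (a₂ := (i, a r)) (show f (e t) s = f i (a r) from h)
        exact hei t (congrArg Prod.fst this)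
      · have := hfinj (a₁ := (e t, s)) (a₂ := (j, b r)) (show f (e t) s = f j (b r) from h)
        exact hej t (congrArg Prod.fst this)
      · exact hu _ (e t, s) (show u _ = f (e t) s from h.symm)
    rintro (t | r) (t' | r') s s' h <;> simp only [hF, Sum.elim_inl, Sum.elim_inr] at h
    · have h2 := hfinj (a₁ := (e t, s)) (a₂ := (e t', s')) h
      have h3 : e t = e t' := congrArg Prod.fst h2
      exact ⟨by rw [e.injective h3], congrArg Prod.snd h2⟩
    · exact absurd h (old_ne_new t s r' s')
    · exact absurd h.symm (old_ne_new t' s' r s)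
    · -- new vs new
      fin_cases s <;> fin_cases s'
      · have h5 : 2 * (r : ℕ) = 2 * (r' : ℕ) := congrArg Fin.val (huinj (show u _ = u _ from h))
        exact ⟨congrArg Sum.inr (Fin.ext (by omega)), rfl⟩
      · exact absurd (show u _ = f i (a r') from h) (hu _ (i, a r'))
      · exact absurd (show u _ = f j (b r') from h) (hu _ (j, b r'))
      · have h5 : 2 * (r : ℕ) = 2 * (r' : ℕ) + 1 :=
          congrArg Fin.val (huinj (show u _ = u _ from h))
        exact absurd h5 (by omega)
      · exact absurd (show u _ = f i (a r) from h.symm) (hu _ (i, a r))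
      · have h2 := hfinj (a₁ := (i, a r)) (a₂ := (i, a r'))
          (show f i (a r) = f i (a r') from h)
        exact ⟨congrArg Sum.inr (ha (congrArg Prod.snd h2)), rfl⟩
      · exact absurd (show f i (a r) = f j (b r') from h) (hfi_ne_fj _ _)
      · exact absurd (show u _ = f i (a r) from h.symm) (hu _ (i, a r))
      · exact absurd (show u _ = f j (b r) from h.symm) (hu _ (j, b r))
      · exact absurd (show f i (a r') = f j (b r) from h.symm) (hfi_ne_fj _ _)
      · have h2 := hfinj (a₁ := (j, b r)) (a₂ := (j, b r'))
          (show f j (b r) = f j (b r') from h)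
        exact ⟨congrArg Sum.inr (hb (congrArg Prod.snd h2)), rfl⟩
      · exact absurd (show u _ = f j (b r) from h.symm) (hu _ (j, b r))
      · have h5 : 2 * (r : ℕ) + 1 = 2 * (r' : ℕ) :=
          congrArg Fin.val (huinj (show u _ = u _ from h))
        exact absurd h5 (by omega)
      · exact absurd (show u _ = f i (a r') from h) (hu _ (i, a r'))
      · exact absurd (show u _ = f j (b r') from h) (hu _ (j, b r'))
      · have h5 : 2 * (r : ℕ) + 1 = 2 * (r' : ℕ) + 1 :=
          congrArg Fin.val (huinj (show u _ = u _ from h))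
        exact ⟨congrArg Sum.inr (Fin.ext (by omega)), rfl⟩
  have htiling : IsYTiling H (m - 2 + 3) fun k => F (finSumFinEquiv.symm k) := by
    constructor
    · intro p q h
      simp only at h
      obtain ⟨h1, h2⟩ := key _ _ _ _ h
      exact Prod.ext (finSumFinEquiv.symm.injective h1) h2
    · intro k
      rcases hk : finSumFinEquiv.symm k with t | r <;>
        simp only [hk, hF, Sum.elim_inl, Sum.elim_inr]
      · exact hfedge (e t)
      · constructor
        · show ({u _, f i (a r), f j (b r)} : Finset α) ∈ H
          exact hedge _ r
        · show ({f i (a r), f j (b r), u _} : Finset α) ∈ H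
          rw [hperm]
          exact hedge _ r
  have := hmax _ _ htiling
  omega
end

section
/- Let H be a 3-graph on n vertices, let 0 < ε₁ < 1, and let B ⊆ V(H) with |B| = ⌊3n/4⌋ be a set minimizing e(B) among all subsets of V(H) of size ⌊3n/4⌋. Let A = V(H) \ B, let A' = {v ∈ V(H) : deg(v, B) ≥ (1 − ε₁)·C(|B|,2)} and B' = {v ∈ V(H) : deg(v, B) ≤ ε₁·C(|B|,2)}. Then A ∩ B' ≠ ∅ implies B ⊆ B', and B ∩ A' ≠ ∅ implies A ⊆ A'. -/
/-- The number of edges of `H` contained in the vertex set `B`. -/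
def eIn {α : Type*} [DecidableEq α] (H : Finset (Finset α)) (B : Finset α) : ℕ :=
  (H.filter (fun e => e ⊆ B)).card

/-- `deg(v, S)`: the number of edges of `H` consisting of `v` together with two vertices
of `S \ {v}`. -/
def degv {α : Type*} [DecidableEq α] (H : Finset (Finset α)) (v : α) (S : Finset α) : ℕ :=
  (H.filter (fun e => v ∈ e ∧ e.erase v ⊆ S)).card

lemma degv_erase {α : Type*} [DecidableEq α] (H : Finset (Finset α)) (x : α) (S : Finset α) :
    degv H x (S.erase x) = degv H x S := by
  unfold degv
  congr 1
  apply Finset.filter_congr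
  intro e _
  simp only [Finset.subset_erase, Finset.notMem_erase, not_false_iff, and_true]

lemma degv_mono {α : Type*} [DecidableEq α] (H : Finset (Finset α)) (x : α) {S T : Finset α}
    (hST : S ⊆ T) : degv H x S ≤ degv H x T := by
  apply Finset.card_le_card
  intro e he
  simp only [Finset.mem_filter] at he ⊢
  exact ⟨he.1, he.2.1, he.2.2.trans hST⟩

lemma eIn_split {α : Type*} [DecidableEq α] (H : Finset (Finset α)) (S : Finset α) (x : α)
    (hx : x ∈ S) : eIn H S = eIn H (S.erase x) + degv H x (S.erase x) := by
  classical
  rw [degv_erase]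
  unfold eIn degv
  have key := Finset.card_filter_add_card_filter_not
    (s := H.filter (fun e => e ⊆ S)) (p := fun e => x ∈ e)
  rw [Finset.filter_filter, Finset.filter_filter] at key
  have h1 : H.filter (fun e => e ⊆ S ∧ ¬ x ∈ e) = H.filter (fun e => e ⊆ S.erase x) := by
    apply Finset.filter_congr
    intro e _
    simp only [Finset.subset_erase]
  have h2 : H.filter (fun e => e ⊆ S ∧ x ∈ e) = H.filter (fun e => x ∈ e ∧ e.erase x ⊆ S) := by
    apply Finset.filter_congr
    intro e _
    constructor
    · rintro ⟨hes, hxe⟩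
      exact ⟨hxe, (Finset.erase_subset _ _).trans hes⟩
    · rintro ⟨hxe, hes⟩
      refine ⟨fun y hy => ?_, hxe⟩
      by_cases hyx : y = x
      · exact hyx ▸ hx
      · exact hes (Finset.mem_erase.mpr ⟨hyx, hy⟩)
  rw [h1, h2] at key
  omega

lemma swap_key {α : Type*} [DecidableEq α] (H : Finset (Finset α)) (B : Finset α)
    {u w : α} (hu : u ∈ B) (hw : w ∉ B)
    (hle : eIn H B ≤ eIn H (insert w (B.erase u))) :
    degv H u B ≤ degv H w B := by
  have hw' : w ∉ B.erase u := fun h => hw (Finset.mem_erase.mp h).2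
  have e1 : eIn H B = eIn H (B.erase u) + degv H u B := by
    rw [eIn_split H B u hu, degv_erase]
  have e2 : eIn H (insert w (B.erase u))
      = eIn H (B.erase u) + degv H w (B.erase u) := by
    have := eIn_split H (insert w (B.erase u)) w (Finset.mem_insert_self _ _)
    rwa [Finset.erase_insert hw'] at this
  have : degv H u B ≤ degv H w (B.erase u) := by omega
  exact this.trans (degv_mono H w (Finset.erase_subset _ _))

/-- Let `B` minimize `e(B)` among vertex sets of size `⌊3n/4⌋`, let `A` be its complement,
`A' = {v : deg(v,B) ≥ (1-ε₁) C(|B|,2)}` and `B' = {v : deg(v,B) ≤ ε₁ C(|B|,2)}`.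
Then `A ∩ B' ≠ ∅` implies `B ⊆ B'`, and `B ∩ A' ≠ ∅` implies `A ⊆ A'`. -/
theorem stmt_17 (n : ℕ) (ε₁ : ℝ) (hε₀ : 0 < ε₁) (hε₁ : ε₁ < 1)
    (H : Finset (Finset (Fin n))) (hH : ∀ e ∈ H, e.card = 3)
    (B : Finset (Fin n)) (hB : B.card = 3 * n / 4)
    (hmin : ∀ B' : Finset (Fin n), B'.card = 3 * n / 4 → eIn H B ≤ eIn H B') :
    ((∃ v : Fin n, v ∉ B ∧ (degv H v B : ℝ) ≤ ε₁ * (B.card.choose 2 : ℝ)) →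
      ∀ v ∈ B, (degv H v B : ℝ) ≤ ε₁ * (B.card.choose 2 : ℝ)) ∧
    ((∃ v ∈ B, (1 - ε₁) * (B.card.choose 2 : ℝ) ≤ (degv H v B : ℝ)) →
      ∀ v : Fin n, v ∉ B → (1 - ε₁) * (B.card.choose 2 : ℝ) ≤ (degv H v B : ℝ)) := by
  have key : ∀ u ∈ B, ∀ w ∉ B, degv H u B ≤ degv H w B := by
    intro u hu w hw
    apply swap_key H B hu hw
    apply hmin
    have hw' : w ∉ B.erase u := fun h => hw (Finset.mem_erase.mp h).2
    rw [Finset.card_insert_of_notMem hw', Finset.card_erase_of_mem hu, hB]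
    have : 0 < B.card := Finset.card_pos.mpr ⟨u, hu⟩
    omega
  constructor
  · rintro ⟨w, hw, hdeg⟩ u hu
    have := key u hu w hw
    calc (degv H u B : ℝ) ≤ (degv H w B : ℝ) := by exact_mod_cast this
      _ ≤ _ := hdeg
  · rintro ⟨u, hu, hdeg⟩ w hw
    have := key u hu w hw
    calc (1 - ε₁) * (B.card.choose 2 : ℝ) ≤ (degv H u B : ℝ) := hdeg
      _ ≤ (degv H w B : ℝ) := by exact_mod_cast this
end

section
/- For all sufficiently small ε₀ > 0 there exists an integer n₀ such that the following holds, where ε₁ = 8√ε₀. Let n > n₀ be even and let H be a 3-graph on n vertices with δ₁(H) ≥ C(n−1,2) − C(⌊3n/4⌋,2) + c, where c = 2 if n is divisible by 4 and c = 1 otherwise. Let B ⊆ V(H) with |B| = ⌊3n/4⌋ satisfy e(B) < ε₀·C(|B|,3), let A = V(H) \ B, let A' = {v ∈ V(H) : deg(v, B) ≥ (1 − ε₁)·C(|B|,2)}, B' = {v ∈ V(H) : deg(v, B) ≤ ε₁·C(|B|,2)}, and V₀ = V(H) \ (A' ∪ B'). Then each of |A \ A'|, |B \ B'|, |A' \ A|,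 |B' \ B| is at most (ε₁/64)·|B|, and |V₀| ≤ (ε₁/32)·|B|. -/
set_option linter.unusedSectionVars false
set_option linter.unusedVariables false
set_option maxHeartbeats 1000000
open Finset

section aux
variable {α : Type*} [DecidableEq α] [Fintype α]

lemma swap_count {β : Type*} [DecidableEq β] (X : Finset α) (T : Finset β)
    (Q : α → β → Prop) [∀ a b, Decidable (Q a b)] :
    ∑ v ∈ X, (T.filter (fun t => Q v t)).card
      = ∑ t ∈ T, (X.filter (fun v => Q v t)).card := by
  simp_rw [Finset.card_filter]
  exact Finset.sum_comm

lemma card_triples_at (v : α) (Q : Finset α → Prop) [DecidablePred Q] :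
    (((univ : Finset α).powersetCard 3).filter (fun t => v ∈ t ∧ Q t)).card
      = ((((univ : Finset α).erase v).powersetCard 2).filter
          (fun p => Q (insert v p))).card := by
  apply Finset.card_bij (fun t _ => t.erase v)
  · intro t ht
    simp only [mem_filter, Finset.mem_powersetCard] at ht ⊢
    obtain ⟨⟨hsub, hcard⟩, hv, hQ⟩ := ht
    refine ⟨⟨?_, ?_⟩, ?_⟩
    · intro x hx
      exact Finset.mem_erase.2 ⟨(Finset.mem_erase.1 hx).1, Finset.mem_univ x⟩
    · rw [Finset.card_erase_of_mem hv, hcard]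
    · rwa [Finset.insert_erase hv]
  · intro t₁ h₁ t₂ h₂ he
    simp only [mem_filter] at h₁ h₂
    rw [← Finset.insert_erase h₁.2.1, he, Finset.insert_erase h₂.2.1]
  · intro p hp
    simp only [mem_filter, Finset.mem_powersetCard] at hp
    obtain ⟨⟨hsub, hcard⟩, hQ⟩ := hp
    have hv : v ∉ p := fun h => (Finset.mem_erase.1 (hsub h)).1 rfl
    refine ⟨insert v p, ?_, ?_⟩
    · simp only [mem_filter, Finset.mem_powersetCard]
      exact ⟨⟨Finset.subset_univ _, by rw [Finset.card_insert_of_notMem hv, hcard]⟩,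
        Finset.mem_insert_self _ _, hQ⟩
    · rw [Finset.erase_insert hv]

lemma inner_a (B t : Finset α) (h3 : t.card = 3) :
    ((Bᶜ.filter (fun v => v ∈ t ∧ t.erase v ⊆ B))).card
      = if (t ∩ B).card = 2 then 1 else 0 := by
  have key : ∀ v ∈ Bᶜ.filter (fun v => v ∈ t ∧ t.erase v ⊆ B), t ∩ B = t.erase v := by
    intro v hv
    simp only [mem_filter, Finset.mem_compl] at hv
    obtain ⟨hvB, hvt, hsub⟩ := hv
    apply Finset.Subset.antisymm
    · intro x hx
      rcases Finset.mem_inter.1 hx with ⟨hxt, hxB⟩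
      exact Finset.mem_erase.2 ⟨fun h => hvB (h ▸ hxB), hxt⟩
    · intro x hx
      exact Finset.mem_inter.2 ⟨Finset.mem_of_mem_erase hx, hsub hx⟩
  by_cases h2 : (t ∩ B).card = 2
  · rw [if_pos h2, Finset.card_eq_one]
    have hex : ∃ v₀ ∈ t, v₀ ∉ B := by
      by_contra hc
      push_neg at hc
      have : t ∩ B = t := Finset.inter_eq_left.2 hc
      rw [this, h3] at h2; omega
    obtain ⟨v₀, hv₀t, hv₀B⟩ := hex
    have hsub0 : t ∩ B ⊆ t.erase v₀ := by
      intro x hx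
      rcases Finset.mem_inter.1 hx with ⟨hxt, hxB⟩
      exact Finset.mem_erase.2 ⟨fun h => hv₀B (h ▸ hxB), hxt⟩
    have heq0 : t ∩ B = t.erase v₀ := by
      apply Finset.eq_of_subset_of_card_le hsub0
      rw [Finset.card_erase_of_mem hv₀t, h3, h2]
    have hv₀mem : v₀ ∈ Bᶜ.filter (fun v => v ∈ t ∧ t.erase v ⊆ B) := by
      simp only [mem_filter, Finset.mem_compl]
      exact ⟨hv₀B, hv₀t, heq0 ▸ Finset.inter_subset_right⟩
    refine ⟨v₀, ?_⟩
    apply Finset.eq_singleton_iff_unique_mem.2 ⟨hv₀mem, ?_⟩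
    intro v hv
    have h := key v hv
    simp only [mem_filter, Finset.mem_compl] at hv
    by_contra hne
    have hm : v₀ ∈ t.erase v := Finset.mem_erase.2 ⟨fun h' => hne h'.symm, hv₀t⟩
    rw [← h] at hm
    exact hv₀B (Finset.mem_inter.1 hm).2
  · rw [if_neg h2, Finset.card_eq_zero]
    apply Finset.eq_empty_of_forall_notMem
    intro v hv
    have h := key v hv
    simp only [mem_filter, Finset.mem_compl] at hv
    apply h2
    rw [h, Finset.card_erase_of_mem hv.2.1, h3]

lemma inner_b (B t : Finset α) (h3 : t.card = 3) :
    (B.filter (fun v => v ∈ t ∧ (t.erase v ∩ B).card = 1)).card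
      = if (t ∩ B).card = 2 then 2 else 0 := by
  have hcond : ∀ v ∈ B, v ∈ t → ((t.erase v ∩ B).card = 1 ↔ (t ∩ B).card = 2) := by
    intro v hvB hvt
    have h1 : t.erase v ∩ B = (t ∩ B).erase v := by rw [Finset.erase_inter]
    have h2 : v ∈ t ∩ B := Finset.mem_inter.2 ⟨hvt, hvB⟩
    have h3' : 1 ≤ (t ∩ B).card := Finset.card_pos.2 ⟨v, h2⟩
    rw [h1, Finset.card_erase_of_mem h2]
    omega
  by_cases h2 : (t ∩ B).card = 2
  · rw [if_pos h2]
    have heq : B.filter (fun v => v ∈ t ∧ (t.erase v ∩ B).card = 1) = t ∩ B := by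
      ext v
      simp only [mem_filter, Finset.mem_inter]
      constructor
      · rintro ⟨hvB, hvt, _⟩; exact ⟨hvt, hvB⟩
      · rintro ⟨hvt, hvB⟩; exact ⟨hvB, hvt, (hcond v hvB hvt).2 h2⟩
    rw [heq, h2]
  · rw [if_neg h2, Finset.card_eq_zero]
    apply Finset.eq_empty_of_forall_notMem
    intro v hv
    simp only [mem_filter] at hv
    exact h2 ((hcond v hv.1 hv.2.1).1 hv.2.2)

end aux

/-- With `ε₁ = 8√ε₀`, `B` a set of size `⌊3n/4⌋` with `e(B) < ε₀ C(|B|,3)`, `A` its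
complement, `A'` the vertices of `B`-degree at least `(1-ε₁) C(|B|,2)`, `B'` those of
`B`-degree at most `ε₁ C(|B|,2)`, and `V₀` the rest: each of `|A \ A'|`, `|B \ B'|`,
`|A' \ A|`, `|B' \ B|` is at most `(ε₁/64)|B|`, and `|V₀| ≤ (ε₁/32)|B|`. -/
theorem stmt_18 :
    ∃ ε₀' : ℝ, 0 < ε₀' ∧ ∀ ε₀ : ℝ, 0 < ε₀ → ε₀ ≤ ε₀' →
    ∃ n₀ : ℕ, ∀ n : ℕ, n > n₀ → Even n →
    ∀ H : Finset (Finset (Fin n)), (∀ e ∈ H, e.card = 3) →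
    (∀ v : Fin n,
      (n - 1).choose 2 - (3 * n / 4).choose 2 + (if 4 ∣ n then 2 else 1) ≤ hdeg H v) →
    ∀ B : Finset (Fin n), B.card = 3 * n / 4 →
    (eIn H B : ℝ) < ε₀ * (B.card.choose 3 : ℝ) →
    let ε₁ : ℝ := 8 * Real.sqrt ε₀
    let A : Set (Fin n) := {v | v ∉ B}
    let A' : Set (Fin n) := {v | (1 - ε₁) * (B.card.choose 2 : ℝ) ≤ (degv H v B : ℝ)}
    let B' : Set (Fin n) := {v | (degv H v B : ℝ) ≤ ε₁ * (B.card.choose 2 : ℝ)}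
    let V₀ : Set (Fin n) := Set.univ \ (A' ∪ B')
    (((A \ A').ncard : ℝ) ≤ ε₁ / 64 * B.card) ∧
    ((((B : Set (Fin n)) \ B').ncard : ℝ) ≤ ε₁ / 64 * B.card) ∧
    (((A' \ A).ncard : ℝ) ≤ ε₁ / 64 * B.card) ∧
    (((B' \ (B : Set (Fin n))).ncard : ℝ) ≤ ε₁ / 64 * B.card) ∧
    ((V₀.ncard : ℝ) ≤ ε₁ / 32 * B.card) := by
  classical
  refine ⟨1/300, by norm_num, ?_⟩
  intro ε₀ hε₀pos hε₀le
  refine ⟨⌈(8:ℝ)/ε₀⌉₊ + 8, ?_⟩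
  intro n hn hEven H hH3 hδ B hBcard hEB
  intro ε₁ A A' B' V₀
  -- basic real facts
  set s : ℝ := Real.sqrt ε₀ with hs
  have hspos : 0 < s := Real.sqrt_pos.2 hε₀pos
  have hs2 : s^2 = ε₀ := Real.sq_sqrt hε₀pos.le
  have hsle : s ≤ 1/17 := by nlinarith [hε₀le, hs2, hspos]
  have hε₁def : ε₁ = 8 * s := rfl
  have hε₁pos : 0 < ε₁ := by rw [hε₁def]; linarith
  have hε₁le : ε₁ ≤ 8/17 := by rw [hε₁def]; linarith
  -- basic size facts
  have hnceil : ⌈(8:ℝ)/ε₀⌉₊ + 9 ≤ n := by omega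
  have hn8 : (8:ℝ)/ε₀ ≤ (n:ℝ) := by
    refine le_trans (Nat.le_ceil _) ?_
    exact_mod_cast Nat.le_of_lt (by omega)
  have hn9 : 9 ≤ n := by omega
  have hdivmod := Nat.div_add_mod (3*n) 4
  have hmodlt : 3*n % 4 < 4 := Nat.mod_lt _ (by norm_num)
  have hb4 : 3*n ≤ 4*B.card + 3 := by omega
  have hb2 : 2 ≤ B.card := by omega
  have hbn2 : 2*n ≤ 4*B.card := by omega
  have hbnR : (n:ℝ)/2 ≤ (B.card:ℝ) := by
    have : (2*n:ℝ) ≤ (4*B.card:ℝ) := by exact_mod_cast hbn2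
    linarith
  have hbbig : 2 ≤ ε₀ * (B.card:ℝ) := by
    have h8 : (8:ℝ)/ε₀ = 2*(4/ε₀) := by ring
    have h1 : (4:ℝ)/ε₀ ≤ (B.card:ℝ) := by linarith
    have h2 : (4:ℝ) ≤ ε₀ * (B.card:ℝ) := by
      rw [div_le_iff₀ hε₀pos] at h1; linarith [h1]
    linarith
  have hbR2 : (2:ℝ) ≤ (B.card:ℝ) := by exact_mod_cast hb2
  -- triple set
  set P3 := ((univ : Finset (Fin n)).powersetCard 3) with hP3
  have hmem3 : ∀ t : Finset (Fin n), t ∈ P3 ↔ t.card = 3 := by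
    intro t
    simp [hP3, Finset.mem_powersetCard, Finset.subset_univ]
  have degv_eq : ∀ v : Fin n,
      (P3.filter (fun t => v ∈ t ∧ (t ∈ H ∧ t.erase v ⊆ B))).card = degv H v B := by
    intro v
    unfold degv
    congr 1
    ext t
    simp only [mem_filter, hmem3 t]
    constructor
    · rintro ⟨-, hvt, htH, hsub⟩
      exact ⟨htH, hvt, hsub⟩
    · rintro ⟨htH, hvt, hsub⟩
      exact ⟨hH3 t htH, hvt, htH, hsub⟩
  have hdeg_eq : ∀ v : Fin n,
      (P3.filter (fun t => v ∈ t ∧ t ∈ H)).card = hdeg H v := by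
    intro v
    unfold hdeg
    congr 1
    ext t
    simp only [mem_filter, hmem3 t]
    constructor
    · rintro ⟨-, hvt, htH⟩
      exact ⟨htH, hvt⟩
    · rintro ⟨htH, hvt⟩
      exact ⟨hH3 t htH, hvt, htH⟩
  -- F1 : sum of B-degrees over B equals 3 e(B)
  have F1 : ∑ v ∈ B, degv H v B = 3 * eIn H B := by
    have h1 : ∀ v ∈ B, degv H v B = (H.filter (fun e => v ∈ e ∧ e ⊆ B)).card := by
      intro v hv
      unfold degv
      congr 1
      apply Finset.filter_congr
      intro e heH
      constructor
      · rintro ⟨hve, hsub⟩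
        refine ⟨hve, fun x hx => ?_⟩
        rcases eq_or_ne x v with rfl | hne
        · exact hv
        · exact hsub (Finset.mem_erase.2 ⟨hne, hx⟩)
      · rintro ⟨hve, hsub⟩
        exact ⟨hve, (Finset.erase_subset _ _).trans hsub⟩
    rw [Finset.sum_congr rfl h1, swap_count B H (fun v e => v ∈ e ∧ e ⊆ B)]
    unfold eIn
    rw [Finset.card_filter, Finset.mul_sum]
    apply Finset.sum_congr rfl
    intro e he
    by_cases hsub : e ⊆ B
    · have heq : B.filter (fun v => v ∈ e ∧ e ⊆ B) = e := by
        ext v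
        simp only [mem_filter]
        constructor
        · exact fun h => h.2.1
        · exact fun h => ⟨hsub h, h, hsub⟩
      rw [heq, hH3 e he]
      simp [hsub]
    · simp [hsub]
  -- the bad triple set S
  set S := P3.filter (fun t => t ∉ H ∧ (t ∩ B).card = 2) with hS
  have F2a : ∑ v ∈ Bᶜ, (P3.filter (fun t => v ∈ t ∧ (t ∉ H ∧ t.erase v ⊆ B))).card
      = S.card := by
    rw [swap_count Bᶜ P3 (fun v t => v ∈ t ∧ (t ∉ H ∧ t.erase v ⊆ B)), hS,
      Finset.card_filter]
    apply Finset.sum_congr rfl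
    intro t ht
    have h3 : t.card = 3 := (hmem3 t).1 ht
    by_cases htH : t ∈ H
    · simp [htH]
    · have heq : Bᶜ.filter (fun v => v ∈ t ∧ (t ∉ H ∧ t.erase v ⊆ B))
          = Bᶜ.filter (fun v => v ∈ t ∧ t.erase v ⊆ B) := by
        apply Finset.filter_congr
        intro v _
        simp [htH]
      rw [heq, inner_a B t h3]
      simp [htH]
  have F2b : ∑ x ∈ B, (P3.filter (fun t => x ∈ t ∧ (t ∉ H ∧ (t.erase x ∩ B).card = 1))).card
      = 2 * S.card := by
    rw [swap_count B P3 (fun v t => v ∈ t ∧ (t ∉ H ∧ (t.erase v ∩ B).card = 1)), hS,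
      Finset.card_filter, Finset.mul_sum]
    apply Finset.sum_congr rfl
    intro t ht
    have h3 : t.card = 3 := (hmem3 t).1 ht
    by_cases htH : t ∈ H
    · simp [htH]
    · have heq : B.filter (fun v => v ∈ t ∧ (t ∉ H ∧ (t.erase v ∩ B).card = 1))
          = B.filter (fun v => v ∈ t ∧ (t.erase v ∩ B).card = 1) := by
        apply Finset.filter_congr
        intro v _
        simp [htH]
      rw [heq, inner_b B t h3]
      simp only [htH, not_false_eq_true, true_and]
      split_ifs <;> simp
  -- splitting pairs at a vertex
  have pairsplit : ∀ v : Fin n,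
      (P3.filter (fun t => v ∈ t ∧ (t ∈ H ∧ t.erase v ⊆ B))).card
        + (P3.filter (fun t => v ∈ t ∧ (t ∉ H ∧ t.erase v ⊆ B))).card
        = (B.erase v).card.choose 2 := by
    intro v
    rw [hP3, card_triples_at v (fun t => t ∈ H ∧ t.erase v ⊆ B),
      card_triples_at v (fun t => t ∉ H ∧ t.erase v ⊆ B)]
    set PC := ((univ : Finset (Fin n)).erase v).powersetCard 2 with hPC
    have hvp : ∀ p ∈ PC, v ∉ p := by
      intro p hp
      rw [hPC, Finset.mem_powersetCard] at hp
      exact fun h => (Finset.mem_erase.1 (hp.1 h)).1 rfl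
    have e1 : PC.filter (fun p => insert v p ∈ H ∧ (insert v p).erase v ⊆ B)
        = (PC.filter (fun p => p ⊆ B)).filter (fun p => insert v p ∈ H) := by
      rw [Finset.filter_filter]
      apply Finset.filter_congr
      intro p hp
      rw [Finset.erase_insert (hvp p hp)]
      tauto
    have e2 : PC.filter (fun p => insert v p ∉ H ∧ (insert v p).erase v ⊆ B)
        = (PC.filter (fun p => p ⊆ B)).filter (fun p => ¬ insert v p ∈ H) := by
      rw [Finset.filter_filter]
      apply Finset.filter_congr
      intro p hp
      rw [Finset.erase_insert (hvp p hp)]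
      tauto
    rw [e1, e2, Finset.card_filter_add_card_filter_not]
    have e3 : PC.filter (fun p => p ⊆ B) = (B.erase v).powersetCard 2 := by
      ext p
      rw [hPC]
      simp only [mem_filter, Finset.mem_powersetCard]
      constructor
      · rintro ⟨⟨hsub, hc⟩, hB⟩
        exact ⟨fun x hx => Finset.mem_erase.2 ⟨(Finset.mem_erase.1 (hsub hx)).1, hB hx⟩, hc⟩
      · rintro ⟨hsub, hc⟩
        exact ⟨⟨fun x hx => Finset.mem_erase.2 ⟨(Finset.mem_erase.1 (hsub hx)).1,
          Finset.mem_univ x⟩, hc⟩, fun x hx => Finset.mem_of_mem_erase (hsub hx)⟩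
    rw [e3, Finset.card_powersetCard]
  -- total number of triples through a vertex
  have Tcard : ∀ v : Fin n, (P3.filter (fun t => v ∈ t)).card = (n-1).choose 2 := by
    intro v
    have heq : P3.filter (fun t => v ∈ t) = P3.filter (fun t => v ∈ t ∧ True) := by
      simp
    rw [heq, hP3, card_triples_at v (fun _ => True), Finset.filter_true_of_mem (by tauto),
      Finset.card_powersetCard, Finset.card_erase_of_mem (Finset.mem_univ v),
      Finset.card_univ, Fintype.card_fin]
  -- F3 : for v outside B, degv + missing = C(b,2)
  have F3 : ∀ v : Fin n, v ∉ B →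
      degv H v B + (P3.filter (fun t => v ∈ t ∧ (t ∉ H ∧ t.erase v ⊆ B))).card
        = B.card.choose 2 := by
    intro v hv
    have h := pairsplit v
    rw [Finset.erase_eq_of_notMem hv, degv_eq v] at h
    exact h
  -- F4 : per-vertex bound inside B
  have F4 : ∀ x ∈ B,
      (P3.filter (fun t => x ∈ t ∧ (t ∉ H ∧ (t.erase x ∩ B).card = 1))).card
        ≤ (B.card - 1) + degv H x B := by
    intro x hxB
    set A1 := P3.filter (fun t => x ∈ t ∧ (t ∉ H ∧ (t.erase x ∩ B).card = 1)) with hA1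
    set A2 := P3.filter (fun t => x ∈ t ∧ (t ∉ H ∧ t.erase x ⊆ B)) with hA2
    set A3 := P3.filter (fun t => x ∈ t ∧ t ∈ H) with hA3
    have d12 : Disjoint A1 A2 := by
      rw [Finset.disjoint_left]
      intro t ht1 ht2
      rw [hA1, mem_filter] at ht1
      rw [hA2, mem_filter] at ht2
      have h3 : t.card = 3 := (hmem3 t).1 ht1.1
      have hi : t.erase x ∩ B = t.erase x := Finset.inter_eq_left.2 ht2.2.2.2
      have hcnt := ht1.2.2.2
      rw [hi, Finset.card_erase_of_mem ht1.2.1, h3] at hcnt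
      omega
    have d3 : Disjoint (A1 ∪ A2) A3 := by
      rw [Finset.disjoint_left]
      intro t ht1 ht2
      rw [Finset.mem_union, hA1, hA2, mem_filter, mem_filter] at ht1
      rw [hA3, mem_filter] at ht2
      rcases ht1 with h | h
      · exact h.2.2.1 ht2.2.2
      · exact h.2.2.1 ht2.2.2
    have hsub : A1 ∪ A2 ∪ A3 ⊆ P3.filter (fun t => x ∈ t) := by
      intro t ht
      rw [Finset.mem_union, Finset.mem_union, hA1, hA2, hA3, mem_filter, mem_filter,
        mem_filter] at ht
      rw [mem_filter]
      rcases ht with (h | h) | h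
      · exact ⟨h.1, h.2.1⟩
      · exact ⟨h.1, h.2.1⟩
      · exact ⟨h.1, h.2.1⟩
    have hle : A1.card + A2.card + A3.card ≤ (n-1).choose 2 := by
      rw [← Finset.card_union_of_disjoint d12, ← Finset.card_union_of_disjoint d3, ← Tcard x]
      exact Finset.card_le_card hsub
    have h2 : A3.card = hdeg H x := hdeg_eq x
    have hps := pairsplit x
    rw [Finset.card_erase_of_mem hxB, degv_eq x, show
      (P3.filter (fun t => x ∈ t ∧ (t ∉ H ∧ t.erase x ⊆ B))) = A2 from hA2.symm] at hps
    have hd : (n-1).choose 2 ≤ hdeg H x + B.card.choose 2 := by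
      have h := hδ x
      rw [← hBcard] at h
      split_ifs at h <;> omega
    have hchoose : B.card.choose 2 = (B.card - 1).choose 2 + (B.card - 1) := by
      obtain ⟨m, hm⟩ : ∃ m, B.card = m + 1 := ⟨B.card - 1, by omega⟩
      have hcs : (m+1).choose 2 = m.choose 1 + m.choose 2 := Nat.choose_succ_succ m 1
      rw [hm, Nat.add_sub_cancel]
      rw [Nat.choose_one_right] at hcs
      omega
    omega
  -- F4sum : 2|S| ≤ b(b-1) + 3 e(B)
  have F4sum : 2 * S.card ≤ B.card * (B.card - 1) + 3 * eIn H B := by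
    rw [← F2b, ← F1]
    calc ∑ x ∈ B, (P3.filter (fun t => x ∈ t ∧ (t ∉ H ∧ (t.erase x ∩ B).card = 1))).card
        ≤ ∑ x ∈ B, ((B.card - 1) + degv H x B) := Finset.sum_le_sum F4
      _ = B.card * (B.card - 1) + ∑ x ∈ B, degv H x B := by
          rw [Finset.sum_add_distrib, Finset.sum_const, smul_eq_mul]
  -- real identities
  have hC2pos : (0:ℝ) < (B.card.choose 2 : ℝ) := by
    exact_mod_cast Nat.choose_pos (show 2 ≤ B.card from hb2)
  have hid3 : 3 * ((B.card.choose 3 : ℕ) : ℝ)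
      = ((B.card : ℝ) - 2) * (B.card.choose 2 : ℝ) := by
    have h : B.card.choose 3 * 3 = B.card.choose 2 * (B.card - 2) :=
      Nat.choose_succ_right_eq B.card 2
    have h' : ((B.card.choose 3 * 3 : ℕ) : ℝ) = ((B.card.choose 2 * (B.card - 2) : ℕ) : ℝ) :=
      Nat.cast_inj.2 h
    push_cast [Nat.cast_sub hb2] at h'
    linarith
  have hid2 : 2 * ((B.card.choose 2 : ℕ) : ℝ) = (B.card:ℝ) * ((B.card:ℝ) - 1) := by
    have h : B.card.choose 2 * 2 = B.card.choose 1 * (B.card - 1) :=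
      Nat.choose_succ_right_eq B.card 1
    have h' : ((B.card.choose 2 * 2 : ℕ) : ℝ) = ((B.card.choose 1 * (B.card - 1) : ℕ) : ℝ) :=
      Nat.cast_inj.2 h
    push_cast [Nat.cast_sub (show 1 ≤ B.card by omega), Nat.choose_one_right] at h'
    linarith
  have hsumB : ∑ v ∈ B, (degv H v B : ℝ)
      ≤ ε₀ * (((B.card:ℝ) - 2) * (B.card.choose 2:ℝ)) := by
    have hc : ∑ v ∈ B, (degv H v B : ℝ) = 3 * (eIn H B : ℝ) := by
      rw [← Nat.cast_sum, F1]
      push_cast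
      ring
    have h1 : 3 * (eIn H B:ℝ) ≤ 3 * (ε₀ * (B.card.choose 3 : ℝ)) := by linarith
    have h2 : 3 * (ε₀ * (B.card.choose 3:ℝ))
        = ε₀ * (((B.card:ℝ) - 2) * (B.card.choose 2:ℝ)) := by
      rw [← hid3]; ring
    rw [hc]
    linarith
  have h3e : 3*(eIn H B:ℝ) ≤ ε₀ * ((B.card:ℝ) * (B.card.choose 2:ℝ)) := by
    have h1 : 3*(eIn H B:ℝ) ≤ 3*(ε₀*(B.card.choose 3:ℝ)) := by linarith
    have h2 : 3*(ε₀*(B.card.choose 3:ℝ)) = ε₀*(((B.card:ℝ)-2)*(B.card.choose 2:ℝ)) := by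
      rw [← hid3]; ring
    have h4 : ε₀*(((B.card:ℝ)-2)*(B.card.choose 2:ℝ))
        ≤ ε₀*((B.card:ℝ)*(B.card.choose 2:ℝ)) :=
      mul_le_mul_of_nonneg_left
        (mul_le_mul_of_nonneg_right (by linarith) hC2pos.le) hε₀pos.le
    linarith
  have hsumB' : ∑ v ∈ B, (degv H v B : ℝ) ≤ ε₀ * ((B.card:ℝ) * (B.card.choose 2:ℝ)) := by
    have h4 : ε₀*(((B.card:ℝ)-2)*(B.card.choose 2:ℝ))
        ≤ ε₀*((B.card:ℝ)*(B.card.choose 2:ℝ)) :=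
      mul_le_mul_of_nonneg_left
        (mul_le_mul_of_nonneg_right (by linarith) hC2pos.le) hε₀pos.le
    linarith
  -- the four exceptional finsets
  set K1 := B.filter (fun v => ¬((degv H v B : ℝ) ≤ ε₁ * (B.card.choose 2 : ℝ))) with hK1
  set K2 := Bᶜ.filter
    (fun v => ¬((1 - ε₁) * (B.card.choose 2 : ℝ) ≤ (degv H v B : ℝ))) with hK2
  set K3 := B.filter
    (fun v => (1 - ε₁) * (B.card.choose 2 : ℝ) ≤ (degv H v B : ℝ)) with hK3
  set K4 := Bᶜ.filter (fun v => (degv H v B : ℝ) ≤ ε₁ * (B.card.choose 2 : ℝ)) with hK4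
  have hK1sum : (K1.card : ℝ) * (ε₁ * (B.card.choose 2:ℝ)) ≤ ∑ v ∈ B, (degv H v B : ℝ) := by
    have h1 : ∀ v ∈ K1, ε₁ * (B.card.choose 2:ℝ) ≤ (degv H v B : ℝ) := by
      intro v hv
      rw [hK1, mem_filter] at hv
      linarith [not_le.1 hv.2]
    have h2 := Finset.card_nsmul_le_sum K1 (fun v => (degv H v B : ℝ)) _ h1
    rw [nsmul_eq_mul] at h2
    refine le_trans h2 (Finset.sum_le_sum_of_subset_of_nonneg
      (hK1 ▸ Finset.filter_subset _ _) ?_)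
    intro v _ _
    positivity
  have bound1 : (K1.card : ℝ) ≤ ε₁/64 * B.card := by
    have step1 : (K1.card:ℝ) * ε₁ * (B.card.choose 2:ℝ)
        ≤ ε₀ * (B.card:ℝ) * (B.card.choose 2:ℝ) := by
      have e1 : (K1.card:ℝ) * ε₁ * (B.card.choose 2:ℝ)
          = (K1.card:ℝ) * (ε₁ * (B.card.choose 2:ℝ)) := by ring
      have e2 : ε₀ * ((B.card:ℝ) * (B.card.choose 2:ℝ))
          = ε₀ * (B.card:ℝ) * (B.card.choose 2:ℝ) := by ring
      linarith [hK1sum, hsumB']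
    have step2 : (K1.card:ℝ) * ε₁ ≤ ε₀ * (B.card:ℝ) := le_of_mul_le_mul_right step1 hC2pos
    rw [hε₁def] at step2 ⊢
    rw [← hs2] at step2
    nlinarith [hspos, step2, (show (0:ℝ) ≤ (B.card:ℝ) from Nat.cast_nonneg _), (show (0:ℝ) ≤ (K1.card:ℝ) from Nat.cast_nonneg _)]
  have bound3 : (K3.card : ℝ) ≤ ε₁/64 * B.card := by
    have hhalf : (1:ℝ)/2 ≤ 1 - ε₁ := by linarith
    have hK3sum : (K3.card : ℝ) * ((1-ε₁) * (B.card.choose 2:ℝ))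
        ≤ ∑ v ∈ B, (degv H v B : ℝ) := by
      have h1 : ∀ v ∈ K3, (1-ε₁) * (B.card.choose 2:ℝ) ≤ (degv H v B : ℝ) := by
        intro v hv
        rw [hK3, mem_filter] at hv
        exact hv.2
      have h2 := Finset.card_nsmul_le_sum K3 (fun v => (degv H v B : ℝ)) _ h1
      rw [nsmul_eq_mul] at h2
      refine le_trans h2 (Finset.sum_le_sum_of_subset_of_nonneg
        (hK3 ▸ Finset.filter_subset _ _) ?_)
      intro v _ _
      positivity
    have step1 : (K3.card:ℝ) * (1/2) * (B.card.choose 2:ℝ)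
        ≤ ε₀ * (B.card:ℝ) * (B.card.choose 2:ℝ) := by
      have hk0 : (0:ℝ) ≤ (K3.card:ℝ) := Nat.cast_nonneg _
      have hmid : (K3.card:ℝ) * ((1/2) * (B.card.choose 2:ℝ))
          ≤ (K3.card:ℝ) * ((1-ε₁) * (B.card.choose 2:ℝ)) :=
        mul_le_mul_of_nonneg_left
          (mul_le_mul_of_nonneg_right hhalf hC2pos.le) hk0
      have e1 : (K3.card:ℝ) * (1/2) * (B.card.choose 2:ℝ)
          = (K3.card:ℝ) * ((1/2) * (B.card.choose 2:ℝ)) := by ring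
      have e2 : ε₀ * ((B.card:ℝ) * (B.card.choose 2:ℝ))
          = ε₀ * (B.card:ℝ) * (B.card.choose 2:ℝ) := by ring
      linarith [hK3sum, hsumB']
    have step2 : (K3.card:ℝ) * (1/2) ≤ ε₀ * (B.card:ℝ) := le_of_mul_le_mul_right step1 hC2pos
    rw [hε₁def]
    rw [← hs2] at step2
    have hb0 : (0:ℝ) ≤ (B.card:ℝ) := Nat.cast_nonneg _
    nlinarith [step2, hspos, hsle, hb0,
      mul_nonneg (show (0:ℝ) ≤ 1/16 - s by linarith) (mul_nonneg hspos.le hb0)]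
  -- K2 via the double count
  have hmiss : ∀ v ∈ Bᶜ,
      ((P3.filter (fun t => v ∈ t ∧ (t ∉ H ∧ t.erase v ⊆ B))).card : ℝ)
        = (B.card.choose 2:ℝ) - (degv H v B:ℝ) := by
    intro v hv
    have h := F3 v (Finset.mem_compl.1 hv)
    have h' : ((degv H v B : ℕ):ℝ)
        + ((P3.filter (fun t => v ∈ t ∧ (t ∉ H ∧ t.erase v ⊆ B))).card : ℝ)
        = ((B.card.choose 2 : ℕ):ℝ) := by exact_mod_cast Nat.cast_inj.2 h
    linarith
  have hScard : (S.card : ℝ) = ∑ v ∈ Bᶜ, ((B.card.choose 2:ℝ) - (degv H v B:ℝ)) := by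
    rw [← F2a, Nat.cast_sum]
    exact Finset.sum_congr rfl hmiss
  have hK2sum : (K2.card : ℝ) * (ε₁ * (B.card.choose 2:ℝ)) ≤ (S.card : ℝ) := by
    rw [hScard]
    have h1 : ∀ v ∈ K2, ε₁ * (B.card.choose 2:ℝ)
        ≤ (B.card.choose 2:ℝ) - (degv H v B:ℝ) := by
      intro v hv
      rw [hK2, mem_filter] at hv
      have h2 := not_le.1 hv.2
      have hx : (1-ε₁)*(B.card.choose 2:ℝ)
          = (B.card.choose 2:ℝ) - ε₁*(B.card.choose 2:ℝ) := by ring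
      linarith
    have h2 := Finset.card_nsmul_le_sum K2
      (fun v => (B.card.choose 2:ℝ) - (degv H v B:ℝ)) _ h1
    rw [nsmul_eq_mul] at h2
    refine le_trans h2 (Finset.sum_le_sum_of_subset_of_nonneg
      (hK2 ▸ Finset.filter_subset _ _) ?_)
    intro v hv _
    rw [← hmiss v hv]
    positivity
  have hS2 : 2*(S.card:ℝ) ≤ (B.card:ℝ)*((B.card:ℝ)-1) + 3*(eIn H B:ℝ) := by
    have h' : ((2 * S.card : ℕ):ℝ) ≤ ((B.card * (B.card - 1) + 3 * eIn H B : ℕ):ℝ) := by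
      exact_mod_cast F4sum
    push_cast [Nat.cast_sub (show 1 ≤ B.card by omega)] at h'
    linarith
  have bound2 : (K2.card : ℝ) ≤ ε₁/64 * B.card := by
    have hbb : (B.card:ℝ)*((B.card:ℝ)-1) = 2*(B.card.choose 2:ℝ) := by
      linarith [hid2]
    have h2C2 : 2*(B.card.choose 2:ℝ) ≤ ε₀ * ((B.card:ℝ) * (B.card.choose 2:ℝ)) := by
      have h1 := mul_le_mul_of_nonneg_right hbbig hC2pos.le
      have e1 : (ε₀*(B.card:ℝ)) * (B.card.choose 2:ℝ)
          = ε₀ * ((B.card:ℝ) * (B.card.choose 2:ℝ)) := by ring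
      linarith
    have step1 : (K2.card:ℝ) * ε₁ * (B.card.choose 2:ℝ)
        ≤ ε₀ * (B.card:ℝ) * (B.card.choose 2:ℝ) := by
      have e1 : (K2.card:ℝ) * ε₁ * (B.card.choose 2:ℝ)
          = (K2.card:ℝ) * (ε₁ * (B.card.choose 2:ℝ)) := by ring
      have e2 : ε₀ * ((B.card:ℝ) * (B.card.choose 2:ℝ))
          = ε₀ * (B.card:ℝ) * (B.card.choose 2:ℝ) := by ring
      linarith [hK2sum, hS2, hbb, h3e, h2C2]
    have step2 : (K2.card:ℝ) * ε₁ ≤ ε₀ * (B.card:ℝ) := le_of_mul_le_mul_right step1 hC2pos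
    rw [hε₁def] at step2 ⊢
    rw [← hs2] at step2
    nlinarith [hspos, step2, (show (0:ℝ) ≤ (B.card:ℝ) from Nat.cast_nonneg _), (show (0:ℝ) ≤ (K2.card:ℝ) from Nat.cast_nonneg _)]
  have bound4 : (K4.card : ℝ) ≤ ε₁/64 * B.card := by
    refine le_trans ?_ bound2
    have hlt : ε₁*(B.card.choose 2:ℝ) < (1-ε₁)*(B.card.choose 2:ℝ) := by
      have h1 : (0:ℝ) < 1 - 2*ε₁ := by linarith
      nlinarith [mul_pos h1 hC2pos]
    have hsub : K4 ⊆ K2 := by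
      intro v hv
      rw [hK4, mem_filter] at hv
      rw [hK2, mem_filter]
      refine ⟨hv.1, ?_⟩
      push_neg
      linarith [hv.2]
    exact_mod_cast Nat.cast_le.2 (Finset.card_le_card hsub)
  -- definitional facts about the let-bound sets
  have hA : A = {v : Fin n | v ∉ B} := rfl
  have hA' : A' = {v : Fin n | (1 - ε₁) * (B.card.choose 2 : ℝ) ≤ (degv H v B : ℝ)} := rfl
  have hB' : B' = {v : Fin n | (degv H v B : ℝ) ≤ ε₁ * (B.card.choose 2 : ℝ)} := rfl
  have hV₀ : V₀ = Set.univ \ (A' ∪ B') := rfl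
  have hsetAA' : A \ A' = ↑K2 := by
    rw [hA, hA', hK2]
    ext v
    simp only [Set.mem_diff, Set.mem_setOf_eq, Finset.mem_coe, Finset.mem_filter,
      Finset.mem_compl]
  have hsetBB' : (↑B : Set (Fin n)) \ B' = ↑K1 := by
    rw [hB', hK1]
    ext v
    simp only [Set.mem_diff, Set.mem_setOf_eq, Finset.mem_coe, Finset.mem_filter]
  have hsetA'A : A' \ A = ↑K3 := by
    rw [hA, hA', hK3]
    ext v
    simp only [Set.mem_diff, Set.mem_setOf_eq, Finset.mem_coe, Finset.mem_filter, not_not]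
    tauto
  have hsetB'B : B' \ (↑B : Set (Fin n)) = ↑K4 := by
    rw [hB', hK4]
    ext v
    simp only [Set.mem_diff, Set.mem_setOf_eq, Finset.mem_coe, Finset.mem_filter,
      Finset.mem_compl]
    tauto
  refine ⟨?_, ?_, ?_, ?_, ?_⟩
  · rw [hsetAA', Set.ncard_coe_finset]
    exact bound2
  · rw [hsetBB', Set.ncard_coe_finset]
    exact bound1
  · rw [hsetA'A, Set.ncard_coe_finset]
    exact bound3
  · rw [hsetB'B, Set.ncard_coe_finset]
    exact bound4
  · set K0 := Finset.univ.filter (fun v : Fin n =>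
      ¬((1-ε₁)*(B.card.choose 2:ℝ) ≤ (degv H v B:ℝ))
        ∧ ¬((degv H v B:ℝ) ≤ ε₁*(B.card.choose 2:ℝ))) with hK0
    have hsetV : V₀ = ↑K0 := by
      rw [hV₀, hA', hB', hK0]
      ext v
      simp only [Set.mem_diff, Set.mem_univ, true_and, Set.mem_union, Set.mem_setOf_eq,
        Finset.mem_coe, Finset.mem_filter, Finset.mem_univ, not_or]
    rw [hsetV, Set.ncard_coe_finset]
    have hsub : K0 ⊆ K2 ∪ K1 := by
      intro v hv
      rw [hK0, mem_filter] at hv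
      rw [Finset.mem_union, hK1, hK2, mem_filter, mem_filter, Finset.mem_compl]
      by_cases hvB : v ∈ B
      · exact Or.inr ⟨hvB, hv.2.2⟩
      · exact Or.inl ⟨hvB, hv.2.1⟩
    have h1 : (K0.card : ℝ) ≤ (K2.card : ℝ) + (K1.card : ℝ) := by
      have := le_trans (Finset.card_le_card hsub) (Finset.card_union_le K2 K1)
      exact_mod_cast this
    linarith [bound1, bound2]
end
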